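/- arXiv:2407.03912 — 4 statements merged into one kernel-verified Lean document; each statement's English description precedes it below -/
import Mathlib

section
/- Let S be a finite point set in general position, s a point on the boundary of conv(S), and let P_sin(S,s) denote the set of suffix-independent plane spanning paths on S with start s. Then the flip graph induced by P_sin(S,s) is connected: any two suffix-independent paths starting at s can be transformed into each other by a sequence of flips such that every intermediate path is a suffix-independent plane spanning path starting at s. -/
open scoped Classical

abbrev Pt := ℝ × ℝ

/-- No three distinct points of `S` are collinear. -/
def GenPos (S : Finset Pt) : Prop :=
  ∀ p ∈ S, ∀ q ∈ S, ∀ r ∈ S, p ≠ q → q ≠ r → p ≠ r →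
    ¬ Collinear ℝ ({p, q, r} : Set Pt)

/-- The (directed) edges of a path given as a list of points. -/
def edgesOf (l : List Pt) : List (Pt × Pt) := l.zip l.tail

/-- `l` is a plane (non-crossing) spanning path of the point set `S`. -/
def PlanePath (S : Finset Pt) (l : List Pt) : Prop :=
  l.Nodup ∧ l.toFinset = S ∧
  ∀ e ∈ edgesOf l, ∀ f ∈ edgesOf l, e ≠ f →
    segment ℝ e.1 e.2 ∩ segment ℝ f.1 f.2 ⊆ ({e.1, e.2} ∩ {f.1, f.2} : Set Pt)

/-- The set of undirected edges of a path. -/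
def edgeSet (l : List Pt) : Set (Sym2 Pt) :=
  {e | ∃ p ∈ edgesOf l, e = Sym2.mk p.1 p.2}

/-- A flip: remove one edge, add one new edge. -/
def Flip (l l' : List Pt) : Prop :=
  ∃ e f : Sym2 Pt, e ∈ edgeSet l ∧ f ∉ edgeSet l ∧
    edgeSet l' = insert f (edgeSet l \ {e})

/-- A plane spanning path of `S` starting at `s`. -/
def PathIn (S : Finset Pt) (s : Pt) (l : List Pt) : Prop :=
  PlanePath S l ∧ l.head? = some s

/-- `p` is an outer point of `S` (on the boundary of the convex hull). -/
def outerPt (S : Finset Pt) (p : Pt) : Prop :=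
  p ∈ S ∧ p ∈ frontier (convexHull ℝ (S : Set Pt))

/-- Points remaining after peeling `n` convex layers. -/
noncomputable def peelRes (S : Finset Pt) : ℕ → Finset Pt
  | 0 => S
  | n + 1 => (peelRes S n).filter (fun p => ¬ outerPt (peelRes S n) p)

/-- The `i`-th convex layer. -/
noncomputable def layer (S : Finset Pt) (i : ℕ) : Finset Pt :=
  (peelRes S i).filter (fun p => outerPt (peelRes S i) p)

/-- The index of the convex layer containing `p`. -/
noncomputable def layerIdx (S : Finset Pt) (p : Pt) : ℕ := sInf {i | p ∈ layer S i}

/-- A directed path is suffix-independent if no point of a proper prefix lies in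
the convex hull of the corresponding suffix. -/
def SuffixIndep (l : List Pt) : Prop :=
  ∀ i < l.length, ∀ p ∈ l.take i,
    p ∉ convexHull ℝ (((l.drop i).toFinset : Finset Pt) : Set Pt)

/-- `u` and `v` are adjacent on the convex hull boundary of `S` (a level edge of `L₀`). -/
def LevelEdge (S : Finset Pt) (u v : Pt) : Prop :=
  u ∈ layer S 0 ∧ v ∈ layer S 0 ∧ u ≠ v ∧
    segment ℝ u v ⊆ frontier (convexHull ℝ (S : Set Pt))

/-- A path is chord-free if every edge between two hull points is a level edge. -/
def ChordFree (S : Finset Pt) (l : List Pt) : Prop :=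
  ∀ e ∈ edgesOf l, e.1 ∈ layer S 0 → e.2 ∈ layer S 0 → LevelEdge S e.1 e.2

/-- The number of `L₀`-level edges of the path `l`. -/
noncomputable def levelCount (S : Finset Pt) (l : List Pt) : ℕ :=
  Nat.card {e : Pt × Pt | e ∈ edgesOf l ∧ LevelEdge S e.1 e.2}

/-- The number of convex-hull edges of the path `l`. -/
noncomputable def hullEdgeCount (S : Finset Pt) (l : List Pt) : ℕ :=
  Nat.card {e : Pt × Pt | e ∈ edgesOf l ∧
    segment ℝ e.1 e.2 ⊆ frontier (convexHull ℝ (S : Set Pt))}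

/-- `a` sees `b` with respect to the path `l`: the segment `ab` meets edges of `l`
only in common endpoints. -/
def Sees (l : List Pt) (a b : Pt) : Prop :=
  ∀ e ∈ edgesOf l,
    segment ℝ a b ∩ segment ℝ e.1 e.2 ⊆ ({a, b} ∩ {e.1, e.2} : Set Pt)

/-- `S` is in convex position. -/
def ConvexPos (S : Finset Pt) : Prop :=
  ∀ p ∈ S, p ∉ convexHull ℝ ((S.erase p : Finset Pt) : Set Pt)

/-- A spiral from `s`: a plane spanning path starting at `s` all of whose edges lie
on the boundary of the convex hull. -/
def IsSpiral (S : Finset Pt) (s : Pt) (l : List Pt) : Prop :=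
  PathIn S s l ∧ ∀ e ∈ edgesOf l,
    segment ℝ e.1 e.2 ⊆ frontier (convexHull ℝ (S : Set Pt))

/-- Chains of flips of length `n` within the plane spanning paths of `S` starting at `s`. -/
inductive FlipChain (S : Finset Pt) (s : Pt) : List Pt → List Pt → ℕ → Prop
  | refl (l : List Pt) (h : PathIn S s l) : FlipChain S s l l 0
  | step {l m r : List Pt} {n : ℕ} (h : FlipChain S s l m n) (hr : PathIn S s r)
      (hf : Flip m r) : FlipChain S s l r (n + 1)

/-- The signed area / orientation determinant of three points. -/
def odet (a b c : Pt) : ℝ :=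
  (b.1 - a.1) * (c.2 - a.2) - (b.2 - a.2) * (c.1 - a.1)

namespace SX

/-! ### Basic algebra of `odet` -/

lemma odet_swap (o x y : Pt) : odet o x y = - odet o y x := by unfold odet; ring

lemma odet_self (a b : Pt) : odet a b b = 0 := by unfold odet; ring

lemma odet_self' (a b : Pt) : odet a b a = 0 := by unfold odet; ring

lemma odet_combo (a b : Pt) {s t : ℝ} (hst : s + t = 1) (x y : Pt) :
    odet a b (s • x + t • y) = s * odet a b x + t * odet a b y := by
  have h : s = 1 - t := by linarith
  subst h
  simp only [odet, Prod.fst_add, Prod.snd_add, Prod.smul_fst, Prod.smul_snd, smul_eq_mul]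
  ring

lemma odet_combo1 (b c : Pt) {s t : ℝ} (hst : s + t = 1) (x y : Pt) :
    odet (s • x + t • y) b c = s * odet x b c + t * odet y b c := by
  have h : s = 1 - t := by linarith
  subst h
  simp only [odet, Prod.fst_add, Prod.snd_add, Prod.smul_fst, Prod.smul_snd, smul_eq_mul]
  ring

lemma combo_pos {a b u v : ℝ} (ha : 0 ≤ a) (hb : 0 ≤ b) (hab : a + b = 1)
    (hu : 0 < u) (hv : 0 < v) : 0 < a * u + b * v := by
  rcases eq_or_lt_of_le ha with h | h
  · have hb1 : b = 1 := by linarith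
    rw [← h, hb1]; simpa using hv
  · nlinarith [mul_nonneg hb hv.le, mul_pos h hu]

lemma combo_nonneg {a b u v : ℝ} (ha : 0 ≤ a) (hb : 0 ≤ b)
    (hu : 0 ≤ u) (hv : 0 ≤ v) : 0 ≤ a * u + b * v := by positivity

/-- affine functions `Pt → ℝ` (characterized by affine-combination property). -/
def Aff (g : Pt → ℝ) : Prop :=
  ∀ (s t : ℝ), s + t = 1 → ∀ x y : Pt, g (s • x + t • y) = s * g x + t * g y

lemma aff_odet (a b : Pt) : Aff (fun z => odet a b z) := fun s t h x y => odet_combo a b h x y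

lemma aff_neg {g : Pt → ℝ} (hg : Aff g) : Aff (fun z => - g z) := by
  intro s t h x y
  simp only [hg s t h x y]; ring

lemma aff_clm_sub (f : Pt →L[ℝ] ℝ) (c : ℝ) : Aff (fun z => c - f z) := by
  intro s t h x y
  simp only [map_add, map_smul, smul_eq_mul]
  linear_combination (-c) * h

/-! ### Convex hull vs affine functionals -/

lemma hull_pos {g : Pt → ℝ} (hg : Aff g) {F : Set Pt} (h : ∀ p ∈ F, 0 < g p) :
    ∀ x ∈ convexHull ℝ F, 0 < g x := by
  intro x hx
  have hconv : Convex ℝ {z : Pt | 0 < g z} := by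
    intro u hu v hv a b ha hb hab
    have h2 := hg a b hab u v
    simp only [Set.mem_setOf_eq] at hu hv ⊢
    rw [h2]
    exact combo_pos ha hb hab hu hv
  exact convexHull_min h hconv hx

lemma hull_nonneg {g : Pt → ℝ} (hg : Aff g) {F : Set Pt} (h : ∀ p ∈ F, 0 ≤ g p) :
    ∀ x ∈ convexHull ℝ F, 0 ≤ g x := by
  intro x hx
  have hconv : Convex ℝ {z : Pt | 0 ≤ g z} := by
    intro u hu v hv a b ha hb hab
    have h2 := hg a b hab u v
    simp only [Set.mem_setOf_eq] at hu hv ⊢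
    rw [h2]
    exact combo_nonneg ha hb hu hv
  exact convexHull_min h hconv hx

/-- If `g` vanishes at `q` and is strictly positive on `F \ {q}`, then the only
point of the hull of `F` where `g` vanishes is `q`. -/
lemma hull_eq_unique {g : Pt → ℝ} (hg : Aff g) {F : Set Pt} {q : Pt}
    (hq : g q = 0) (hpos : ∀ p ∈ F, p ≠ q → 0 < g p) :
    ∀ x ∈ convexHull ℝ F, g x = 0 → x = q := by
  intro x hx hx0
  by_cases hqF : q ∈ F
  · by_cases hF' : (F \ {q}).Nonempty
    · have hF : F = insert q (F \ {q}) := by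
        rw [Set.insert_diff_singleton, Set.insert_eq_self.2 hqF]
      rw [hF, convexHull_insert hF', mem_convexJoin] at hx
      obtain ⟨u, hu, v, hv, hxseg⟩ := hx
      rw [Set.mem_singleton_iff] at hu; subst hu
      obtain ⟨a, b, ha, hb, hab, rfl⟩ := hxseg
      have hgv : 0 < g v :=
        hull_pos hg (fun p hp => hpos p hp.1 hp.2) v hv
      have hcomb := hg a b hab u v
      rw [hcomb, hq, mul_zero, zero_add] at hx0
      have hb0 : b = 0 := by
        rcases mul_eq_zero.1 hx0 with h | h
        · exact h
        · exact absurd h (ne_of_gt hgv)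
      have ha1 : a = 1 := by linarith
      subst hb0; subst ha1
      simp
    · have hsub : F ⊆ {q} := by
        intro p hp
        by_contra hpq
        exact hF' ⟨p, hp, hpq⟩
      have := convexHull_min hsub (convex_singleton q) hx
      exact this
  · have := hull_pos hg (fun p hp => hpos p hp (fun h => hqF (h ▸ hp))) x hx
    linarith

lemma odet_eq_zero_of_mem_segment {x y z : Pt} (h : z ∈ segment ℝ x y) : odet x y z = 0 := by
  obtain ⟨a, b, ha, hb, hab, rfl⟩ := h
  rw [odet_combo x y hab x y, odet_self', odet_self]; ring

lemma det_smul {v w : Pt} (h : v.1 * w.2 - v.2 * w.1 = 0) (hv : v ≠ 0) :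
    ∃ μ : ℝ, w = μ • v := by
  by_cases h1 : v.1 = 0
  · have h2 : v.2 ≠ 0 := by
      intro h2; exact hv (Prod.ext h1 h2)
    refine ⟨w.2 / v.2, ?_⟩
    have hw1 : w.1 = 0 := by
      have : v.2 * w.1 = 0 := by rw [h1] at h; linarith
      rcases mul_eq_zero.1 this with h' | h'
      · exact absurd h' h2
      · exact h'
    apply Prod.ext
    · show w.1 = (w.2 / v.2) • v.1
      rw [smul_eq_mul, h1, hw1]; ring
    · show w.2 = (w.2 / v.2) • v.2
      rw [smul_eq_mul]
      field_simp
  · refine ⟨w.1 / v.1, ?_⟩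
    apply Prod.ext
    · show w.1 = (w.1 / v.1) • v.1
      rw [smul_eq_mul]
      field_simp
    · show w.2 = (w.1 / v.1) • v.2
      rw [smul_eq_mul]
      field_simp
      linarith

lemma collinear_of_odet {a b c : Pt} (h : odet a b c = 0) :
    Collinear ℝ ({a, b, c} : Set Pt) := by
  by_cases hab : b = a
  · subst hab
    have : ({b, b, c} : Set Pt) = {b, c} := by
      rw [Set.insert_idem]
    rw [this]
    exact collinear_pair ℝ b c
  · have hv : b - a ≠ (0 : Pt) := sub_ne_zero.2 hab
    have hdet : (b - a).1 * (c - a).2 - (b - a).2 * (c - a).1 = 0 := by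
      have : odet a b c = (b - a).1 * (c - a).2 - (b - a).2 * (c - a).1 := by
        unfold odet; simp [Prod.fst_sub, Prod.snd_sub]
      linarith [this ▸ h]
    obtain ⟨μ, hμ⟩ := det_smul hdet hv
    rw [collinear_iff_of_mem (Set.mem_insert a ({b, c} : Set Pt))]
    refine ⟨b - a, ?_⟩
    rintro p (rfl | rfl | rfl)
    · exact ⟨0, by simp⟩
    · exact ⟨1, by simp⟩
    · refine ⟨μ, ?_⟩
      have : p - a = μ • (b - a) := hμ
      have h2 : p = μ • (b - a) + a := by
        rw [← this]; abel
      simpa using h2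

lemma genpos_odet {S : Finset Pt} (hS : GenPos S) {a b c : Pt} (ha : a ∈ S) (hb : b ∈ S)
    (hc : c ∈ S) (hab : a ≠ b) (hbc : b ≠ c) (hac : a ≠ c) : odet a b c ≠ 0 :=
  fun h => hS a ha b hb c hc hab hbc hac (collinear_of_odet h)

/-! ### linear functionals on `Pt`, coordinates -/

def Edot (e o x : Pt) : ℝ := e.1 * (x.1 - o.1) + e.2 * (x.2 - o.2)

lemma odet_E_identity (o e p p' p'' : Pt) :
    odet o p p'' * Edot e o p' =
      odet o p p' * Edot e o p'' + odet o p' p'' * Edot e o p := by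
  unfold odet Edot; ring

lemma clm_eval (f : Pt →L[ℝ] ℝ) (z : Pt) :
    f z = z.1 * f (1, 0) + z.2 * f (0, 1) := by
  have hz : z = z.1 • ((1 : ℝ), (0 : ℝ)) + z.2 • ((0 : ℝ), (1 : ℝ)) := by
    apply Prod.ext <;> simp
  conv_lhs => rw [hz]
  rw [map_add, map_smul, map_smul]
  simp [smul_eq_mul]

lemma ker_det (f : Pt →L[ℝ] ℝ) {v w z₀ : Pt} (hv : f v = 0) (hw : f w = 0)
    (hz : f z₀ ≠ 0) : v.1 * w.2 - v.2 * w.1 = 0 := by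
  have hv' : v.1 * f (1,0) + v.2 * f (0,1) = 0 := by rw [← clm_eval]; exact hv
  have hw' : w.1 * f (1,0) + w.2 * f (0,1) = 0 := by rw [← clm_eval]; exact hw
  have hαβ : f (1,0) ≠ 0 ∨ f (0,1) ≠ 0 := by
    by_contra hcon
    push_neg at hcon
    apply hz
    rw [clm_eval, hcon.1, hcon.2]; ring
  rcases hαβ with h | h
  · have hmul : (v.1 * w.2 - v.2 * w.1) * f (1,0) = 0 := by
      linear_combination w.2 * hv' - v.2 * hw'
    exact (mul_eq_zero.1 hmul).resolve_right h
  · have hmul : (v.1 * w.2 - v.2 * w.1) * f (0,1) = 0 := by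
      linear_combination v.1 * hw' - w.1 * hv'
    exact (mul_eq_zero.1 hmul).resolve_right h

/-! ### separation -/

lemma exists_tangent (F : Finset Pt) (q : Pt)
    (hq : q ∉ convexHull ℝ (↑(F.erase q) : Set Pt)) :
    ∃ f : Pt →L[ℝ] ℝ, ∀ p ∈ F, p ≠ q → f p < f q := by
  have hcl : IsClosed (convexHull ℝ (↑(F.erase q) : Set Pt)) :=
    ((F.erase q).finite_toSet.isCompact_convexHull ℝ).isClosed
  obtain ⟨f, u, hfu, huq⟩ :=
    geometric_hahn_banach_closed_point (convex_convexHull ℝ _) hcl hq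
  refine ⟨f, fun p hp hpq => ?_⟩
  exact lt_trans (hfu p (subset_convexHull ℝ _ (Finset.mem_coe.2 (Finset.mem_erase.2 ⟨hpq, hp⟩)))) huq

lemma exists_halfplane (F : Finset Pt) (o : Pt) (ho : o ∉ convexHull ℝ (↑F : Set Pt)) :
    ∃ e : Pt, ∀ p ∈ F, 0 < Edot e o p := by
  have hcl : IsClosed (convexHull ℝ (↑F : Set Pt)) :=
    (F.finite_toSet.isCompact_convexHull ℝ).isClosed
  obtain ⟨f, u, hfu, huo⟩ :=
    geometric_hahn_banach_closed_point (convex_convexHull ℝ _) hcl ho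
  refine ⟨(-(f (1,0)), -(f (0,1))), fun p hp => ?_⟩
  have hp' : f p < u := hfu p (subset_convexHull ℝ _ hp)
  have h1 := clm_eval f p
  have h2 := clm_eval f o
  unfold Edot
  simp only []
  nlinarith [h1, h2]

/-- On a tangent line through an extreme point, the orientation of all other points
is governed by the tangent functional. -/
lemma tangent_sign (f : Pt →L[ℝ] ℝ) (o q : Pt) (hoq : o ≠ q) (hfo : f o = f q)
    (hne : ∃ z : Pt, f z ≠ f q) :
    ∃ μ : ℝ, μ ≠ 0 ∧ ∀ z : Pt, odet o q z = μ * (f q - f z) := by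
  set α := f (1, 0) with hα
  set β := f (0, 1) with hβ
  have hv : (q - o).1 * α + (q - o).2 * β = 0 := by
    have := clm_eval f (q - o)
    rw [map_sub] at this
    rw [← hα, ← hβ] at this
    linarith [this, hfo]
  have hw0 : ((-β, α) : Pt) ≠ 0 := by
    intro hc
    rw [Prod.ext_iff] at hc
    have hβ0 : β = 0 := by
      have h := hc.1
      simp only [Prod.fst_zero] at h
      linarith [neg_eq_zero.mp h]
    have hα0 : α = 0 := by
      have h := hc.2
      simpa using h
    obtain ⟨z, hz⟩ := hne
    apply hz
    rw [clm_eval f z, clm_eval f q, ← hα, ← hβ, hα0, hβ0]; ring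
  have hvne : q - o ≠ (0 : Pt) := sub_ne_zero.2 (Ne.symm hoq)
  have hdet : ((-β, α) : Pt).1 * (q - o).2 - ((-β, α) : Pt).2 * (q - o).1 = 0 := by
    simp only [Prod.fst_sub, Prod.snd_sub]
    have h1 : (q - o).1 = q.1 - o.1 := rfl
    have h2 : (q - o).2 = q.2 - o.2 := rfl
    rw [h1, h2] at hv
    nlinarith [hv]
  obtain ⟨μ, hμ⟩ := det_smul hdet hw0
  have hμ0 : μ ≠ 0 := by
    rintro rfl
    rw [zero_smul] at hμ
    exact hvne hμ
  refine ⟨μ, hμ0, fun z => ?_⟩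
  have h1 : q.1 - o.1 = μ * (-β) := by
    have := congrArg Prod.fst hμ
    simpa [smul_eq_mul] using this
  have h2 : q.2 - o.2 = μ * α := by
    have := congrArg Prod.snd hμ
    simpa [smul_eq_mul] using this
  have hz1 := clm_eval f z
  have hz2 := clm_eval f q
  have ho1 : o.1 * α + o.2 * β = q.1 * α + q.2 * β := by
    have hco := clm_eval f o
    rw [← hα, ← hβ] at hco hz1 hz2
    linarith [hfo, hco, hz2]
  rw [← hα, ← hβ] at hz1 hz2
  unfold odet
  linear_combination (z.2 - o.2) * h1 - (z.1 - o.1) * h2 + μ * hz1 - μ * hz2 + μ * ho1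

end SX
namespace SX

lemma aff_smul (c : ℝ) {g : Pt → ℝ} (hg : Aff g) : Aff (fun z => c * g z) := by
  intro s t h x y
  simp only [hg s t h x y]; ring

/-! ### existence of sorted lists -/

lemma exists_rmin {α : Type*} [DecidableEq α] (r : α → α → Prop) :
    ∀ (n : ℕ) (T : Finset α), T.card ≤ n →
      (∀ p ∈ T, ∀ p' ∈ T, p ≠ p' → r p p' ∨ r p' p) →
      (∀ p ∈ T, ∀ p' ∈ T, ∀ p'' ∈ T, r p p' → r p' p'' → r p p'') →
      T.Nonempty → ∃ m ∈ T, ∀ x ∈ T, x ≠ m → r m x := by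
  intro n
  induction n with
  | zero =>
    intro T hc _ _ hne
    exfalso; have := Finset.card_pos.2 hne; omega
  | succ n ih =>
    intro T hc htot htrans hne
    obtain ⟨x, hx⟩ := hne
    by_cases hT' : (T.erase x).Nonempty
    · have hcard : (T.erase x).card ≤ n := by
        have := Finset.card_erase_of_mem hx
        have := Finset.card_pos.2 ⟨x, hx⟩
        omega
      obtain ⟨m, hm, hmin⟩ := ih (T.erase x) hcard
        (fun p hp p' hp' => htot p (Finset.mem_of_mem_erase hp) p' (Finset.mem_of_mem_erase hp'))
        (fun p hp p' hp' p'' hp'' => htrans p (Finset.mem_of_mem_erase hp) p'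
          (Finset.mem_of_mem_erase hp') p'' (Finset.mem_of_mem_erase hp''))
        hT'
      have hmT : m ∈ T := Finset.mem_of_mem_erase hm
      have hmx : m ≠ x := Finset.ne_of_mem_erase hm
      rcases htot x hx m hmT (Ne.symm hmx) with hxm | hmx'
      · refine ⟨x, hx, fun y hy hyx => ?_⟩
        by_cases hym : y = m
        · subst hym; exact hxm
        · exact htrans x hx m hmT y hy hxm (hmin y (Finset.mem_erase.2 ⟨hyx, hy⟩) hym)
      · refine ⟨m, hmT, fun y hy hym => ?_⟩
        by_cases hyx : y = x
        · subst hyx; exact hmx'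
        · exact hmin y (Finset.mem_erase.2 ⟨hyx, hy⟩) hym
    · refine ⟨x, hx, fun y hy hyx => ?_⟩
      exact absurd ⟨y, Finset.mem_erase.2 ⟨hyx, hy⟩⟩ hT'

lemma exists_sorted {α : Type*} [DecidableEq α] (r : α → α → Prop) :
    ∀ (n : ℕ) (T : Finset α), T.card ≤ n →
      (∀ p ∈ T, ∀ p' ∈ T, p ≠ p' → r p p' ∨ r p' p) →
      (∀ p ∈ T, ∀ p' ∈ T, ∀ p'' ∈ T, r p p' → r p' p'' → r p p'') →
      ∃ L : List α, L.toFinset = T ∧ L.Pairwise r := by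
  intro n
  induction n with
  | zero =>
    intro T hc _ _
    have : T = ∅ := Finset.card_eq_zero.1 (by omega)
    exact ⟨[], by simp [this], List.Pairwise.nil⟩
  | succ n ih =>
    intro T hc htot htrans
    by_cases hne : T.Nonempty
    · obtain ⟨m, hm, hmin⟩ := exists_rmin r (n + 1) T hc htot htrans hne
      have hcard : (T.erase m).card ≤ n := by
        have := Finset.card_erase_of_mem hm
        have := Finset.card_pos.2 ⟨m, hm⟩
        omega
      obtain ⟨L', hL't, hL'p⟩ := ih (T.erase m) hcard
        (fun p hp p' hp' => htot p (Finset.mem_of_mem_erase hp) p' (Finset.mem_of_mem_erase hp'))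
        (fun p hp p' hp' p'' hp'' => htrans p (Finset.mem_of_mem_erase hp) p'
          (Finset.mem_of_mem_erase hp') p'' (Finset.mem_of_mem_erase hp''))
      refine ⟨m :: L', ?_, ?_⟩
      · simp only [List.toFinset_cons, hL't]
        exact Finset.insert_erase hm
      · refine List.Pairwise.cons (fun y hy => ?_) hL'p
        have hy' : y ∈ T.erase m := by rw [← hL't]; exact List.mem_toFinset.2 hy
        exact hmin y (Finset.mem_of_mem_erase hy') (Finset.ne_of_mem_erase hy')
    · rw [Finset.not_nonempty_iff_eq_empty] at hne
      exact ⟨[], by simp [hne], List.Pairwise.nil⟩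

/-! ### edges of lists -/

lemma edgesOf_cons₂ (a b : Pt) (t : List Pt) :
    edgesOf (a :: b :: t) = (a, b) :: edgesOf (b :: t) := rfl

lemma mem_edgesOf_iff {l : List Pt} {x : Pt × Pt} :
    x ∈ edgesOf l ↔ ∃ i : ℕ, l[i]? = some x.1 ∧ l[i + 1]? = some x.2 := by
  induction l with
  | nil => simp [edgesOf]
  | cons a t ih =>
    cases t with
    | nil =>
      constructor
      · intro h; simp [edgesOf] at h
      · rintro ⟨i, h1, h2⟩
        cases i with
        | zero => simp at h2
        | succ i => simp at h1
    | cons b t' =>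
      rw [edgesOf_cons₂, List.mem_cons, ih]
      constructor
      · rintro (rfl | ⟨i, h1, h2⟩)
        · exact ⟨0, by simp, by simp⟩
        · exact ⟨i + 1, by simpa using h1, by simpa using h2⟩
      · rintro ⟨i, h1, h2⟩
        cases i with
        | zero =>
          left
          simp only [List.getElem?_cons_zero, List.getElem?_cons_succ] at h1 h2
          have : x.1 = a := by simpa using h1.symm
          have h2' : x.2 = b := by simpa using h2.symm
          exact Prod.ext this h2'
        | succ i =>
          right
          exact ⟨i, by simpa using h1, by simpa using h2⟩

lemma mem_of_mem_edgesOf {l : List Pt} {x : Pt × Pt} (h : x ∈ edgesOf l) :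
    x.1 ∈ l ∧ x.2 ∈ l := by
  rw [mem_edgesOf_iff] at h
  obtain ⟨i, h1, h2⟩ := h
  exact ⟨List.mem_of_getElem? h1, List.mem_of_getElem? h2⟩

/-! ### properties of angularly sorted lists -/

lemma sorted_rel {o : Pt} {ε : ℝ} {L : List Pt}
    (hPw : L.Pairwise (fun x y => 0 < ε * odet o x y))
    {k m : ℕ} {u v : Pt} (hkm : k < m) (hk : L[k]? = some u) (hm : L[m]? = some v) :
    0 < ε * odet o u v := by
  rw [List.getElem?_eq_some_iff] at hk hm
  obtain ⟨hk', rfl⟩ := hk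
  obtain ⟨hm', rfl⟩ := hm
  exact List.pairwise_iff_get.1 hPw ⟨k, hk'⟩ ⟨m, hm'⟩ hkm

lemma sweep_plane_aux (o : Pt) (ε : ℝ) (L : List Pt)
    (hPw : L.Pairwise (fun x y => 0 < ε * odet o x y))
    {i j : ℕ} (hij : i < j) {x1 x2 y1 y2 : Pt}
    (hx1 : L[i]? = some x1) (hx2 : L[i + 1]? = some x2)
    (hy1 : L[j]? = some y1) (hy2 : L[j + 1]? = some y2) :
    segment ℝ x1 x2 ∩ segment ℝ y1 y2 ⊆ ({x1, x2} ∩ {y1, y2} : Set Pt) := by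
  have hx1neg : ε * odet o x2 x1 < 0 := by
    have h := sorted_rel hPw (Nat.lt_succ_self i) hx1 hx2
    have hsw : ε * odet o x2 x1 = -(ε * odet o x1 x2) := by rw [odet_swap o x2 x1]; ring
    linarith
  intro z hz
  obtain ⟨hz1, hz2⟩ := hz
  obtain ⟨a, b, ha, hb, hab, hzeq⟩ := hz1
  obtain ⟨c, d, hc, hd, hcd, hzeq'⟩ := hz2
  have hza : ε * odet o x2 z = a * (ε * odet o x2 x1) := by
    rw [← hzeq, odet_combo o x2 hab x1 x2, odet_self]
    ring
  by_cases hji : j = i + 1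
  · subst hji
    have hy1x2 : y1 = x2 := by
      rw [hx2] at hy1
      exact (Option.some.inj hy1).symm
    have hy2pos : 0 < ε * odet o x2 y2 := sorted_rel hPw (Nat.lt_succ_self (i + 1)) hx2 hy2
    have hzc : ε * odet o x2 z = d * (ε * odet o x2 y2) := by
      rw [← hzeq', hy1x2, odet_combo o x2 hcd x2 y2, odet_self]
      ring
    have ha0 : a = 0 := by nlinarith
    have hb1 : b = 1 := by linarith
    have hzx2 : z = x2 := by rw [← hzeq, ha0, hb1]; simp
    constructor
    · rw [hzx2]; right; rfl
    · rw [hzx2, ← hy1x2]; left; rfl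
  · have hij1 : i + 1 < j := by omega
    have hy1pos : 0 < ε * odet o x2 y1 := sorted_rel hPw hij1 hx2 hy1
    have hy2pos : 0 < ε * odet o x2 y2 := sorted_rel hPw (by omega) hx2 hy2
    exfalso
    have hzneg : ε * odet o x2 z ≤ 0 := by nlinarith
    have hzpos : 0 < ε * odet o x2 z := by
      rw [← hzeq', odet_combo o x2 hcd y1 y2]
      have : ε * (c * odet o x2 y1 + d * odet o x2 y2)
          = c * (ε * odet o x2 y1) + d * (ε * odet o x2 y2) := by ring
      rw [this]
      exact combo_pos hc hd hcd hy1pos hy2pos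
    linarith

lemma sweep_plane (o : Pt) (ε : ℝ) (L : List Pt)
    (hPw : L.Pairwise (fun x y => 0 < ε * odet o x y)) :
    ∀ ex ∈ edgesOf L, ∀ fx ∈ edgesOf L, ex ≠ fx →
      segment ℝ ex.1 ex.2 ∩ segment ℝ fx.1 fx.2 ⊆ ({ex.1, ex.2} ∩ {fx.1, fx.2} : Set Pt) := by
  intro ex hex fx hfx hne
  rw [mem_edgesOf_iff] at hex hfx
  obtain ⟨i, hx1, hx2⟩ := hex
  obtain ⟨j, hy1, hy2⟩ := hfx
  rcases lt_trichotomy i j with h | h | h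
  · exact sweep_plane_aux o ε L hPw h hx1 hx2 hy1 hy2
  · exfalso
    subst h
    apply hne
    rw [hy1] at hx1; rw [hy2] at hx2
    exact Prod.ext (Option.some.inj hx1).symm (Option.some.inj hx2).symm
  · intro z hz
    have := sweep_plane_aux o ε L hPw h hy1 hy2 hx1 hx2 ⟨hz.2, hz.1⟩
    exact ⟨this.2, this.1⟩

lemma sweep_suffixIndep (o : Pt) (ε : ℝ) (L : List Pt)
    (hPw : L.Pairwise (fun x y => 0 < ε * odet o x y)) : SuffixIndep L := by
  intro i hi p hp hphull
  have hPw' : (L.take i ++ L.drop i).Pairwise (fun x y => 0 < ε * odet o x y) := by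
    rw [List.take_append_drop]; exact hPw
  rw [List.pairwise_append] at hPw'
  have hcross := hPw'.2.2
  have hpos := hull_pos (g := fun z => ε * odet o p z) (aff_smul ε (aff_odet o p))
    (F := (((L.drop i).toFinset : Finset Pt) : Set Pt))
    (fun y hy => hcross p hp y (List.mem_toFinset.1 hy)) p hphull
  simp only [odet_self] at hpos
  linarith [hpos]

lemma sorted_nodup (o : Pt) (ε : ℝ) (L : List Pt)
    (hPw : L.Pairwise (fun x y => 0 < ε * odet o x y)) : L.Nodup := by
  apply List.Pairwise.imp _ hPw
  intro a b h
  intro hab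
  subst hab
  simp [odet_self] at h

lemma sorted_head (o : Pt) (ε : ℝ) (L : List Pt)
    (hPw : L.Pairwise (fun x y => 0 < ε * odet o x y)) (q : Pt) (hqL : q ∈ L)
    (hq : ∀ x ∈ L, x ≠ q → 0 < ε * odet o q x) : L.head? = some q := by
  cases L with
  | nil => simp at hqL
  | cons c t =>
    by_cases hcq : c = q
    · simp [hcq]
    · exfalso
      have hqt : q ∈ t := by
        rcases List.mem_cons.1 hqL with h | h
        · exact absurd h.symm hcq
        · exact h
      have h1 : 0 < ε * odet o c q := (List.pairwise_cons.1 hPw).1 q hqt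
      have h2 : 0 < ε * odet o q c := hq c (List.mem_cons_self) (fun h => hcq h)
      have hsw : ε * odet o c q = -(ε * odet o q c) := by rw [odet_swap o c q]; ring
      linarith

lemma pairwise_reverse_flip (o : Pt) (ε : ℝ) (L : List Pt)
    (hPw : L.Pairwise (fun x y => 0 < ε * odet o x y)) :
    L.reverse.Pairwise (fun x y => 0 < (-ε) * odet o x y) := by
  rw [List.pairwise_reverse]
  apply List.Pairwise.imp _ hPw
  intro a b h
  have hsw : (-ε) * odet o b a = ε * odet o a b := by rw [odet_swap o b a]; ring
  linarith

lemma sorted_getLast (o : Pt) (ε : ℝ) (L : List Pt)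
    (hPw : L.Pairwise (fun x y => 0 < ε * odet o x y)) (a : Pt) (haL : a ∈ L)
    (ha : ∀ x ∈ L, x ≠ a → 0 < ε * odet o x a) : L.getLast? = some a := by
  rw [← List.head?_reverse]
  apply sorted_head o (-ε) L.reverse (pairwise_reverse_flip o ε L hPw) a (by simpa using haL)
  intro x hx hxa
  have h := ha x (by simpa using hx) hxa
  have hsw : (-ε) * odet o a x = ε * odet o x a := by rw [odet_swap o a x]; ring
  linarith

end SX
namespace SX

/-- Main sweep-path existence lemma. -/
lemma sweep (T : Finset Pt) (o e : Pt)
    (hE : ∀ p ∈ T, 0 < Edot e o p)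
    (hNC : ∀ p ∈ T, ∀ p' ∈ T, p ≠ p' → odet o p p' ≠ 0)
    (q a : Pt) (hqT : q ∈ T) (haT : a ∈ T)
    (hq : ∀ p ∈ T, p ≠ q → 0 < odet o q p)
    (ha : ∀ p ∈ T, p ≠ a → odet o a p < 0) :
    ∃ W : List Pt, W.toFinset = T ∧ W.head? = some q ∧ W.getLast? = some a ∧
      PlanePath T W ∧ SuffixIndep W ∧ PlanePath T W.reverse ∧ SuffixIndep W.reverse := by
  have htrans : ∀ p ∈ T, ∀ p' ∈ T, ∀ p'' ∈ T,
      (0 < odet o p p') → (0 < odet o p' p'') → 0 < odet o p p'' := by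
    intro p hp p' hp' p'' hp'' h1 h2
    have hid := odet_E_identity o e p p' p''
    have e1 := hE p hp
    have e2 := hE p' hp'
    have e3 := hE p'' hp''
    nlinarith
  have htot : ∀ p ∈ T, ∀ p' ∈ T, p ≠ p' → (0 < odet o p p') ∨ (0 < odet o p' p) := by
    intro p hp p' hp' hne
    have h := hNC p hp p' hp' hne
    have hsw := odet_swap o p' p
    rcases lt_or_gt_of_ne h with h' | h'
    · right; linarith
    · left; exact h'
  obtain ⟨W, hWt, hWp⟩ :=
    exists_sorted (fun x y : Pt => 0 < odet o x y) T.card T le_rfl htot htrans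
  have hPw : W.Pairwise (fun x y => 0 < (1 : ℝ) * odet o x y) := by
    apply List.Pairwise.imp _ hWp
    intro a' b' h; linarith
  have hmem : ∀ x ∈ W, x ∈ T := fun x hx => hWt ▸ List.mem_toFinset.2 hx
  have hnd : W.Nodup := sorted_nodup o 1 W hPw
  have hrevPw := pairwise_reverse_flip o 1 W hPw
  refine ⟨W, hWt, ?_, ?_, ⟨hnd, hWt, sweep_plane o 1 W hPw⟩, sweep_suffixIndep o 1 W hPw,
    ⟨List.nodup_reverse.2 hnd, by rw [List.toFinset_reverse]; exact hWt,
      sweep_plane o (-1) W.reverse hrevPw⟩,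
    sweep_suffixIndep o (-1) W.reverse hrevPw⟩
  · apply sorted_head o 1 W hPw q (by rw [← List.mem_toFinset, hWt]; exact hqT)
    intro x hx hxq
    have := hq x (hmem x hx) hxq
    linarith
  · apply sorted_getLast o 1 W hPw a (by rw [← List.mem_toFinset, hWt]; exact haT)
    intro x hx hxa
    have h1 := ha x (hmem x hx) hxa
    have hsw := odet_swap o x a
    nlinarith

end SX
namespace SX

/-! ### decomposition and reconstruction of paths -/

lemma genpos_seg {S : Finset Pt} (hS : GenPos S) {x y q : Pt} (hx : x ∈ S) (hy : y ∈ S)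
    (hq : q ∈ S) (hxy : x ≠ y) (hmem : q ∈ segment ℝ x y) : q = x ∨ q = y := by
  by_contra hcon
  push_neg at hcon
  have h0 : odet x y q = 0 := odet_eq_zero_of_mem_segment hmem
  exact genpos_odet hS hx hy hq hxy (Ne.symm hcon.2) (Ne.symm hcon.1) h0

lemma edgesOf_tail_subset (a : Pt) (l : List Pt) : edgesOf l ⊆ edgesOf (a :: l) := by
  cases l with
  | nil => intro x hx; simp [edgesOf] at hx
  | cons b t => rw [edgesOf_cons₂]; exact List.subset_cons_self _ _

lemma edge_ne {l : List Pt} (hnd : l.Nodup) {x : Pt × Pt} (hx : x ∈ edgesOf l) :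
    x.1 ≠ x.2 := by
  rw [mem_edgesOf_iff] at hx
  obtain ⟨i, h1, h2⟩ := hx
  rw [List.getElem?_eq_some_iff] at h1 h2
  obtain ⟨hi1, he1⟩ := h1
  obtain ⟨hi2, he2⟩ := h2
  intro hcon
  rw [← he1, ← he2] at hcon
  have := (List.Nodup.getElem_inj_iff hnd).1 hcon
  simp at this

lemma suffixIndep_tail {s : Pt} {R : List Pt} (h : SuffixIndep (s :: R)) : SuffixIndep R := by
  intro i hi p hp
  have hp' : p ∈ (s :: R).take (i + 1) := by
    rw [show (s :: R).take (i + 1) = s :: R.take i from rfl]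
    exact List.mem_cons_of_mem s hp
  exact h (i + 1) (by simpa using hi) p hp'

lemma suffixIndep_cons (s : Pt) (R : List Pt)
    (hR : SuffixIndep R)
    (hs : s ∉ convexHull ℝ ((R.toFinset : Finset Pt) : Set Pt)) : SuffixIndep (s :: R) := by
  intro i hi p hp
  cases i with
  | zero => simp at hp
  | succ i' =>
    have htake : (s :: R).take (i' + 1) = s :: R.take i' := rfl
    have hdrop : (s :: R).drop (i' + 1) = R.drop i' := rfl
    rw [htake] at hp
    rw [hdrop]
    rcases List.mem_cons.1 hp with rfl | hp'
    · intro hcon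
      apply hs
      apply convexHull_mono _ hcon
      intro x hx
      rw [Finset.mem_coe, List.mem_toFinset] at hx ⊢
      exact (List.drop_subset i' R) hx
    · exact hR i' (by simpa using hi) p hp'

/-- the start of a suffix-independent spanning path is outside the hull of the rest. -/
lemma start_extreme {s : Pt} {R : List Pt} (h : SuffixIndep (s :: R)) (hR : R ≠ []) :
    s ∉ convexHull ℝ ((R.toFinset : Finset Pt) : Set Pt) := by
  have h1 := h 1 (by simp [List.length_pos_iff.2 hR]) s (by simp)
  simpa using h1

/-- second point of a suffix-independent path is extreme in the tail point set. -/
lemma second_extreme {s q : Pt} {rest : List Pt} (h : SuffixIndep (s :: q :: rest)) :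
    q ∉ convexHull ℝ ((rest.toFinset : Finset Pt) : Set Pt) := by
  cases rest with
  | nil => simp
  | cons c t =>
    have h2 := h 2 (by simp only [List.length_cons]; omega) q (by simp)
    simpa using h2

lemma toFinset_tail_eq {S : Finset Pt} {s : Pt} {R : List Pt}
    (hnd : (s :: R).Nodup) (htf : (s :: R).toFinset = S) :
    R.toFinset = S.erase s ∧ s ∉ R.toFinset ∧ s ∈ S := by
  have hsR : s ∉ R := (List.nodup_cons.1 hnd).1
  have hsR' : s ∉ R.toFinset := fun h => hsR (List.mem_toFinset.1 h)
  have h1 : insert s R.toFinset = S := by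
    rw [← htf]; simp [List.toFinset_cons]
  refine ⟨?_, hsR', ?_⟩
  · rw [← h1, Finset.erase_insert hsR']
  · rw [← h1]; exact Finset.mem_insert_self s _

lemma planePath_tail {S : Finset Pt} {s : Pt} {R : List Pt} (h : PlanePath S (s :: R)) :
    PlanePath (S.erase s) R := by
  obtain ⟨hnd, htf, hpl⟩ := h
  obtain ⟨h1, _, _⟩ := toFinset_tail_eq hnd htf
  exact ⟨(List.nodup_cons.1 hnd).2, h1,
    fun e he f hf hne => hpl e (edgesOf_tail_subset s R he) f (edgesOf_tail_subset s R hf) hne⟩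

lemma planePath_cons {S' : Finset Pt} {s q : Pt} {R : List Pt}
    (hR : PlanePath S' R) (hhead : R.head? = some q) (hs : s ∉ S')
    (htan : segment ℝ s q ∩ convexHull ℝ (↑S' : Set Pt) ⊆ {q})
    (hseg : ∀ x ∈ S', ∀ y ∈ S', x ≠ y → q ∈ segment ℝ x y → q = x ∨ q = y) :
    PlanePath (insert s S') (s :: R) := by
  obtain ⟨hnd, htf, hpl⟩ := hR
  cases R with
  | nil => simp at hhead
  | cons q0 R0 =>
  have hq0 : q = q0 := by
    have := hhead
    simp only [List.head?_cons] at this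
    exact (Option.some.inj this).symm
  subst hq0
  refine ⟨?_, ?_, ?_⟩
  · refine List.nodup_cons.2 ⟨?_, hnd⟩
    intro hsR
    exact hs (htf ▸ List.mem_toFinset.2 hsR)
  · simp [List.toFinset_cons, htf]
  · intro ex hex fx hfx hne
    rw [show edgesOf (s :: q :: R0) = (s, q) :: edgesOf (q :: R0) from rfl] at hex hfx
    have key : ∀ g ∈ edgesOf (q :: R0),
        segment ℝ s q ∩ segment ℝ g.1 g.2 ⊆ (({s, q} : Set Pt) ∩ {g.1, g.2}) := by
      intro g hg z hz
      have hg1 : g.1 ∈ S' := htf ▸ List.mem_toFinset.2 (mem_of_mem_edgesOf hg).1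
      have hg2 : g.2 ∈ S' := htf ▸ List.mem_toFinset.2 (mem_of_mem_edgesOf hg).2
      have hzhull : z ∈ convexHull ℝ (↑S' : Set Pt) :=
        (convex_convexHull ℝ _).segment_subset (subset_convexHull _ _ hg1)
          (subset_convexHull _ _ hg2) hz.2
      have hzq : z = q := htan ⟨hz.1, hzhull⟩
      subst hzq
      have hgne : g.1 ≠ g.2 := edge_ne hnd hg
      rcases hseg g.1 hg1 g.2 hg2 hgne hz.2 with h | h
      · exact ⟨by simp, by simp [h]⟩
      · exact ⟨by simp, by simp [h]⟩
    rcases List.mem_cons.1 hex with rfl | hex'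
    · rcases List.mem_cons.1 hfx with rfl | hfx'
      · exact absurd rfl hne
      · exact key fx hfx'
    · rcases List.mem_cons.1 hfx with rfl | hfx'
      · intro z hz
        have := key ex hex' ⟨hz.2, hz.1⟩
        exact ⟨this.2, this.1⟩
      · exact hpl ex hex' fx hfx' hne

end SX
namespace SX

/-! ### edge sets and flips -/

lemma edgeSet_cons {s q : Pt} {R : List Pt} (hhead : R.head? = some q) :
    edgeSet (s :: R) = insert (Sym2.mk s q) (edgeSet R) := by
  cases R with
  | nil => simp at hhead
  | cons q0 R0 =>
    have hq0 : q = q0 := by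
      simp only [List.head?_cons] at hhead
      exact (Option.some.inj hhead).symm
    subst hq0
    ext x
    simp only [edgeSet, Set.mem_setOf_eq, Set.mem_insert_iff]
    rw [show edgesOf (s :: q :: R0) = (s, q) :: edgesOf (q :: R0) from rfl]
    constructor
    · rintro ⟨p, hp, rfl⟩
      rcases List.mem_cons.1 hp with rfl | hp'
      · left; rfl
      · right; exact ⟨p, hp', rfl⟩
    · rintro (rfl | ⟨p, hp, rfl⟩)
      · exact ⟨(s, q), List.mem_cons_self, rfl⟩
      · exact ⟨p, List.mem_cons_of_mem _ hp, rfl⟩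

lemma not_mem_edgeSet_left {l : List Pt} {s x : Pt} (hs : s ∉ l) :
    Sym2.mk s x ∉ edgeSet l := by
  rintro ⟨p, hp, hpe⟩
  have hmem := mem_of_mem_edgesOf hp
  rcases (Sym2.mk_eq_mk_iff (p := (s, x)) (q := p)).1 hpe with h | h
  · apply hs
    rw [show p = (s, x) from h.symm] at hmem
    exact hmem.1
  · apply hs
    have : p.swap = (s, x) := h.symm
    have h2 : p.2 = s := by
      have := congrArg Prod.fst this
      simpa [Prod.swap] using this
    rw [← h2]
    exact hmem.2

lemma edgesOf_append_single :
    ∀ (X : List Pt) (x a : Pt), X.getLast? = some x →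
      edgesOf (X ++ [a]) = edgesOf X ++ [(x, a)] := by
  intro X
  induction X with
  | nil => intro x a h; simp at h
  | cons y t ih =>
    intro x a h
    cases t with
    | nil =>
      have : x = y := by simpa using h.symm
      subst this
      rfl
    | cons z t' =>
      have hlast : (z :: t').getLast? = some x := by
        rw [← h]; rfl
      have h2 := ih x a hlast
      have hexp : edgesOf (y :: (z :: t' ++ [a])) = (y, z) :: edgesOf (z :: t' ++ [a]) := rfl
      rw [show (y :: z :: t') ++ [a] = y :: (z :: t' ++ [a]) from rfl, hexp, h2]
      rfl

lemma edgeSet_append_single {X : List Pt} {x a : Pt} (h : X.getLast? = some x) :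
    edgeSet (X ++ [a]) = edgeSet X ∪ {Sym2.mk x a} := by
  ext e
  simp only [edgeSet, Set.mem_setOf_eq, Set.mem_union, Set.mem_singleton_iff,
    edgesOf_append_single X x a h, List.mem_append, List.mem_singleton]
  constructor
  · rintro ⟨p, hp | rfl, rfl⟩
    · exact Or.inl ⟨p, hp, rfl⟩
    · exact Or.inr rfl
  · rintro (⟨p, hp, rfl⟩ | rfl)
    · exact ⟨p, Or.inl hp, rfl⟩
    · exact ⟨(x, a), Or.inr rfl, rfl⟩

lemma edgeSet_reverse : ∀ (l : List Pt), edgeSet l.reverse = edgeSet l := by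
  intro l
  induction l with
  | nil => rfl
  | cons a t ih =>
    cases ht : t with
    | nil => rfl
    | cons b t' =>
      rw [← ht]
      have htne : t ≠ [] := by rw [ht]; simp
      obtain ⟨h0, hh0⟩ : ∃ h0, t.head? = some h0 := by
        rw [ht]; exact ⟨b, rfl⟩
      have hrl : t.reverse.getLast? = some h0 := by
        rw [← List.head?_reverse, List.reverse_reverse]; exact hh0
      rw [show (a :: t).reverse = t.reverse ++ [a] from by simp]
      rw [edgeSet_append_single hrl, ih, edgeSet_cons hh0]
      rw [Set.insert_eq, Set.union_comm]
      congr 1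
      ext e
      simp only [Set.mem_singleton_iff]
      constructor
      · rintro rfl; exact Sym2.eq_swap
      · rintro rfl; exact Sym2.eq_swap

lemma flip_cons {R R' : List Pt} {s q : Pt} (h : Flip R R')
    (hh : R.head? = some q) (hh' : R'.head? = some q)
    (hsR : s ∉ R) (hsR' : s ∉ R') :
    Flip (s :: R) (s :: R') := by
  obtain ⟨e, f, he, hf, heq⟩ := h
  have hfR' : f ∈ edgeSet R' := by rw [heq]; exact Set.mem_insert _ _
  have he_endpoints : ∃ p ∈ edgesOf R, e = Sym2.mk p.1 p.2 := he
  refine ⟨e, f, ?_, ?_, ?_⟩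
  · rw [edgeSet_cons hh]; exact Set.mem_insert_of_mem _ he
  · rw [edgeSet_cons hh]
    intro hmem
    rcases Set.mem_insert_iff.1 hmem with h' | h'
    · subst h'
      exact not_mem_edgeSet_left hsR' hfR'
    · exact hf h'
  · have hsq_ne_e : Sym2.mk s q ≠ e := by
      rintro rfl
      exact not_mem_edgeSet_left hsR he
    rw [edgeSet_cons hh, edgeSet_cons hh', heq, Set.insert_comm,
      Set.insert_diff_singleton_comm hsq_ne_e]

lemma flip_reverse {s q a : Pt} {W : List Pt} (hh : W.head? = some q)
    (hl : W.getLast? = some a) (hqa : q ≠ a) (hsW : s ∉ W) (hsq : s ≠ q) (hsa : s ≠ a) :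
    Flip (s :: W) (s :: W.reverse) := by
  have hrevhead : W.reverse.head? = some a := by rw [List.head?_reverse]; exact hl
  refine ⟨Sym2.mk s q, Sym2.mk s a, ?_, ?_, ?_⟩
  · rw [edgeSet_cons hh]; exact Set.mem_insert _ _
  · rw [edgeSet_cons hh]
    intro hmem
    rcases Set.mem_insert_iff.1 hmem with h' | h'
    · rcases (Sym2.mk_eq_mk_iff (p := (s, a)) (q := (s, q))).1 h' with h'' | h''
      · have : a = q := (Prod.ext_iff.1 h'').2
        exact hqa this.symm
      · have : s = q := (Prod.ext_iff.1 h'').1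
        exact hsq this
    · exact not_mem_edgeSet_left hsW h'
  · rw [edgeSet_cons hh, edgeSet_cons hrevhead, edgeSet_reverse]
    have h1 : (insert (Sym2.mk s q) (edgeSet W)) \ {Sym2.mk s q}
        = edgeSet W \ {Sym2.mk s q} := by
      ext x
      simp only [Set.mem_diff, Set.mem_insert_iff, Set.mem_singleton_iff]
      tauto
    rw [h1, Set.diff_singleton_eq_self (not_mem_edgeSet_left hsW)]

end SX
namespace SX
set_option maxHeartbeats 2000000

/-- tangency of the segment from an outside point to an angularly extreme point. -/
lemma tangent_seg {S' : Finset Pt} {s a : Pt} (ha : ∀ p ∈ S', p ≠ a → 0 < odet s a p) :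
    segment ℝ s a ∩ convexHull ℝ (↑S' : Set Pt) ⊆ {a} := by
  intro z hz
  have h0 : odet s a z = 0 := odet_eq_zero_of_mem_segment hz.1
  exact hull_eq_unique (aff_odet s a) (odet_self s a)
    (fun p hp hpa => ha p (Finset.mem_coe.1 hp) hpa) z hz.2 h0

lemma sign_change {h : Pt → ℝ} :
    ∀ (M : List Pt), (∀ x ∈ M, h x ≠ 0) →
      ∀ x1 ∈ M, ∀ x2 ∈ M, 0 < h x1 → h x2 < 0 →
      ∃ p ∈ edgesOf M, h p.1 * h p.2 < 0 := by
  intro M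
  induction M with
  | nil => simp
  | cons c t ih =>
    intro hne x1 hx1 x2 hx2 hpos hneg
    cases t with
    | nil =>
      have h1 : x1 = c := by simpa using hx1
      have h2 : x2 = c := by simpa using hx2
      subst h1; subst h2
      linarith
    | cons d t' =>
      by_cases hcd : h c * h d < 0
      · refine ⟨(c, d), ?_, hcd⟩
        rw [edgesOf_cons₂]
        exact List.mem_cons_self
      · have hc0 : h c ≠ 0 := hne c (List.mem_cons_self)
        have hd0 : h d ≠ 0 := hne d (List.mem_cons_of_mem _ (List.mem_cons_self))
        have hw : ∃ y1 ∈ (d :: t'), 0 < h y1 ∧ ∃ y2 ∈ (d :: t'), h y2 < 0 := by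
          rcases lt_or_gt_of_ne hc0 with hcneg | hcpos
          · have hdneg : h d < 0 := by
              rcases lt_or_gt_of_ne hd0 with h' | h'
              · exact h'
              · exfalso; exact hcd (by nlinarith)
            have hx1t : x1 ∈ d :: t' := by
              rcases List.mem_cons.1 hx1 with rfl | h'
              · linarith
              · exact h'
            exact ⟨x1, hx1t, hpos, d, List.mem_cons_self, hdneg⟩
          · have hdpos : 0 < h d := by
              rcases lt_or_gt_of_ne hd0 with h' | h'
              · exfalso; exact hcd (by nlinarith)
              · exact h'
            have hx2t : x2 ∈ d :: t' := by
              rcases List.mem_cons.1 hx2 with rfl | h'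
              · linarith
              · exact h'
            exact ⟨d, List.mem_cons_self, hdpos, x2, hx2t, hneg⟩
        obtain ⟨y1, hy1, hy1p, y2, hy2, hy2n⟩ := hw
        obtain ⟨p, hp, hpp⟩ :=
          ih (fun x hx => hne x (List.mem_cons_of_mem _ hx)) y1 hy1 y2 hy2 hy1p hy2n
        exact ⟨p, edgesOf_tail_subset c _ hp, hpp⟩

/-- Visibility: planarity forces tangency of the first edge's segment to the hull
of the remaining points. -/
lemma visibility {S : Finset Pt} (hS : GenPos S) {s q : Pt} {rest : List Pt}
    (hP : PlanePath S (s :: q :: rest)) (hSI : SuffixIndep (s :: q :: rest)) :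
    segment ℝ s q ∩ convexHull ℝ (↑(S.erase s) : Set Pt) ⊆ {q} := by
  obtain ⟨hnd, htf, hpl⟩ := hP
  obtain ⟨htf', hsQR, hsS⟩ := toFinset_tail_eq hnd htf
  have hndQR : (q :: rest).Nodup := (List.nodup_cons.1 hnd).2
  obtain ⟨htf'', hqrest', hqS'⟩ := toFinset_tail_eq hndQR htf'
  have hqS : q ∈ S := Finset.mem_of_mem_erase hqS'
  have hsq : s ≠ q := by
    intro h; rw [h] at hsQR; exact hsQR (List.mem_toFinset.2 (List.mem_cons_self))
  have hshull : s ∉ convexHull ℝ ((((q :: rest).toFinset : Finset Pt)) : Set Pt) :=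
    start_extreme hSI (by simp)
  rw [htf'] at hshull
  have hqext : q ∉ convexHull ℝ ((rest.toFinset : Finset Pt) : Set Pt) := second_extreme hSI
  have hrestS' : ∀ x ∈ rest, x ∈ S.erase s ∧ x ≠ q := by
    intro x hx
    have : x ∈ rest.toFinset := List.mem_toFinset.2 hx
    rw [htf''] at this
    exact ⟨Finset.mem_of_mem_erase this, Finset.ne_of_mem_erase this⟩
  set h : Pt → ℝ := fun z => odet s q z with hdef
  have hne0 : ∀ p ∈ S.erase s, p ≠ q → h p ≠ 0 := by
    intro p hp hpq
    have hpS : p ∈ S := Finset.mem_of_mem_erase hp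
    have hps : p ≠ s := Finset.ne_of_mem_erase hp
    exact genpos_odet hS hsS hqS hpS hsq (Ne.symm hpq) (Ne.symm hps)
  intro y hy
  obtain ⟨hyseg, hyhull⟩ := hy
  show y = q
  by_contra hyq
  have hy0 : h y = 0 := odet_eq_zero_of_mem_segment hyseg
  have hq0 : h q = 0 := odet_self s q
  -- both strict signs occur among S.erase s
  have hApos : ∃ pA ∈ S.erase s, pA ≠ q ∧ 0 < h pA := by
    by_contra hcon
    push_neg at hcon
    apply hyq
    refine hull_eq_unique (g := fun z => - h z) (aff_neg (aff_odet s q)) (by simp [hq0])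
      (fun p hp hpq => ?_) y hyhull (by simp [hy0])
    have hp' := Finset.mem_coe.1 hp
    have := hcon p hp' hpq
    have hne := hne0 p hp' hpq
    rcases lt_or_gt_of_ne hne with h' | h'
    · simpa using h'
    · exact absurd h' (by simpa using this)
  have hBneg : ∃ pB ∈ S.erase s, pB ≠ q ∧ h pB < 0 := by
    by_contra hcon
    push_neg at hcon
    apply hyq
    refine hull_eq_unique (g := h) (aff_odet s q) hq0 (fun p hp hpq => ?_) y hyhull hy0
    have hp' := Finset.mem_coe.1 hp
    have := hcon p hp' hpq
    have hne := hne0 p hp' hpq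
    rcases lt_or_gt_of_ne hne with h' | h'
    · exact absurd h' (by simpa using this)
    · exact h'
  obtain ⟨pA, hpA, hpAq, hpApos⟩ := hApos
  obtain ⟨pB, hpB, hpBq, hpBneg⟩ := hBneg
  have hpArest : pA ∈ rest := by
    have : pA ∈ rest.toFinset := by rw [htf'']; exact Finset.mem_erase.2 ⟨hpAq, hpA⟩
    exact List.mem_toFinset.1 this
  have hpBrest : pB ∈ rest := by
    have : pB ∈ rest.toFinset := by rw [htf'']; exact Finset.mem_erase.2 ⟨hpBq, hpB⟩
    exact List.mem_toFinset.1 this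
  obtain ⟨uv, huv, huvsign⟩ := sign_change rest
    (fun x hx => hne0 x (hrestS' x hx).1 (hrestS' x hx).2) pA hpArest pB hpBrest hpApos hpBneg
  set u := uv.1
  set v := uv.2
  have hu0 : h u ≠ 0 := fun hc => by rw [hc] at huvsign; simp at huvsign
  have hv0 : h v ≠ 0 := fun hc => by rw [hc] at huvsign; simp at huvsign
  -- crossing point z of edge (u,v) with the line through s and q
  have hden : h v - h u ≠ 0 := by
    intro hc
    have : h u = h v := by linarith
    rw [this] at huvsign
    nlinarith
  set aa := h v / (h v - h u) with haa
  set bb := -h u / (h v - h u) with hbb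
  have hab1 : aa + bb = 1 := by
    rw [haa, hbb]; field_simp; ring
  have haapos : 0 < aa := by
    rw [haa]
    rcases lt_or_gt_of_ne hu0 with h' | h'
    · have hvpos : 0 < h v := by nlinarith
      apply div_pos hvpos; nlinarith
    · have hvneg : h v < 0 := by nlinarith
      apply div_pos_of_neg_of_neg hvneg; nlinarith
  have hbbpos : 0 < bb := by
    rw [hbb]
    rcases lt_or_gt_of_ne hu0 with h' | h'
    · apply div_pos (by linarith); nlinarith
    · apply div_pos_of_neg_of_neg (by linarith); nlinarith
  set z := aa • u + bb • v with hzdef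
  have hzseg : z ∈ segment ℝ u v := ⟨aa, bb, le_of_lt haapos, le_of_lt hbbpos, hab1, rfl⟩
  have hz0 : h z = 0 := by
    rw [hzdef, hdef]
    simp only []
    rw [odet_combo s q hab1 u v, haa, hbb]
    field_simp
    ring
  have hzhull : z ∈ convexHull ℝ (↑(S.erase s) : Set Pt) := by
    apply (convex_convexHull ℝ _).segment_subset
      (subset_convexHull _ _ (Finset.mem_coe.2 (hrestS' u (mem_of_mem_edgesOf huv).1).1))
      (subset_convexHull _ _ (Finset.mem_coe.2 (hrestS' v (mem_of_mem_edgesOf huv).2).1))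
      hzseg
  -- parametrize y and z on the line through s, q
  have hqs_ne : q - s ≠ (0 : Pt) := sub_ne_zero.2 (Ne.symm hsq)
  have hdetz : (q - s).1 * (z - s).2 - (q - s).2 * (z - s).1 = 0 := by
    have : h z = (q - s).1 * (z - s).2 - (q - s).2 * (z - s).1 := by
      rw [hdef]; unfold odet; simp [Prod.fst_sub, Prod.snd_sub]
    linarith [this ▸ hz0]
  obtain ⟨μ, hμ⟩ := det_smul hdetz hqs_ne
  have hz1 : z.1 - s.1 = μ * (q.1 - s.1) := by
    have := congrArg Prod.fst hμ; simpa [smul_eq_mul] using this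
  have hz2 : z.2 - s.2 = μ * (q.2 - s.2) := by
    have := congrArg Prod.snd hμ; simpa [smul_eq_mul] using this
  obtain ⟨α, β, hα, hβ, hαβ, hyeq⟩ := hyseg
  have hy1 : y.1 - s.1 = β * (q.1 - s.1) := by
    have := congrArg Prod.fst hyeq
    simp only [Prod.fst_add, Prod.smul_fst, smul_eq_mul] at this
    have hα' : α = 1 - β := by linarith
    rw [hα'] at this; linarith [this]
  have hy2 : y.2 - s.2 = β * (q.2 - s.2) := by
    have := congrArg Prod.snd hyeq
    simp only [Prod.snd_add, Prod.smul_snd, smul_eq_mul] at this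
    have hα' : α = 1 - β := by linarith
    rw [hα'] at this; linarith [this]
  have hβ1 : β < 1 := by
    have hβle : β ≤ 1 := by linarith
    rcases lt_or_eq_of_le hβle with hlt | heq
    · exact hlt
    · exfalso
      apply hyq
      rw [heq] at hy1 hy2
      exact Prod.ext (by linarith) (by linarith)
  have hβ0 : 0 < β := by
    rcases eq_or_lt_of_le hβ with heq | hlt
    · exfalso
      apply hshull
      have hys : y = s := by
        rw [← heq] at hy1 hy2
        exact Prod.ext (by linarith) (by linarith)
      exact hys ▸ hyhull
    · exact hlt
  have hμ0 : μ ≠ 0 := by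
    intro hc
    apply hshull
    have hzs : z = s := by
      rw [hc] at hz1 hz2
      exact Prod.ext (by linarith) (by linarith)
    exact hzs ▸ hzhull
  have hqext' : q ∉ convexHull ℝ (↑((S.erase s).erase q) : Set Pt) := by
    rw [← htf'']; exact hqext
  obtain ⟨fq, hfq⟩ := exists_tangent (S.erase s) q hqext'
  set g : Pt → ℝ := fun w => fq q - fq w with hgdef
  have hgaff : Aff g := aff_clm_sub fq (fq q)
  have hgq : g q = 0 := by simp [hgdef]
  have hgnn : ∀ w ∈ convexHull ℝ (↑(S.erase s) : Set Pt), 0 ≤ g w := by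
    apply hull_nonneg hgaff
    intro p hp
    by_cases hpq : p = q
    · subst hpq; simp [hgdef]
    · have := hfq p (Finset.mem_coe.1 hp) hpq
      simp only [hgdef]; linarith
  have hguniq : ∀ w ∈ convexHull ℝ (↑(S.erase s) : Set Pt), g w = 0 → w = q := by
    apply hull_eq_unique hgaff hgq
    intro p hp hpq
    have := hfq p (Finset.mem_coe.1 hp) hpq
    simp only [hgdef]; linarith
  have hgy : 0 < g y := by
    rcases eq_or_lt_of_le (hgnn y hyhull) with heq | hlt
    · exact absurd (hguniq y hyhull heq.symm) hyq
    · exact hlt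
  have hgz : 0 ≤ g z := hgnn z hzhull
  rcases lt_trichotomy μ 0 with hμneg | hμzero | hμpos
  · exfalso
    set lam := (0 - μ) / (β - μ) with hlam
    have hβμ : 0 < β - μ := by linarith
    have hlam0 : 0 < lam := by rw [hlam]; apply div_pos <;> linarith
    have hlam1 : lam < 1 := by rw [hlam, div_lt_one hβμ]; linarith
    have hseq : (1 - lam) • z + lam • y = s := by
      apply Prod.ext
      · simp only [Prod.fst_add, Prod.smul_fst, smul_eq_mul]
        have e1 : z.1 = s.1 + μ * (q.1 - s.1) := by linarith
        have e2 : y.1 = s.1 + β * (q.1 - s.1) := by linarith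
        rw [e1, e2, hlam]
        field_simp
        ring
      · simp only [Prod.snd_add, Prod.smul_snd, smul_eq_mul]
        have e1 : z.2 = s.2 + μ * (q.2 - s.2) := by linarith
        have e2 : y.2 = s.2 + β * (q.2 - s.2) := by linarith
        rw [e1, e2, hlam]
        field_simp
        ring
    have hmem : (1 - lam) • z + lam • y ∈ convexHull ℝ (↑(S.erase s) : Set Pt) :=
      (convex_convexHull ℝ _) hzhull hyhull (by linarith) (le_of_lt hlam0) (by ring)
    rw [hseq] at hmem
    exact hshull hmem
  · exact absurd hμzero hμ0
  · rcases le_or_gt μ 1 with hμ1 | hμ1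
    · exfalso
      have hzsq : z ∈ segment ℝ s q := by
        refine ⟨1 - μ, μ, by linarith, by linarith, by ring, ?_⟩
        apply Prod.ext
        · simp only [Prod.fst_add, Prod.smul_fst, smul_eq_mul]
          linear_combination -hz1
        · simp only [Prod.snd_add, Prod.smul_snd, smul_eq_mul]
          linear_combination -hz2
      have he0 : ((s, q) : Pt × Pt) ∈ edgesOf (s :: q :: rest) := by
        rw [edgesOf_cons₂]; exact List.mem_cons_self
      have hef : uv ∈ edgesOf (s :: q :: rest) :=
        edgesOf_tail_subset s _ (edgesOf_tail_subset q _ huv)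
      have hsrest : s ∉ rest := by
        intro hc
        exact hsQR (List.mem_toFinset.2 (List.mem_cons_of_mem _ hc))
      have hneq : ((s, q) : Pt × Pt) ≠ uv := by
        intro hc
        have hsu : s = u := congrArg Prod.fst hc
        exact hsrest (hsu ▸ (mem_of_mem_edgesOf huv).1)
      have hsub := hpl (s, q) he0 uv hef hneq ⟨hzsq, hzseg⟩
      have hzuv : z = u ∨ z = v := by
        have h2 := hsub.2
        simpa using h2
      rcases hzuv with hzz | hzz
      · rw [hzz] at hz0; exact hu0 hz0
      · rw [hzz] at hz0; exact hv0 hz0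
    · exfalso
      set lam := (1 - β) / (μ - β) with hlam
      have hμβ : 0 < μ - β := by linarith
      have hlam0 : 0 < lam := by rw [hlam]; apply div_pos <;> linarith
      have hlam1 : lam < 1 := by rw [hlam, div_lt_one hμβ]; linarith
      have hqeq : (1 - lam) • y + lam • z = q := by
        apply Prod.ext
        · simp only [Prod.fst_add, Prod.smul_fst, smul_eq_mul]
          have e1 : z.1 = s.1 + μ * (q.1 - s.1) := by linarith
          have e2 : y.1 = s.1 + β * (q.1 - s.1) := by linarith
          rw [e1, e2, hlam]
          field_simp
          ring
        · simp only [Prod.snd_add, Prod.smul_snd, smul_eq_mul]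
          have e1 : z.2 = s.2 + μ * (q.2 - s.2) := by linarith
          have e2 : y.2 = s.2 + β * (q.2 - s.2) := by linarith
          rw [e1, e2, hlam]
          field_simp
          ring
      have hcomb := hgaff (1 - lam) lam (by ring) y z
      rw [hqeq, hgq] at hcomb
      nlinarith [hgy, hgz, hlam0, hlam1]

end SX
namespace SX

def dotp (φ z : Pt) : ℝ := φ.1 * z.1 + φ.2 * z.2

lemma dotp_sub (φ x y : Pt) : dotp φ (x - y) = dotp φ x - dotp φ y := by
  unfold dotp; simp [Prod.fst_sub, Prod.snd_sub]; ring

lemma aff_dotp_sub (φ : Pt) (c : ℝ) : Aff (fun z => c - dotp φ z) := by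
  intro s t h x y
  unfold dotp
  simp only [Prod.fst_add, Prod.snd_add, Prod.smul_fst, Prod.smul_snd, smul_eq_mul]
  linear_combination (-c) * h

lemma det0_of_dotp {φ v w : Pt} (hφ : φ ≠ 0) (hv : dotp φ v = 0) (hw : dotp φ w = 0) :
    v.1 * w.2 - v.2 * w.1 = 0 := by
  unfold dotp at hv hw
  have hαβ : φ.1 ≠ 0 ∨ φ.2 ≠ 0 := by
    by_contra hc
    push_neg at hc
    exact hφ (Prod.ext hc.1 hc.2)
  rcases hαβ with h | h
  · have hmul : (v.1 * w.2 - v.2 * w.1) * φ.1 = 0 := by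
      linear_combination w.2 * hv - v.2 * hw
    exact (mul_eq_zero.1 hmul).resolve_right h
  · have hmul : (v.1 * w.2 - v.2 * w.1) * φ.2 = 0 := by
      linear_combination v.1 * hw - w.1 * hv
    exact (mul_eq_zero.1 hmul).resolve_right h

lemma tangent_sign' (φ : Pt) (o q : Pt) (hoq : o ≠ q) (hfo : dotp φ o = dotp φ q)
    (hφ : φ ≠ 0) :
    ∃ μ : ℝ, μ ≠ 0 ∧ ∀ z : Pt, odet o q z = μ * (dotp φ q - dotp φ z) := by
  have hv : dotp φ (q - o) = 0 := by rw [dotp_sub]; linarith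
  have hw0 : ((-φ.2, φ.1) : Pt) ≠ 0 := by
    intro hc
    rw [Prod.ext_iff] at hc
    apply hφ
    apply Prod.ext
    · simpa using hc.2
    · have := hc.1; simpa using (neg_eq_zero.1 (by simpa using this))
  have hdet : ((-φ.2, φ.1) : Pt).1 * (q - o).2 - ((-φ.2, φ.1) : Pt).2 * (q - o).1 = 0 := by
    unfold dotp at hv
    simp only [Prod.fst_sub, Prod.snd_sub]
    have h1 : (q - o).1 = q.1 - o.1 := rfl
    have h2 : (q - o).2 = q.2 - o.2 := rfl
    rw [h1, h2] at hv
    nlinarith [hv]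
  obtain ⟨μ, hμ⟩ := det_smul hdet hw0
  have hμ0 : μ ≠ 0 := by
    rintro rfl
    rw [zero_smul] at hμ
    exact (sub_ne_zero.2 (Ne.symm hoq)) hμ
  refine ⟨μ, hμ0, fun z => ?_⟩
  have h1 : q.1 - o.1 = μ * (-φ.2) := by
    have := congrArg Prod.fst hμ
    simpa [smul_eq_mul] using this
  have h2 : q.2 - o.2 = μ * φ.1 := by
    have := congrArg Prod.snd hμ
    simpa [smul_eq_mul] using this
  unfold odet dotp
  unfold dotp at hfo
  linear_combination (z.2 - o.2) * h1 - (z.1 - o.1) * h2 + μ * hfo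

end SX
namespace SX

set_option maxHeartbeats 2000000

lemma dotp_zero_right (z : Pt) : dotp 0 z = 0 := by unfold dotp; simp

lemma pivot_exists {S : Finset Pt} (hS : GenPos S) {s q a : Pt} (hsS : s ∈ S)
    (hq : q ∈ S.erase s) (ha : a ∈ S.erase s) (hqa : q ≠ a)
    (φ ψ : Pt)
    (hφ : ∀ p ∈ S.erase s, p ≠ q → dotp φ p < dotp φ q)
    (hψ : ∀ p ∈ S.erase s, p ≠ a → dotp ψ p < dotp ψ a) :
    ∃ o : Pt,
      (∀ p ∈ S.erase s, ∀ p' ∈ S.erase s, p ≠ p' → odet o p p' ≠ 0) ∧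
      o ∉ convexHull ℝ (↑(S.erase s) : Set Pt) ∧
      (((∀ p ∈ S.erase s, p ≠ q → 0 < odet o q p) ∧ (∀ p ∈ S.erase s, p ≠ a → odet o a p < 0)) ∨
       ((∀ p ∈ S.erase s, p ≠ q → odet o q p < 0) ∧ (∀ p ∈ S.erase s, p ≠ a → 0 < odet o a p))) := by
  classical
  have hqS : q ∈ S := Finset.mem_of_mem_erase hq
  have haS : a ∈ S := Finset.mem_of_mem_erase ha
  have hφa : dotp φ a < dotp φ q := hφ a ha (Ne.symm hqa)
  have hφ0 : φ ≠ 0 := by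
    intro hc; rw [hc, dotp_zero_right, dotp_zero_right] at hφa; linarith
  have hψq : dotp ψ q < dotp ψ a := hψ q hq hqa
  have hψ0 : ψ ≠ 0 := by
    intro hc; rw [hc, dotp_zero_right, dotp_zero_right] at hψq; linarith
  set D : ℝ := φ.1 * ψ.2 - φ.2 * ψ.1 with hD
  set γ : Pt := if D = 0 then (-φ.2, φ.1) else φ with hγ
  set T' := (S.erase s).erase a with hT'
  have hT'ne : T'.Nonempty := ⟨q, Finset.mem_erase.2 ⟨hqa, hq⟩⟩
  set t₀ := T'.inf' hT'ne (fun p => (dotp ψ a - dotp ψ p) / (1 + |dotp γ p - dotp γ a|)) with ht₀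
  have ht₀pos : 0 < t₀ := by
    rw [ht₀, Finset.lt_inf'_iff]
    intro p hp
    apply div_pos
    · have := hψ p (Finset.mem_of_mem_erase hp) (Finset.ne_of_mem_erase hp); linarith
    · positivity
  have hvalid : ∀ t : ℝ, 0 < t → t < t₀ → ∀ p ∈ S.erase s, p ≠ a →
      dotp ψ p + t * dotp γ p < dotp ψ a + t * dotp γ a := by
    intro t ht0 htt p hp hpa
    have hpT' : p ∈ T' := Finset.mem_erase.2 ⟨hpa, hp⟩
    have hle : t₀ ≤ (dotp ψ a - dotp ψ p) / (1 + |dotp γ p - dotp γ a|) :=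
      Finset.inf'_le _ hpT'
    have hpos : (0 : ℝ) < 1 + |dotp γ p - dotp γ a| := by positivity
    have h2 : t < (dotp ψ a - dotp ψ p) / (1 + |dotp γ p - dotp γ a|) :=
      lt_of_lt_of_le htt hle
    have h1 : t * (1 + |dotp γ p - dotp γ a|) < dotp ψ a - dotp ψ p :=
      (lt_div_iff₀ hpos).1 h2
    have habs : dotp γ p - dotp γ a ≤ |dotp γ p - dotp γ a| := le_abs_self _
    nlinarith [abs_nonneg (dotp γ p - dotp γ a)]
  have hφsq : 0 < φ.1 ^ 2 + φ.2 ^ 2 := by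
    rcases Classical.em (φ.1 = 0) with h1 | h1
    · have h2 : φ.2 ≠ 0 := by
        intro h2; exact hφ0 (Prod.ext h1 h2)
      positivity
    · positivity
  have hdenom : ∀ t : ℝ, 0 < t → φ.1 * (ψ.2 + t * γ.2) - φ.2 * (ψ.1 + t * γ.1) ≠ 0 := by
    intro t ht
    by_cases hD0 : D = 0
    · rw [hγ, if_pos hD0]
      intro hc
      simp only at hc
      rw [hD] at hD0
      nlinarith [hφsq]
    · rw [hγ, if_neg hD0]
      intro hc
      apply hD0
      rw [hD]
      nlinarith
  set ca : ℝ → ℝ := fun t => dotp ψ a + t * dotp γ a with hca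
  set cq : ℝ := dotp φ q with hcq
  set Δ : ℝ → ℝ := fun t => φ.1 * (ψ.2 + t * γ.2) - φ.2 * (ψ.1 + t * γ.1) with hΔ
  set ot : ℝ → Pt := fun t =>
    ((cq * (ψ.2 + t * γ.2) - ca t * φ.2) / Δ t,
     (φ.1 * ca t - (ψ.1 + t * γ.1) * cq) / Δ t) with hot
  have hot_q : ∀ t : ℝ, 0 < t → dotp φ (ot t) = cq := by
    intro t ht
    have hd := hdenom t ht
    have hΔt : Δ t = φ.1 * (ψ.2 + t * γ.2) - φ.2 * (ψ.1 + t * γ.1) := rfl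
    have h1 : (ot t).1 = (cq * (ψ.2 + t * γ.2) - ca t * φ.2) / Δ t := rfl
    have h2 : (ot t).2 = (φ.1 * ca t - (ψ.1 + t * γ.1) * cq) / Δ t := rfl
    show φ.1 * (ot t).1 + φ.2 * (ot t).2 = cq
    rw [h1, h2, hΔt]
    field_simp
    ring
  have hot_a : ∀ t : ℝ, 0 < t → dotp ψ (ot t) + t * dotp γ (ot t) = ca t := by
    intro t ht
    have hd := hdenom t ht
    have hΔt : Δ t = φ.1 * (ψ.2 + t * γ.2) - φ.2 * (ψ.1 + t * γ.1) := rfl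
    have h1 : (ot t).1 = (cq * (ψ.2 + t * γ.2) - ca t * φ.2) / Δ t := rfl
    have h2 : (ot t).2 = (φ.1 * ca t - (ψ.1 + t * γ.1) * cq) / Δ t := rfl
    show ψ.1 * (ot t).1 + ψ.2 * (ot t).2 + t * (γ.1 * (ot t).1 + γ.2 * (ot t).2) = ca t
    rw [h1, h2, hΔt, div_eq_mul_inv, div_eq_mul_inv]
    have hinv := mul_inv_cancel₀ hd
    linear_combination (ca t) * hinv
  have hot_ne : ∀ t : ℝ, 0 < t → t < t₀ → ∀ p ∈ S.erase s, p ≠ a → ot t ≠ p := by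
    intro t h1 h2 p hp hpa hc
    have hval := hvalid t h1 h2 p hp hpa
    have := hot_a t h1
    rw [hc] at this
    rw [hca] at this
    simp only at this
    linarith
  have hot_ne_q : ∀ t : ℝ, 0 < t → t < t₀ → ot t ≠ q := fun t h1 h2 =>
    hot_ne t h1 h2 q hq hqa
  have hot_ne_a : ∀ t : ℝ, 0 < t → t < t₀ → ot t ≠ a := by
    intro t h1 h2 hc
    have := hot_q t h1
    rw [hc] at this
    rw [hcq] at this
    linarith
  have hot_inj : ∀ t1 t2 : ℝ, 0 < t1 → t1 < t₀ → 0 < t2 → t2 < t₀ →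
      ot t1 = ot t2 → t1 = t2 := by
    intro t1 t2 h10 h1t h20 h2t hc
    by_contra hne
    have e1 := hot_a t1 h10
    have e2 := hot_a t2 h20
    rw [hc] at e1
    have hγo : dotp γ (ot t2) = dotp γ a := by
      have hsub : (t1 - t2) * (dotp γ (ot t2) - dotp γ a) = 0 := by
        rw [hca] at e1 e2
        simp only at e1 e2
        nlinarith [e1, e2]
      rcases mul_eq_zero.1 hsub with h | h
      · exact absurd (by linarith : t1 = t2) hne
      · linarith
    have hψo : dotp ψ (ot t2) = dotp ψ a := by
      rw [hca] at e2
      simp only at e2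
      nlinarith [e2, hγo]
    have hφo_a : dotp φ (ot t2) = dotp φ a := by
      by_cases hD0 : D = 0
      · have hDdet : φ.1 * ψ.2 - φ.2 * ψ.1 = 0 := by rw [← hD]; exact hD0
        obtain ⟨lam, hlam⟩ := det_smul hDdet hφ0
        have hlam0 : lam ≠ 0 := by
          rintro rfl
          rw [zero_smul] at hlam
          exact hψ0 hlam
        have hdψ : ∀ z : Pt, dotp ψ z = lam * dotp φ z := by
          intro z
          rw [hlam]
          unfold dotp
          simp only [Prod.smul_fst, Prod.smul_snd, smul_eq_mul]
          ring
        have := hψo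
        rw [hdψ, hdψ] at this
        exact mul_left_cancel₀ hlam0 this
      · rw [hγ, if_neg hD0] at hγo
        exact hγo
    have h1 := hot_q t2 h20
    rw [hφo_a, hcq] at h1
    linarith
  set Tset : Set ℝ := Set.Ioo 0 t₀ with hTset
  have hTinf : Tset.Infinite := Set.Ioo_infinite ht₀pos
  have hkey : ∀ t : ℝ, t ∈ Tset → ∀ r ∈ S.erase s, r ≠ q → odet (ot t) q r ≠ 0 := by
    intro t ht r hr hrq h0
    have hqo : q - ot t ≠ (0 : Pt) := sub_ne_zero.2 (Ne.symm (hot_ne_q t ht.1 ht.2))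
    have hdet' : (q - ot t).1 * (r - ot t).2 - (q - ot t).2 * (r - ot t).1 = 0 := by
      have : odet (ot t) q r = (q - ot t).1 * (r - ot t).2 - (q - ot t).2 * (r - ot t).1 := by
        unfold odet; simp [Prod.fst_sub, Prod.snd_sub]
      linarith [this ▸ h0]
    obtain ⟨κ', hκ'⟩ := det_smul hdet' hqo
    have hφr : dotp φ (r - ot t) = κ' * dotp φ (q - ot t) := by
      rw [hκ']
      unfold dotp
      simp only [Prod.smul_fst, Prod.smul_snd, smul_eq_mul]
      ring
    have hφq0 : dotp φ (q - ot t) = 0 := by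
      rw [dotp_sub, hot_q t ht.1, hcq]; ring
    have hφr0 : dotp φ r = dotp φ q := by
      rw [dotp_sub, hot_q t ht.1, hcq] at hφr
      rw [hφq0] at hφr
      simp at hφr
      linarith
    have := hφ r hr hrq
    linarith
  have hBadSub : ∀ p ∈ S.erase s, ∀ p' ∈ S.erase s, p ≠ p' →
      {t | t ∈ Tset ∧ odet (ot t) p p' = 0}.Subsingleton := by
    intro p hp p' hp' hpp'
    by_cases hqmem : q = p ∨ q = p'
    · intro t1 ht1 t2 ht2
      simp only [Set.mem_setOf_eq] at ht1 ht2
      exfalso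
      rcases hqmem with rfl | rfl
      · exact hkey t1 ht1.1 p' hp' (fun h => hpp' h.symm) ht1.2
      · refine hkey t1 ht1.1 p hp hpp' ?_
        have h0 : odet (ot t1) p q = 0 := ht1.2
        have hsw := odet_swap (ot t1) q p
        linarith
    · push_neg at hqmem
      intro t1 ht1 t2 ht2
      simp only [Set.mem_setOf_eq] at ht1 ht2
      by_contra hne
      have ho12 : ot t1 ≠ ot t2 := fun hc =>
        hne (hot_inj t1 t2 ht1.1.1 ht1.1.2 ht2.1.1 ht2.1.2 hc)
      have hd1 : dotp φ (ot t2 - ot t1) = 0 := by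
        rw [dotp_sub, hot_q t2 ht2.1.1, hot_q t1 ht1.1.1]; ring
      have hd2 : dotp φ (q - ot t1) = 0 := by
        rw [dotp_sub, hot_q t1 ht1.1.1, hcq]; ring
      have hdet0 := det0_of_dotp hφ0 hd1 hd2
      obtain ⟨κ, hκ⟩ := det_smul hdet0 (sub_ne_zero.2 (Ne.symm ho12))
      have hκ1 : q.1 - (ot t1).1 = κ * ((ot t2).1 - (ot t1).1) := by
        have := congrArg Prod.fst hκ
        simpa [smul_eq_mul] using this
      have hκ2 : q.2 - (ot t1).2 = κ * ((ot t2).2 - (ot t1).2) := by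
        have := congrArg Prod.snd hκ
        simpa [smul_eq_mul] using this
      have hqcomb : q = (1 - κ) • (ot t1) + κ • (ot t2) := by
        apply Prod.ext
        · simp only [Prod.fst_add, Prod.smul_fst, smul_eq_mul]
          linear_combination hκ1
        · simp only [Prod.snd_add, Prod.smul_snd, smul_eq_mul]
          linear_combination hκ2
      have hodetq : odet q p p' = 0 := by
        rw [hqcomb, odet_combo1 p p' (by ring : (1 - κ) + κ = 1)]
        rw [ht1.2, ht2.2]
        ring
      exact genpos_odet hS hqS (Finset.mem_of_mem_erase hp) (Finset.mem_of_mem_erase hp')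
        hqmem.1 hpp' hqmem.2 hodetq
  have hbadfin : (⋃ p ∈ S.erase s, ⋃ p' ∈ S.erase s,
      {t | t ∈ Tset ∧ p ≠ p' ∧ odet (ot t) p p' = 0}).Finite := by
    apply Set.Finite.biUnion (S.erase s).finite_toSet
    intro p hp
    apply Set.Finite.biUnion (S.erase s).finite_toSet
    intro p' hp'
    by_cases hpp' : p = p'
    · have : {t | t ∈ Tset ∧ p ≠ p' ∧ odet (ot t) p p' = 0} = ∅ := by
        ext t; simp only [Set.mem_setOf_eq, Set.mem_empty_iff_false, iff_false]
        rintro ⟨_, h, _⟩; exact h hpp'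
      rw [this]; exact Set.finite_empty
    · apply Set.Subsingleton.finite
      intro t1 ht1 t2 ht2
      exact hBadSub p (Finset.mem_coe.1 hp) p' (Finset.mem_coe.1 hp') hpp'
        ⟨ht1.1, ht1.2.2⟩ ⟨ht2.1, ht2.2.2⟩
  obtain ⟨t, htmem⟩ := (hTinf.diff hbadfin).nonempty
  obtain ⟨htT, htbad⟩ := htmem
  set o := ot t with ho
  have htT' : 0 < t ∧ t < t₀ := ⟨htT.1, htT.2⟩
  have hNC : ∀ p ∈ S.erase s, ∀ p' ∈ S.erase s, p ≠ p' → odet o p p' ≠ 0 := by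
    intro p hp p' hp' hpp' hzero
    apply htbad
    simp only [Set.mem_iUnion]
    exact ⟨p, Finset.mem_coe.2 hp, p', Finset.mem_coe.2 hp', htT, hpp', hzero⟩
  have honotq : o ≠ q := hot_ne_q t htT'.1 htT'.2
  have honota : o ≠ a := hot_ne_a t htT'.1 htT'.2
  have hohull : o ∉ convexHull ℝ (↑(S.erase s) : Set Pt) := by
    intro hcon
    apply honotq
    apply hull_eq_unique (g := fun z => dotp φ q - dotp φ z) (aff_dotp_sub φ (dotp φ q))
      (by simp) (fun p hp hpq => by
        have := hφ p (Finset.mem_coe.1 hp) hpq; beta_reduce; linarith) o hcon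
    have := hot_q t htT'.1
    rw [hcq] at this
    simp only [← ho] at this
    simp [this]
  obtain ⟨μ, hμ0, hμ⟩ := tangent_sign' φ o q honotq (by
    have := hot_q t htT'.1; rw [hcq] at this; simpa [← ho] using this) hφ0
  set ζ : Pt := (ψ.1 + t * γ.1, ψ.2 + t * γ.2) with hζ
  have hdζ : ∀ z : Pt, dotp ζ z = dotp ψ z + t * dotp γ z := by
    intro z; rw [hζ]; unfold dotp; simp only; ring
  have hζvalid : ∀ p ∈ S.erase s, p ≠ a → dotp ζ p < dotp ζ a := by
    intro p hp hpa
    rw [hdζ, hdζ]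
    exact hvalid t htT'.1 htT'.2 p hp hpa
  have hζo : dotp ζ o = dotp ζ a := by
    rw [hdζ, hdζ, ho]
    have := hot_a t htT'.1
    rw [hca] at this
    simpa using this
  have hζ0 : ζ ≠ 0 := by
    intro hc
    have := hζvalid q hq hqa
    rw [hc, dotp_zero_right, dotp_zero_right] at this
    linarith
  obtain ⟨ν, hν0, hν⟩ := tangent_sign' ζ o a honota hζo hζ0
  refine ⟨o, hNC, hohull, ?_⟩
  have hcq_a : 0 < dotp φ q - dotp φ a := by linarith [hφ a ha (Ne.symm hqa)]
  have hca_q : 0 < dotp ζ a - dotp ζ q := by linarith [hζvalid q hq hqa]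
  have hsignrel : ν * (dotp ζ a - dotp ζ q) = -(μ * (dotp φ q - dotp φ a)) := by
    have h1 := hμ a
    have h2 := hν q
    have hsw := odet_swap o a q
    linarith [h1, h2, hsw]
  rcases lt_or_gt_of_ne hμ0 with hμneg | hμpos
  · right
    constructor
    · intro p hp hpq
      rw [hμ p]
      have := hφ p hp hpq
      nlinarith
    · intro p hp hpa
      have hν_pos : 0 < ν := by nlinarith
      rw [hν p]
      have := hζvalid p hp hpa
      nlinarith
  · left
    constructor
    · intro p hp hpq
      rw [hμ p]
      have := hφ p hp hpq
      nlinarith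
    · intro p hp hpa
      have hν_neg : ν < 0 := by nlinarith
      rw [hν p]
      have := hζvalid p hp hpa
      nlinarith

end SX
namespace SX

set_option maxHeartbeats 2000000

abbrev Rel (S : Finset Pt) (s : Pt) (x y : List Pt) : Prop :=
  (PathIn S s x ∧ SuffixIndep x) ∧ (PathIn S s y ∧ SuffixIndep y) ∧ Flip x y

lemma genpos_erase {S : Finset Pt} (hS : GenPos S) (s : Pt) : GenPos (S.erase s) :=
  fun p hp q hq r hr => hS p (Finset.mem_of_mem_erase hp) q (Finset.mem_of_mem_erase hq)
    r (Finset.mem_of_mem_erase hr)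

lemma lift_mem {S : Finset Pt} {s q : Pt} (hS : GenPos S) (hs : s ∈ S) (hq : q ∈ S.erase s)
    (hshull : s ∉ convexHull ℝ (↑(S.erase s) : Set Pt))
    (htan : segment ℝ s q ∩ convexHull ℝ (↑(S.erase s) : Set Pt) ⊆ {q})
    {x : List Pt} (hx : PathIn (S.erase s) q x) (hsi : SuffixIndep x) :
    PathIn S s (s :: x) ∧ SuffixIndep (s :: x) := by
  obtain ⟨hpp, hhead⟩ := hx
  have htf := hpp.2.1
  have hplane : PlanePath (insert s (S.erase s)) (s :: x) :=
    planePath_cons hpp hhead (Finset.notMem_erase s S) htan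
      (fun u hu v hv huv hmem =>
        genpos_seg hS (Finset.mem_of_mem_erase hu) (Finset.mem_of_mem_erase hv)
          (Finset.mem_of_mem_erase hq) huv hmem)
  rw [Finset.insert_erase hs] at hplane
  refine ⟨⟨hplane, rfl⟩, ?_⟩
  apply suffixIndep_cons s x hsi
  rw [htf]
  exact hshull

lemma lift_rel {S : Finset Pt} {s q : Pt} (hS : GenPos S) (hs : s ∈ S) (hq : q ∈ S.erase s)
    (hshull : s ∉ convexHull ℝ (↑(S.erase s) : Set Pt))
    (htan : segment ℝ s q ∩ convexHull ℝ (↑(S.erase s) : Set Pt) ⊆ {q})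
    {x y : List Pt} (h : Rel (S.erase s) q x y) :
    Rel S s (s :: x) (s :: y) := by
  obtain ⟨⟨hx, hxsi⟩, ⟨hy, hysi⟩, hflip⟩ := h
  have hsx : s ∉ x := fun hc =>
    Finset.notMem_erase s S (by rw [← hx.1.2.1]; exact List.mem_toFinset.2 hc)
  have hsy : s ∉ y := fun hc =>
    Finset.notMem_erase s S (by rw [← hy.1.2.1]; exact List.mem_toFinset.2 hc)
  exact ⟨lift_mem hS hs hq hshull htan hx hxsi, lift_mem hS hs hq hshull htan hy hysi,
    flip_cons hflip hx.2 hy.2 hsx hsy⟩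

lemma rel_symm (S : Finset Pt) (s : Pt) : Symmetric (Rel S s) := by
  rintro x y ⟨hx, hy, e, f, he, hf, heq⟩
  refine ⟨hy, hx, f, e, ?_, ?_, ?_⟩
  · rw [heq]; exact Set.mem_insert _ _
  · rw [heq]
    intro hc
    rcases Set.mem_insert_iff.1 hc with h | h
    · exact hf (h ▸ he)
    · exact h.2 rfl
  · rw [heq]
    ext w
    simp only [Set.mem_insert_iff, Set.mem_diff, Set.mem_singleton_iff]
    constructor
    · intro hw
      by_cases hwe : w = e
      · exact Or.inl hwe
      · refine Or.inr ⟨Or.inr ⟨hw, hwe⟩, ?_⟩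
        intro hwf
        exact hf (hwf ▸ hw)
    · rintro (rfl | ⟨hw1, hw2⟩)
      · exact he
      · rcases hw1 with rfl | hw3
        · exact absurd rfl hw2
        · exact hw3.1

lemma main : ∀ (n : ℕ) (S : Finset Pt), S.card ≤ n → GenPos S →
    ∀ (s : Pt) (l l' : List Pt),
      PathIn S s l → SuffixIndep l → PathIn S s l' → SuffixIndep l' →
      Relation.ReflTransGen (Rel S s) l l' := by
  intro n
  induction n with
  | zero =>
    intro S hc hS s l l' hl hlsi hl' hl'si
    exfalso
    obtain ⟨⟨hnd, htf, _⟩, hhead⟩ := hl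
    cases l with
    | nil => simp at hhead
    | cons a t =>
      have haS : a ∈ S := htf ▸ List.mem_toFinset.2 (List.mem_cons_self)
      have hS0 : S.card = 0 := by omega
      rw [Finset.card_eq_zero] at hS0
      rw [hS0] at haS
      simp at haS
  | succ n ih =>
    intro S hc hS s l l' hl hlsi hl' hl'si
    obtain ⟨⟨hnd, htf, hpl⟩, hhead⟩ := hl
    obtain ⟨⟨hnd', htf', hpl'⟩, hhead'⟩ := hl'
    cases l with
    | nil => simp at hhead
    | cons s0 Q =>
    have hs0 : s = s0 := by
      have := hhead; simp only [List.head?_cons] at this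
      exact (Option.some.inj this).symm
    subst hs0
    cases l' with
    | nil => simp at hhead'
    | cons s1 Q' =>
    have hs1 : s = s1 := by
      have := hhead'; simp only [List.head?_cons] at this
      exact (Option.some.inj this).symm
    subst hs1
    obtain ⟨htfQ, hsQ, hsS⟩ := toFinset_tail_eq hnd htf
    obtain ⟨htfQ', hsQ', _⟩ := toFinset_tail_eq hnd' htf'
    cases Q with
    | nil =>
      cases Q' with
      | nil => exact Relation.ReflTransGen.refl
      | cons q' rest' =>
        exfalso
        have hq'S' : q' ∈ S.erase s := by
          rw [← htfQ']; exact List.mem_toFinset.2 (List.mem_cons_self)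
        have hempty : S.erase s = (∅ : Finset Pt) := by rw [← htfQ]; simp
        rw [hempty] at hq'S'
        simp at hq'S'
    | cons q rest =>
    cases Q' with
    | nil =>
      exfalso
      have hqS0 : q ∈ S.erase s := by
        rw [← htfQ]; exact List.mem_toFinset.2 (List.mem_cons_self)
      have hempty : S.erase s = (∅ : Finset Pt) := by rw [← htfQ']; simp
      rw [hempty] at hqS0
      simp at hqS0
    | cons q' rest' =>
    have hGen' : GenPos (S.erase s) := genpos_erase hS s
    have hcard' : (S.erase s).card ≤ n := by
      rw [Finset.card_erase_of_mem hsS]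
      have := Finset.card_pos.2 ⟨s, hsS⟩
      omega
    have hqS' : q ∈ S.erase s := by
      rw [← htfQ]; exact List.mem_toFinset.2 (List.mem_cons_self)
    have hshull : s ∉ convexHull ℝ (↑(S.erase s) : Set Pt) := by
      rw [← htfQ]
      exact start_extreme hlsi (by simp)
    have hNCs : ∀ p ∈ S.erase s, ∀ p' ∈ S.erase s, p ≠ p' → odet s p p' ≠ 0 := by
      intro p hp p' hp' hne
      exact genpos_odet hS hsS (Finset.mem_of_mem_erase hp) (Finset.mem_of_mem_erase hp')
        (Ne.symm (Finset.ne_of_mem_erase hp)) hne (Ne.symm (Finset.ne_of_mem_erase hp'))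
    obtain ⟨es, hes⟩ := exists_halfplane (S.erase s) s hshull
    have htrans_s : ∀ p ∈ S.erase s, ∀ p' ∈ S.erase s, ∀ p'' ∈ S.erase s,
        0 < odet s p p' → 0 < odet s p' p'' → 0 < odet s p p'' := by
      intro p hp p' hp' p'' hp'' h1 h2
      have hid := odet_E_identity s es p p' p''
      have e1 := hes p hp
      have e2 := hes p' hp'
      have e3 := hes p'' hp''
      nlinarith
    have htot_s : ∀ p ∈ S.erase s, ∀ p' ∈ S.erase s, p ≠ p' →
        (0 < odet s p p') ∨ (0 < odet s p' p) := by
      intro p hp p' hp' hne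
      have h := hNCs p hp p' hp' hne
      have hsw := odet_swap s p' p
      rcases lt_or_gt_of_ne h with h' | h'
      · right; linarith
      · left; exact h'
    obtain ⟨a, haS', hamin⟩ := exists_rmin (fun x y : Pt => 0 < odet s x y)
      (S.erase s).card (S.erase s) le_rfl htot_s htrans_s ⟨q, hqS'⟩
    obtain ⟨b, hbS', hbmax⟩ := exists_rmin (fun x y : Pt => 0 < odet s y x)
      (S.erase s).card (S.erase s) le_rfl
      (fun p hp p' hp' hne => (htot_s p hp p' hp' hne).symm)
      (fun p hp p' hp' p'' hp'' h1 h2 => htrans_s p'' hp'' p' hp' p hp h2 h1)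
      ⟨q, hqS'⟩
    have htana : segment ℝ s a ∩ convexHull ℝ (↑(S.erase s) : Set Pt) ⊆ {a} :=
      tangent_seg hamin
    obtain ⟨Wstar, hWst_tf, hWst_head, hWst_last, hWst_pp, hWst_si, _, _⟩ :=
      sweep (S.erase s) s es hes hNCs a b haS' hbS' hamin
        (fun p hp hpb => by
          have h1 := hbmax p hp hpb
          have hsw := odet_swap s b p
          linarith)
    have hWstar_path : PathIn (S.erase s) a Wstar := ⟨hWst_pp, hWst_head⟩
    have reach : ∀ (q0 : Pt) (rest0 : List Pt),
        PlanePath S (s :: q0 :: rest0) → SuffixIndep (s :: q0 :: rest0) →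
        Relation.ReflTransGen (Rel S s) (s :: q0 :: rest0) (s :: Wstar) := by
      intro q0 rest0 hP0 hSI0
      obtain ⟨hnd0, htf0, hpl0⟩ := hP0
      obtain ⟨htfQ0, hsQ0, _⟩ := toFinset_tail_eq hnd0 htf0
      have hQ0plane : PlanePath (S.erase s) (q0 :: rest0) := planePath_tail ⟨hnd0, htf0, hpl0⟩
      have hQ0si : SuffixIndep (q0 :: rest0) := suffixIndep_tail hSI0
      have hq0S' : q0 ∈ S.erase s := by
        rw [← htfQ0]; exact List.mem_toFinset.2 (List.mem_cons_self)
      have htanq0 : segment ℝ s q0 ∩ convexHull ℝ (↑(S.erase s) : Set Pt) ⊆ {q0} :=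
        visibility hS ⟨hnd0, htf0, hpl0⟩ hSI0
      have hchain_lift : ∀ (qq : Pt), qq ∈ S.erase s →
          (segment ℝ s qq ∩ convexHull ℝ (↑(S.erase s) : Set Pt) ⊆ {qq}) →
          ∀ (x y : List Pt), PathIn (S.erase s) qq x → SuffixIndep x →
            PathIn (S.erase s) qq y → SuffixIndep y →
          Relation.ReflTransGen (Rel S s) (s :: x) (s :: y) := by
        intro qq hqq htanqq x y hx hxsi hy hysi
        have hch := ih (S.erase s) hcard' hGen' qq x y hx hxsi hy hysi
        exact Relation.ReflTransGen.lift (p := Rel S s) (fun z => s :: z)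
          (fun u v huv => lift_rel hS hsS hqq hshull htanqq huv) _ _ hch
      by_cases hq0a : q0 = a
      · subst hq0a
        exact hchain_lift q0 hq0S' htanq0 (q0 :: rest0) Wstar ⟨hQ0plane, rfl⟩ hQ0si
          hWstar_path hWst_si
      · have hq0ext : q0 ∉ convexHull ℝ (↑((S.erase s).erase q0) : Set Pt) := by
          have h2 := second_extreme hSI0
          obtain ⟨h1, _, _⟩ := toFinset_tail_eq hQ0plane.1 hQ0plane.2.1
          rwa [h1] at h2
        have haext : a ∉ convexHull ℝ (↑((S.erase s).erase a) : Set Pt) := by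
          intro hcon
          have := hull_pos (aff_odet s a) (F := (↑((S.erase s).erase a) : Set Pt))
            (fun p hp => hamin p (Finset.mem_of_mem_erase (Finset.mem_coe.1 hp))
              (Finset.ne_of_mem_erase (Finset.mem_coe.1 hp))) a hcon
          simp [odet_self] at this
        obtain ⟨fq, hfq⟩ := exists_tangent (S.erase s) q0 hq0ext
        obtain ⟨fa, hfa⟩ := exists_tangent (S.erase s) a haext
        set φ : Pt := (fq (1, 0), fq (0, 1)) with hφdef
        have hφeval : ∀ z : Pt, dotp φ z = fq z := by
          intro z
          rw [clm_eval fq z]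
          unfold dotp
          rw [hφdef]
          ring
        set ψ : Pt := (fa (1, 0), fa (0, 1)) with hψdef
        have hψeval : ∀ z : Pt, dotp ψ z = fa z := by
          intro z
          rw [clm_eval fa z]
          unfold dotp
          rw [hψdef]
          ring
        obtain ⟨o, hNC, hohull, hsigns⟩ := pivot_exists hS hsS hq0S' haS' hq0a φ ψ
          (fun p hp hpq => by rw [hφeval, hφeval]; exact hfq p hp hpq)
          (fun p hp hpa => by rw [hψeval, hψeval]; exact hfa p hp hpa)
        obtain ⟨eo, heo⟩ := exists_halfplane (S.erase s) o hohull
        have hWex : ∃ W : List Pt, W.toFinset = S.erase s ∧ W.head? = some q0 ∧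
            W.getLast? = some a ∧ PlanePath (S.erase s) W ∧ SuffixIndep W ∧
            PlanePath (S.erase s) W.reverse ∧ SuffixIndep W.reverse := by
          rcases hsigns with ⟨hqmin, hamax⟩ | ⟨hqmax, hamin2⟩
          · exact sweep (S.erase s) o eo heo hNC q0 a hq0S' haS' hqmin hamax
          · obtain ⟨W0, h1, h2, h3, h4, h5, h6, h7⟩ :=
              sweep (S.erase s) o eo heo hNC a q0 haS' hq0S' hamin2 hqmax
            refine ⟨W0.reverse, by rw [List.toFinset_reverse]; exact h1,
              by rw [List.head?_reverse]; exact h3, ?_, h6, h7,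
              by rw [List.reverse_reverse]; exact h4,
              by rw [List.reverse_reverse]; exact h5⟩
            rw [show W0.reverse.getLast? = W0.head? from by
              rw [← List.head?_reverse, List.reverse_reverse]]
            exact h2
        obtain ⟨W, hWtf, hWhead, hWlast, hWpp, hWsi, hWrpp, hWrsi⟩ := hWex
        have chainA := hchain_lift q0 hq0S' htanq0 (q0 :: rest0) W ⟨hQ0plane, rfl⟩ hQ0si
          ⟨hWpp, hWhead⟩ hWsi
        have hsW : s ∉ W := fun hc =>
          Finset.notMem_erase s S (by rw [← hWtf]; exact List.mem_toFinset.2 hc)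
        have hsq0 : s ≠ q0 := Ne.symm (Finset.ne_of_mem_erase hq0S')
        have hsa : s ≠ a := Ne.symm (Finset.ne_of_mem_erase haS')
        have hWrev_head : W.reverse.head? = some a := by
          rw [List.head?_reverse]; exact hWlast
        have hmem1 := lift_mem hS hsS hq0S' hshull htanq0 ⟨hWpp, hWhead⟩ hWsi
        have hmem2 := lift_mem hS hsS haS' hshull htana ⟨hWrpp, hWrev_head⟩ hWrsi
        have stepB : Rel S s (s :: W) (s :: W.reverse) :=
          ⟨hmem1, hmem2, flip_reverse hWhead hWlast hq0a hsW hsq0 hsa⟩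
        have chainC := hchain_lift a haS' htana W.reverse Wstar ⟨hWrpp, hWrev_head⟩ hWrsi
          hWstar_path hWst_si
        exact chainA.trans ((Relation.ReflTransGen.single stepB).trans chainC)
    have h1 := reach q rest ⟨hnd, htf, hpl⟩ hlsi
    have h2 := reach q' rest' ⟨hnd', htf', hpl'⟩ hl'si
    haveI : Std.Symm (Rel S s) := ⟨fun a b h => rel_symm S s h⟩
    exact h1.trans (Std.Symm.symm _ _ h2)

end SX
/-- the flip graph induced by the suffix-independent plane spanning
paths starting at an outer point `s` is connected. -/
theorem stmt11 (S : Finset Pt) (hS : GenPos S) (s : Pt) (hs : outerPt S s)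
    (l l' : List Pt)
    (hl : PathIn S s l ∧ SuffixIndep l) (hl' : PathIn S s l' ∧ SuffixIndep l') :
    Relation.ReflTransGen
      (fun a b : List Pt => (PathIn S s a ∧ SuffixIndep a) ∧
        (PathIn S s b ∧ SuffixIndep b) ∧ Flip a b) l l' := by
  exact SX.main S.card S le_rfl hS s l l' hl.1 hl.2 hl'.1 hl'.2
end

section
/- Let S be a finite point set in general position with two convex layers, and let P be a chord-free plane spanning path from s ∈ L_0 to t ∈ L_1. If t sees a point p ∈ L_1 whose outgoing edge on P goes to a point q ∈ L_0, then one flip (replacing pq by pt) yields a chord-free plane spanning path P' from s to q ∈ L_0 with the same number of L_0-level edges as P. -/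
open scoped Classical

section Helpers

lemma edgesOf_nil : edgesOf [] = [] := rfl
lemma edgesOf_single (a : Pt) : edgesOf [a] = [] := rfl
lemma edgesOf_cons_cons (a b : Pt) (l : List Pt) :
    edgesOf (a :: b :: l) = (a, b) :: edgesOf (b :: l) := rfl

lemma edgesOf_cons (x : Pt) (l : List Pt) :
    edgesOf (x :: l) = (l.head?.map (fun y => (x, y))).toList ++ edgesOf l := by
  cases l <;> rfl

lemma mem_edgesOf_iff {a b : Pt} {l : List Pt} :
    (a, b) ∈ edgesOf l ↔ ∃ X Y, l = X ++ a :: b :: Y := by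
  constructor
  · intro h
    induction l with
    | nil => simp [edgesOf] at h
    | cons x xs ih =>
      cases xs with
      | nil => simp [edgesOf] at h
      | cons y ys =>
        rw [edgesOf_cons_cons, List.mem_cons] at h
        rcases h with h | h
        · obtain ⟨h1, h2⟩ := Prod.mk.injEq .. ▸ h
          exact ⟨[], ys, by rw [h1, h2]; rfl⟩
        · obtain ⟨X, Y, hXY⟩ := ih h
          exact ⟨x :: X, Y, by simp [hXY]⟩
  · rintro ⟨X, Y, rfl⟩
    induction X with
    | nil => simp [edgesOf_cons_cons]
    | cons x xs ih =>
      cases h : xs ++ a :: b :: Y with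
      | nil => simp at h
      | cons z zs =>
        rw [List.cons_append, h, edgesOf_cons_cons, ← h]
        exact List.mem_cons_of_mem _ ih

lemma fst_mem_of_mem_edgesOf {e : Pt × Pt} {l : List Pt} (h : e ∈ edgesOf l) : e.1 ∈ l := by
  obtain ⟨X, Y, rfl⟩ := mem_edgesOf_iff.mp (show (e.1, e.2) ∈ edgesOf l from h)
  simp

lemma snd_mem_of_mem_edgesOf {e : Pt × Pt} {l : List Pt} (h : e ∈ edgesOf l) : e.2 ∈ l := by
  obtain ⟨X, Y, rfl⟩ := mem_edgesOf_iff.mp (show (e.1, e.2) ∈ edgesOf l from h)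
  simp

lemma edgesOf_append_cons (X : List Pt) (a : Pt) (Y : List Pt) :
    edgesOf (X ++ a :: Y) = edgesOf (X ++ [a]) ++ edgesOf (a :: Y) := by
  induction X with
  | nil => simp [edgesOf_single]
  | cons x xs ih =>
    rw [List.cons_append, List.cons_append, edgesOf_cons, edgesOf_cons, ih]
    have : (xs ++ a :: Y).head? = (xs ++ [a]).head? := by cases xs <;> simp
    rw [this, List.append_assoc]

lemma edgesOf_concat (l : List Pt) (x : Pt) :
    edgesOf (l ++ [x]) = edgesOf l ++ (l.getLast?.map (fun a => (a, x))).toList := by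
  induction l with
  | nil => simp [edgesOf_single, edgesOf_nil]
  | cons a as ih =>
    cases as with
    | nil => simp [edgesOf_cons_cons, edgesOf_single, edgesOf_nil]
    | cons b bs =>
      rw [List.cons_append, List.cons_append, edgesOf_cons_cons, ← List.cons_append, ih,
        edgesOf_cons_cons]
      simp [List.getLast?_cons_cons]

lemma edgesOf_reverse (l : List Pt) :
    edgesOf l.reverse = ((edgesOf l).map Prod.swap).reverse := by
  induction l with
  | nil => rfl
  | cons a as ih =>
    cases as with
    | nil => rfl
    | cons b bs =>
      rw [List.reverse_cons, edgesOf_concat, ih, edgesOf_cons_cons]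
      have : (b :: bs).reverse.getLast? = some b := by
        simp [List.getLast?_reverse]
      simp [this]

lemma edgesOf_nodup {l : List Pt} (h : l.Nodup) : (edgesOf l).Nodup := by
  induction l with
  | nil => exact List.nodup_nil
  | cons a as ih =>
    cases as with
    | nil => exact List.nodup_nil
    | cons b bs =>
      rw [edgesOf_cons_cons]
      refine List.Nodup.cons ?_ (ih h.of_cons)
      intro hmem
      exact (List.nodup_cons.mp h).1 (fst_mem_of_mem_edgesOf hmem)

lemma not_swap_mem {l : List Pt} (h : l.Nodup) {a b : Pt} (hab : (a, b) ∈ edgesOf l) :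
    (b, a) ∉ edgesOf l := by
  obtain ⟨X, Y, rfl⟩ := mem_edgesOf_iff.mp hab
  have hnd := h
  rw [List.nodup_append] at hnd
  intro hba
  have hX : edgesOf (X ++ a :: b :: Y) = edgesOf (X ++ [a]) ++ (a, b) :: edgesOf (b :: Y) := by
    rw [edgesOf_append_cons]; rfl
  rw [hX, List.mem_append, List.mem_cons] at hba
  have hane : a ≠ b := by
    intro hab'; subst hab'
    exact (List.nodup_cons.mp hnd.2.1).1 (by simp)
  rcases hba with hba | hba | hba
  · have hbX : b ∈ X ++ [a] := fst_mem_of_mem_edgesOf hba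
    have : b ∈ X := by
      rcases List.mem_append.mp hbX with h' | h'
      · exact h'
      · simp at h'; exact absurd h'.symm hane
    exact hnd.2.2 b this b (by simp) rfl
  · injection hba with h1 h2
    exact hane h2
  · have haY : a ∈ b :: Y := snd_mem_of_mem_edgesOf hba
    have hds := hnd.2.1
    rw [List.nodup_cons] at hds
    exact hds.1 haY

lemma levelCount_eq_countP (S : Finset Pt) (m : List Pt) (h : m.Nodup) :
    levelCount S m = (edgesOf m).countP (fun e => decide (LevelEdge S e.1 e.2)) := by
  have hset : {e : Pt × Pt | e ∈ edgesOf m ∧ LevelEdge S e.1 e.2}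
      = (((edgesOf m).filter (fun e => decide (LevelEdge S e.1 e.2))).toFinset : Set (Pt × Pt)) := by
    ext e
    simp [List.mem_filter]
  rw [levelCount, hset, Nat.card_coe_set_eq, Set.ncard_coe_finset,
    List.toFinset_card_of_nodup ((edgesOf_nodup h).filter _), List.countP_eq_length_filter]

lemma levelEdge_symm {S : Finset Pt} {u v : Pt} (h : LevelEdge S u v) : LevelEdge S v u :=
  ⟨h.2.1, h.1, h.2.2.1.symm, by rw [segment_symm]; exact h.2.2.2⟩

lemma layer_one_disj {S : Finset Pt} {x : Pt} (hx : x ∈ layer S 1) : x ∉ layer S 0 := by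
  intro hx0
  have h1 : peelRes S 1 = (peelRes S 0).filter (fun p => ¬ outerPt (peelRes S 0) p) := rfl
  simp only [layer, h1, Finset.mem_filter] at hx hx0
  exact hx.1.2 hx0.2

end Helpers

/-- on a set with two convex layers, given a chord-free plane
spanning path from `s ∈ L₀` to `t ∈ L₁` such that `t` sees a point `p ∈ L₁` whose
outgoing edge goes to `q ∈ L₀`, the flip replacing `pq` by `pt` yields a
chord-free plane spanning path from `s` to `q` with the same number of
`L₀`-level edges. -/
theorem stmt16 (S : Finset Pt) (hS : GenPos S)
    (hlayers : peelRes S 2 = ∅) (hL1 : layer S 1 ≠ ∅)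
    (l : List Pt) (s t : Pt) (hl : PlanePath S l)
    (hhead : l.head? = some s) (hlast : l.getLast? = some t)
    (hs : s ∈ layer S 0) (ht : t ∈ layer S 1)
    (hcf : ChordFree S l)
    (p q : Pt) (hp : p ∈ layer S 1) (hq : q ∈ layer S 0)
    (hsee : Sees l t p) (hpq : (p, q) ∈ edgesOf l) :
    ∃ l' : List Pt, PlanePath S l' ∧ l'.head? = some s ∧ l'.getLast? = some q ∧
      ChordFree S l' ∧
      edgeSet l' = insert (Sym2.mk p t) (edgeSet l \ {Sym2.mk p q}) ∧
      levelCount S l' = levelCount S l := by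
  classical
  obtain ⟨hnd, htS, hcross⟩ := hl
  obtain ⟨A, B0, rfl⟩ := mem_edgesOf_iff.mp hpq
  set l : List Pt := A ++ p :: q :: B0 with hldef
  -- basic disjointness facts
  have hpq' : p ≠ q := fun h => layer_one_disj hp (h ▸ hq)
  have hqt : q ≠ t := fun h => layer_one_disj ht (h ▸ hq)
  have hps : p ≠ s := fun h => layer_one_disj hp (h ▸ hs)
  -- B0 is nonempty and ends with t
  have hB0 : B0 ≠ [] := by
    intro h
    subst h
    rw [show l = A ++ [p, q] by rfl, List.getLast?_append_of_ne_nil _ (by simp)] at hlast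
    simp at hlast
    exact hqt hlast
  have hBt : B0.getLast? = some t := by
    rw [show l = (A ++ [p, q]) ++ B0 by simp [hldef], List.getLast?_append_of_ne_nil _ hB0] at hlast
    exact hlast
  -- A is nonempty and starts with s
  have hA : A ≠ [] := by
    intro h
    subst h
    rw [show l = [] ++ p :: q :: B0 by rfl] at hhead
    simp at hhead
    exact hps hhead
  have hAs : A.head? = some s := by
    rw [show (l.head? = some s) = ((A ++ p :: q :: B0).head? = some s) from rfl,
      List.head?_append_of_ne_nil _ hA] at hhead
    exact hhead
  -- the flipped path
  refine ⟨A ++ p :: (B0.reverse ++ [q]), ?_⟩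
  set l' := A ++ p :: (B0.reverse ++ [q]) with hl2def
  have hperm : l'.Perm l := by
    refine List.Perm.append_left A (List.Perm.cons p ?_)
    exact (List.perm_append_comm).trans ((B0.reverse_perm).cons q)
  have hnd' : l'.Nodup := hperm.nodup_iff.mpr hnd
  -- edge decompositions
  have hE : edgesOf l = edgesOf (A ++ [p]) ++ (p, q) :: edgesOf (q :: B0) := by
    rw [show l = A ++ p :: (q :: B0) from rfl, edgesOf_append_cons]
    rfl
  have hE2 : edgesOf (p :: (B0.reverse ++ [q]))
      = (p, t) :: ((edgesOf (q :: B0)).map Prod.swap).reverse := by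
    have hrev : p :: (B0.reverse ++ [q]) = (q :: (B0 ++ [p])).reverse := by simp
    have h1 : q :: (B0 ++ [p]) = (q :: B0) ++ [p] := rfl
    have h2 : (q :: B0).getLast? = some t := by
      rw [show q :: B0 = [q] ++ B0 from rfl, List.getLast?_append_of_ne_nil _ hB0, hBt]
    rw [hrev, edgesOf_reverse, h1, edgesOf_concat, h2]
    simp
  have hE' : edgesOf l' = edgesOf (A ++ [p])
      ++ (p, t) :: ((edgesOf (q :: B0)).map Prod.swap).reverse := by
    rw [show l' = A ++ p :: (B0.reverse ++ [q]) from rfl, edgesOf_append_cons, hE2]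
  -- membership transfer
  have hmem' : ∀ e ∈ edgesOf l', e = (p, t) ∨ e ∈ edgesOf l ∨ e.swap ∈ edgesOf l := by
    intro e he
    rw [hE', List.mem_append, List.mem_cons] at he
    rcases he with he | he | he
    · right; left; rw [hE]; exact List.mem_append_left _ he
    · left; exact he
    · right; right
      rw [List.mem_reverse, List.mem_map] at he
      obtain ⟨a, ha, rfl⟩ := he
      rw [Prod.swap_swap, hE]
      exact List.mem_append_right _ (List.mem_cons_of_mem _ ha)
  -- location facts from Nodup
  have hndA := List.nodup_append.mp (show (A ++ p :: q :: B0).Nodup from hnd)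
  have hqAp : q ∉ A ++ [p] := by
    intro h
    rcases List.mem_append.mp h with h' | h'
    · exact hndA.2.2 q h' q (by simp) rfl
    · simp at h'
      exact hpq' h'.symm
  have hpqB : p ∉ q :: B0 := by
    have := hndA.2.1
    rw [List.nodup_cons] at this
    exact this.1
  have hpq_pref : ∀ a b : Pt, (a, b) ∈ edgesOf (A ++ [p]) → Sym2.mk a b ≠ Sym2.mk p q := by
    intro a b hab h
    rcases Sym2.eq_iff.mp h with ⟨h1, h2⟩ | ⟨h1, h2⟩
    · exact hqAp (h2 ▸ snd_mem_of_mem_edgesOf hab)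
    · exact hqAp (h1 ▸ fst_mem_of_mem_edgesOf hab)
  have hpq_suff : ∀ a b : Pt, (a, b) ∈ edgesOf (q :: B0) → Sym2.mk a b ≠ Sym2.mk p q := by
    intro a b hab h
    rcases Sym2.eq_iff.mp h with ⟨h1, h2⟩ | ⟨h1, h2⟩
    · exact hpqB (h1 ▸ fst_mem_of_mem_edgesOf hab)
    · exact hpqB (h2 ▸ snd_mem_of_mem_edgesOf hab)
  -- visibility, symmetrized
  have hsee' : ∀ f ∈ edgesOf l, segment ℝ p t ∩ segment ℝ f.1 f.2
      ⊆ ({p, t} ∩ {f.1, f.2} : Set Pt) := by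
    intro f hf
    have h := hsee f hf
    rwa [segment_symm, Set.pair_comm t p] at h
  -- the crossing-freeness core
  have main : ∀ e f : Pt × Pt, (e = (p, t) ∨ e ∈ edgesOf l) → (f = (p, t) ∨ f ∈ edgesOf l) →
      Sym2.mk e.1 e.2 ≠ Sym2.mk f.1 f.2 →
      segment ℝ e.1 e.2 ∩ segment ℝ f.1 f.2 ⊆ ({e.1, e.2} ∩ {f.1, f.2} : Set Pt) := by
    rintro e f (rfl | he) (rfl | hf) hne
    · exact absurd rfl hne
    · exact hsee' f hf
    · rw [Set.inter_comm (segment ℝ e.1 e.2), Set.inter_comm ({e.1, e.2} : Set Pt)]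
      exact hsee' e he
    · exact hcross e he f hf (fun h => hne (by rw [h]))
  have swap_seg : ∀ a : Pt × Pt, segment ℝ a.swap.1 a.swap.2 = segment ℝ a.1 a.2 :=
    fun a => segment_symm ℝ a.2 a.1
  have swap_pair : ∀ a : Pt × Pt, ({a.swap.1, a.swap.2} : Set Pt) = {a.1, a.2} :=
    fun a => Set.pair_comm a.2 a.1
  have swap_sym2 : ∀ a : Pt × Pt, Sym2.mk a.swap.1 a.swap.2 = Sym2.mk a.1 a.2 :=
    fun a => Sym2.eq_swap
  -- choose representatives
  have repr : ∀ e ∈ edgesOf l', ∃ e₀ : Pt × Pt, (e₀ = (p, t) ∨ e₀ ∈ edgesOf l) ∧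
      segment ℝ e.1 e.2 = segment ℝ e₀.1 e₀.2 ∧ ({e.1, e.2} : Set Pt) = {e₀.1, e₀.2} ∧
      Sym2.mk e.1 e.2 = Sym2.mk e₀.1 e₀.2 := by
    intro e he
    rcases hmem' e he with h | h | h
    · exact ⟨(p, t), Or.inl rfl, by rw [h], by rw [h], by rw [h]⟩
    · exact ⟨e, Or.inr h, rfl, rfl, rfl⟩
    · exact ⟨e.swap, Or.inr h, (swap_seg e).symm, (swap_pair e).symm, (swap_sym2 e).symm⟩
  refine ⟨⟨hnd', ?_, ?_⟩, ?_, ?_, ?_, ?_, ?_⟩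
  · -- spanning
    rw [List.toFinset_eq_of_perm _ _ hperm, htS]
  · -- plane
    intro e he f hf hef
    have hS2 : Sym2.mk e.1 e.2 ≠ Sym2.mk f.1 f.2 := by
      intro h
      rcases Sym2.eq_iff.mp (show Sym2.mk e.1 e.2 = Sym2.mk f.1 f.2 from h) with
        ⟨h1, h2⟩ | ⟨h1, h2⟩
      · exact hef (Prod.ext h1 h2)
      · refine not_swap_mem hnd' (show (e.1, e.2) ∈ edgesOf l' from he) ?_
        have : f = (e.2, e.1) := Prod.ext h2.symm h1.symm
        rwa [this] at hf
    obtain ⟨e₀, he₀, hseg_e, hpair_e, hs2_e⟩ := repr e he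
    obtain ⟨f₀, hf₀, hseg_f, hpair_f, hs2_f⟩ := repr f hf
    rw [hseg_e, hseg_f, hpair_e, hpair_f]
    exact main e₀ f₀ he₀ hf₀ (by rw [← hs2_e, ← hs2_f]; exact hS2)
  · -- head
    rw [show l' = A ++ p :: (B0.reverse ++ [q]) from rfl,
      List.head?_append_of_ne_nil _ hA, hAs]
  · -- last
    rw [show l' = (A ++ p :: B0.reverse) ++ [q] by simp [hl2def],
      List.getLast?_append_of_ne_nil _ (by simp)]
    rfl
  · -- chord-free
    intro e he h1 h2
    rcases hmem' e he with rfl | he₀ | he₀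
    · exact absurd h1 (layer_one_disj hp)
    · exact hcf e he₀ h1 h2
    · exact levelEdge_symm (hcf e.swap he₀ h2 h1)
  · -- edge set
    ext x
    constructor
    · rintro ⟨e, he, rfl⟩
      rw [hE', List.mem_append, List.mem_cons] at he
      rcases he with he | he | he
      · refine Or.inr ⟨⟨e, by rw [hE]; exact List.mem_append_left _ he, rfl⟩, ?_⟩
        simpa using hpq_pref e.1 e.2 he
      · rw [he]
        exact Or.inl rfl
      · rw [List.mem_reverse, List.mem_map] at he
        obtain ⟨a, ha, rfl⟩ := he
        refine Or.inr ⟨⟨a, by rw [hE]; exact List.mem_append_right _ (List.mem_cons_of_mem _ ha),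
          swap_sym2 a⟩, ?_⟩
        rw [swap_sym2 a]
        simpa using hpq_suff a.1 a.2 ha
    · rintro (rfl | ⟨⟨e, he, rfl⟩, hne⟩)
      · exact ⟨(p, t), by rw [hE']; exact List.mem_append_right _ List.mem_cons_self, rfl⟩
      · rw [hE, List.mem_append, List.mem_cons] at he
        rcases he with he | he | he
        · exact ⟨e, by rw [hE']; exact List.mem_append_left _ he, rfl⟩
        · have h' : ¬ e = (p, q) ∧ ¬ e = (q, p) := by simpa using hne
          exact absurd he h'.1
        · refine ⟨e.swap, ?_, (swap_sym2 e).symm⟩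
          rw [hE']
          refine List.mem_append_right _ (List.mem_cons_of_mem _ ?_)
          rw [List.mem_reverse, List.mem_map]
          exact ⟨e, he, rfl⟩
  · -- level count
    have hLpq : ¬ LevelEdge S p q := fun h => layer_one_disj hp h.1
    have hLpt : ¬ LevelEdge S p t := fun h => layer_one_disj hp h.1
    rw [levelCount_eq_countP S l' hnd', levelCount_eq_countP S l hnd, hE, hE']
    simp only [List.countP_append, List.countP_cons, List.countP_reverse, List.countP_map]
    have h1 : (decide (LevelEdge S (p, q).1 (p, q).2)) = false := by
      simpa using hLpq
    have h2 : (decide (LevelEdge S (p, t).1 (p, t).2)) = false := by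
      simpa using hLpt
    rw [h1, h2]
    simp only [Bool.false_eq_true, if_false]
    congr 1
    refine List.countP_congr ?_
    intro a _
    simp only [Function.comp_apply, Prod.fst_swap, Prod.snd_swap, decide_eq_true_eq]
    exact ⟨levelEdge_symm, levelEdge_symm⟩
end

section
/- Every plane spanning path on a set of n ≥ 3 points in convex position contains at least two edges of the convex hull boundary. -/
open scoped Classical

/-! ### Auxiliary lemmas for `stmt17` -/

section Stmt17Aux

lemma odet_affine (a b x y : Pt) (s t : ℝ) (hst : s + t = 1) :
    odet a b (s • x + t • y) = s * odet a b x + t * odet a b y := by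
  have ht : t = 1 - s := by linarith
  subst ht
  simp only [odet, Prod.smul_fst, Prod.smul_snd, Prod.fst_add, Prod.snd_add, smul_eq_mul]
  ring

lemma odet_swap (a b c : Pt) : odet b a c = - odet a b c := by
  simp only [odet]; ring

lemma odet_self_left (a b : Pt) : odet a b a = 0 := by simp only [odet]; ring

lemma odet_self_right (a b : Pt) : odet a b b = 0 := by simp only [odet]; ring

lemma param_of_odet_eq_zero {a b : Pt} (hab : a ≠ b) {x : Pt} (h : odet a b x = 0) :
    ∃ s : ℝ, x = a + s • (b - a) := by
  have h' : (b.1 - a.1) * (x.2 - a.2) - (b.2 - a.2) * (x.1 - a.1) = 0 := h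
  by_cases h1 : b.1 - a.1 = 0
  · have h2 : b.2 - a.2 ≠ 0 := by
      intro h2
      exact hab (Prod.ext (by linarith) (by linarith))
    refine ⟨(x.2 - a.2) / (b.2 - a.2), ?_⟩
    have hx1 : x.1 = a.1 := by
      rw [h1] at h'
      have : (b.2 - a.2) * (x.1 - a.1) = 0 := by linarith
      rcases mul_eq_zero.mp this with hc | hc
      · exact absurd hc h2
      · linarith
    apply Prod.ext
    · simp only [Prod.fst_add, Prod.smul_fst, Prod.fst_sub, smul_eq_mul]
      rw [hx1, h1]; ring
    · simp only [Prod.snd_add, Prod.smul_snd, Prod.snd_sub, smul_eq_mul]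
      field_simp
      ring
  · refine ⟨(x.1 - a.1) / (b.1 - a.1), ?_⟩
    apply Prod.ext
    · simp only [Prod.fst_add, Prod.smul_fst, Prod.fst_sub, smul_eq_mul]
      field_simp
      ring
    · simp only [Prod.snd_add, Prod.smul_snd, Prod.snd_sub, smul_eq_mul]
      field_simp
      nlinarith [h']

/-- A point of a convex-position set is never in the open segment between a point of the
hull and another point of the set. -/
lemma not_between (S : Finset Pt) (hpos : ConvexPos S) {v b x : Pt} (hv : v ∈ S) (hb : b ∈ S)
    (hbv : b ≠ v) (hx : x ∈ convexHull ℝ (S : Set Pt)) {t : ℝ} (ht0 : 0 < t) (ht1 : t < 1)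
    (hveq : v = (1 - t) • x + t • b) : False := by
  rw [Finset.convexHull_eq] at hx
  obtain ⟨w, hw0, hw1, hwx⟩ := hx
  classical
  set w' : Pt → ℝ := fun y => (1 - t) * w y + if y = b then t else 0 with hw'def
  have hw'0 : ∀ y ∈ S, 0 ≤ w' y := by
    intro y hy
    have := hw0 y hy
    simp only [hw'def]
    by_cases hyb : y = b
    · rw [if_pos hyb]; nlinarith
    · rw [if_neg hyb]; nlinarith
  have hw'1 : ∑ y ∈ S, w' y = 1 := by
    simp only [hw'def, Finset.sum_add_distrib, ← Finset.mul_sum, hw1,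
      Finset.sum_ite_eq' S b (fun _ => t), if_pos hb]
    ring
  have hx' : ∑ y ∈ S, w y • y = x := by
    rw [← hwx, Finset.centerMass_eq_of_sum_1 _ _ hw1]
    simp
  have hsum : ∑ y ∈ S, w' y • y = v := by
    have : ∑ y ∈ S, w' y • y
        = (1 - t) • (∑ y ∈ S, w y • y) + ∑ y ∈ S, (if y = b then t else 0) • y := by
      rw [Finset.smul_sum, ← Finset.sum_add_distrib]
      refine Finset.sum_congr rfl fun y _ => ?_
      simp only [hw'def, add_smul, mul_smul]
    rw [this, hx']
    have : ∑ y ∈ S, (if y = b then t else 0) • y = t • b := by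
      rw [Finset.sum_eq_single b]
      · simp
      · intro c _ hc; simp [hc]
      · intro hcon; exact absurd hb hcon
    rw [this, hveq]
  have hwv1 : w v ≤ 1 := hw1 ▸ Finset.single_le_sum (fun y hy => hw0 y hy) hv
  have hcv : w' v ≤ 1 - t := by
    simp only [hw'def, if_neg (fun h : v = b => hbv h.symm), add_zero]
    nlinarith
  have hclt : w' v < 1 := by linarith
  have herase_sum : ∑ y ∈ S.erase v, w' y = 1 - w' v := by
    have h2 : w' v + ∑ y ∈ S.erase v, w' y = ∑ y ∈ S, w' y :=
      Finset.add_sum_erase S w' hv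
    rw [hw'1] at h2
    linarith
  have hkey : ∑ y ∈ S.erase v, w' y • y = (1 - w' v) • v := by
    have h2 : w' v • v + ∑ y ∈ S.erase v, w' y • y = ∑ y ∈ S, w' y • y :=
      Finset.add_sum_erase S (fun y => w' y • y) hv
    rw [hsum] at h2
    rw [sub_smul, one_smul]
    exact eq_sub_of_add_eq' h2
  have hv' : v ∈ convexHull ℝ ((S.erase v : Finset Pt) : Set Pt) := by
    rw [Finset.convexHull_eq]
    refine ⟨fun y => w' y / (1 - w' v), ?_, ?_, ?_⟩
    · intro y hy
      exact div_nonneg (hw'0 y (Finset.mem_of_mem_erase hy)) (by linarith)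
    · rw [← Finset.sum_div, herase_sum]
      exact div_self (by linarith)
    · rw [Finset.centerMass_eq_of_sum_1]
      · have : ∑ y ∈ S.erase v, (w' y / (1 - w' v)) • (id y)
            = (1 - w' v)⁻¹ • ∑ y ∈ S.erase v, w' y • y := by
          rw [Finset.smul_sum]
          refine Finset.sum_congr rfl fun y _ => ?_
          rw [div_eq_inv_mul, mul_smul]
          rfl
        rw [this, hkey, smul_smul, inv_mul_cancel₀ (by linarith), one_smul]
      · rw [← Finset.sum_div, herase_sum]
        exact div_self (by linarith)
  exact hpos v hv hv'

/-- A point of the hull lying on the line through two points of a convex position set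
lies on the segment between them. -/
lemma seg_of_line (S : Finset Pt) (hpos : ConvexPos S) {a b x : Pt} (ha : a ∈ S) (hb : b ∈ S)
    (hab : a ≠ b) (hx : x ∈ convexHull ℝ (S : Set Pt)) (h0 : odet a b x = 0) :
    x ∈ segment ℝ a b := by
  obtain ⟨s, hxs⟩ := param_of_odet_eq_zero hab h0
  rcases le_or_gt 0 s with hs0 | hs0
  · rcases le_or_gt s 1 with hs1 | hs1
    · rw [segment_eq_image']
      exact ⟨s, ⟨hs0, hs1⟩, hxs.symm⟩
    · -- s > 1 : b between x and a
      exfalso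
      have ht0 : 0 < (s - 1) / s := div_pos (by linarith) (by linarith)
      have ht1 : (s - 1) / s < 1 := by
        rw [div_lt_one (by linarith)]; linarith
      refine not_between S hpos hb ha hab hx ht0 ht1 ?_
      have hs : s ≠ 0 := by linarith
      apply Prod.ext <;>
        · simp only [hxs, Prod.smul_fst, Prod.smul_snd, Prod.fst_add, Prod.snd_add,
            Prod.fst_sub, Prod.snd_sub, smul_eq_mul]
          field_simp
          ring
  · -- s < 0 : a between x and b
    exfalso
    have hden : s - 1 < 0 := by linarith
    have ht0 : 0 < s / (s - 1) := div_pos_of_neg_of_neg hs0 hden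
    have ht1 : s / (s - 1) < 1 := by
      rw [div_lt_one_of_neg hden]; linarith
    refine not_between S hpos ha hb (Ne.symm hab) hx ht0 ht1 ?_
    have hs : s - 1 ≠ 0 := by linarith
    apply Prod.ext <;>
      · simp only [hxs, Prod.smul_fst, Prod.smul_snd, Prod.fst_add, Prod.snd_add,
          Prod.fst_sub, Prod.snd_sub, smul_eq_mul]
        field_simp
        ring

/-- No third point of a convex position set lies on the line through two of its points. -/
lemma odet_ne_zero (S : Finset Pt) (hpos : ConvexPos S) {a b p : Pt} (ha : a ∈ S) (hb : b ∈ S)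
    (hp : p ∈ S) (hab : a ≠ b) (hpa : p ≠ a) (hpb : p ≠ b) : odet a b p ≠ 0 := by
  intro h0
  obtain ⟨s, hps⟩ := param_of_odet_eq_zero hab h0
  have hs0 : s ≠ 0 := by
    intro h; apply hpa; rw [hps, h]; simp
  have hs1 : s ≠ 1 := by
    intro h; apply hpb; rw [hps, h]; simp
  have hseg : p ∈ segment ℝ a b :=
    seg_of_line S hpos ha hb hab (subset_convexHull ℝ _ hp) h0
  rw [segment_eq_image'] at hseg
  obtain ⟨s', ⟨hs'0, hs'1⟩, hps'⟩ := hseg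
  have hss : s' = s := by
    have h2 : a + s' • (b - a) = a + s • (b - a) := by rw [← hps]; exact hps'
    have h3 : (s' - s) • (b - a) = 0 := by
      calc (s' - s) • (b - a) = a + s' • (b - a) - (a + s • (b - a)) := by
            rw [sub_smul]; abel
        _ = 0 := by rw [h2, sub_self]
    rcases smul_eq_zero.mp h3 with h | h
    · have := sub_eq_zero.mp h
      linarith
    · exact absurd (sub_eq_zero.mp h).symm hab
  have hs0' : 0 < s := lt_of_le_of_ne (hss ▸ hs'0) (Ne.symm hs0)
  have hs1' : s < 1 := lt_of_le_of_ne (hss ▸ hs'1) hs1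
  refine not_between S hpos hp hb (Ne.symm hpb) (subset_convexHull ℝ _ ha) hs0' hs1' ?_
  apply Prod.ext <;>
    · simp only [hps, Prod.smul_fst, Prod.smul_snd, Prod.fst_add, Prod.snd_add,
        Prod.fst_sub, Prod.snd_sub, smul_eq_mul]
      ring

/-- If all points of `S` are weakly on one side of the line `ab`, the segment `ab`
is contained in the frontier of the hull. -/
lemma seg_subset_frontier (S : Finset Pt) {a b : Pt} (ha : a ∈ S) (hb : b ∈ S) (hab : a ≠ b)
    (hle : ∀ p ∈ S, odet a b p ≤ 0) :
    segment ℝ a b ⊆ frontier (convexHull ℝ (S : Set Pt)) := by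
  have hLlin : IsLinearMap ℝ (fun x : Pt => (b.1 - a.1) * x.2 - (b.2 - a.2) * x.1) := by
    constructor
    · intro u v
      simp only [Prod.fst_add, Prod.snd_add]
      ring
    · intro c u
      simp only [Prod.smul_fst, Prod.smul_snd, smul_eq_mul]
      ring
  have hset : {x : Pt | odet a b x ≤ 0}
      = {x : Pt | (b.1 - a.1) * x.2 - (b.2 - a.2) * x.1
          ≤ (b.1 - a.1) * a.2 - (b.2 - a.2) * a.1} := by
    ext x
    simp only [Set.mem_setOf_eq, odet]
    constructor <;> intro h <;> nlinarith
  have hconv : Convex ℝ {x : Pt | odet a b x ≤ 0} := by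
    rw [hset]
    exact convex_halfSpace_le hLlin _
  have hhull : convexHull ℝ (S : Set Pt) ⊆ {x : Pt | odet a b x ≤ 0} :=
    convexHull_min (fun p hp => hle p hp) hconv
  have hclosed : IsClosed (convexHull ℝ (S : Set Pt)) :=
    (S.finite_toSet.isCompact_convexHull ℝ).isClosed
  intro x hx
  rw [hclosed.frontier_eq]
  refine ⟨(convex_convexHull ℝ _).segment_subset (subset_convexHull ℝ _ ha)
    (subset_convexHull ℝ _ hb) hx, ?_⟩
  intro hint
  rw [mem_interior_iff_mem_nhds, Metric.mem_nhds_iff] at hint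
  obtain ⟨ε, hε, hball⟩ := hint
  set w : Pt := (a.2 - b.2, b.1 - a.1) with hwdef
  have hw : w ≠ 0 := by
    intro hc
    have h1 : a.2 - b.2 = 0 := by
      have := congrArg Prod.fst hc
      simpa [hwdef] using this
    have h2 : b.1 - a.1 = 0 := by
      have := congrArg Prod.snd hc
      simpa [hwdef] using this
    exact hab (Prod.ext (by linarith) (by linarith))
  have hnw : (0:ℝ) < ‖w‖ := norm_pos_iff.mpr hw
  set δ : ℝ := ε / (2 * ‖w‖) with hδdef
  have hδ : 0 < δ := by positivity
  have hmem : x + δ • w ∈ convexHull ℝ (S : Set Pt) := by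
    apply hball
    simp only [Metric.mem_ball, dist_eq_norm, add_sub_cancel_left, norm_smul,
      Real.norm_eq_abs, abs_of_pos hδ]
    have h2w : (0:ℝ) < 2 * ‖w‖ := by positivity
    rw [hδdef, div_mul_eq_mul_div, div_lt_iff₀ h2w]
    nlinarith [mul_pos hε hnw]
  have hxline : odet a b x = 0 := by
    rw [segment_eq_image'] at hx
    obtain ⟨s, _, rfl⟩ := hx
    simp only [odet, Prod.smul_fst, Prod.smul_snd, Prod.fst_add, Prod.snd_add,
      Prod.fst_sub, Prod.snd_sub, smul_eq_mul]
    ring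
  have hshift : odet a b (x + δ • w) = odet a b x + δ * ((b.1 - a.1)^2 + (b.2 - a.2)^2) := by
    simp only [odet, hwdef, Prod.smul_fst, Prod.smul_snd, Prod.fst_add, Prod.snd_add,
      smul_eq_mul]
    ring
  have hpos2 : 0 < (b.1 - a.1)^2 + (b.2 - a.2)^2 := by
    rcases (not_and_or.mp (fun h : a.1 = b.1 ∧ a.2 = b.2 => hab (Prod.ext h.1 h.2))) with h | h
    · have : b.1 - a.1 ≠ 0 := fun hc => h (by linarith)
      nlinarith [sq_nonneg (b.2 - a.2), sq_pos_of_ne_zero this]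
    · have : b.2 - a.2 ≠ 0 := fun hc => h (by linarith)
      nlinarith [sq_nonneg (b.1 - a.1), sq_pos_of_ne_zero this]
  have := hhull hmem
  simp only [Set.mem_setOf_eq] at this
  nlinarith

lemma sign_change (P : Pt → Prop) :
    ∀ L : List Pt, (∃ a ∈ L, P a) → (∃ b ∈ L, ¬ P b) →
      ∃ u v : Pt, (u, v) ∈ L.zip L.tail ∧ ¬ (P u ↔ P v)
  | [] => by rintro ⟨a, ha, _⟩ _; simp at ha
  | [x] => by
    rintro ⟨a, ha, hPa⟩ ⟨b, hb, hPb⟩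
    simp only [List.mem_singleton] at ha hb
    subst ha; subst hb; exact absurd hPa hPb
  | x :: y :: t => by
    rintro ⟨a, ha, hPa⟩ ⟨b, hb, hPb⟩
    by_cases hxy : P x ↔ P y
    · have ha' : ∃ a ∈ y :: t, P a := by
        rcases List.mem_cons.mp ha with rfl | h
        · exact ⟨y, (by simp), hxy.mp hPa⟩
        · exact ⟨a, h, hPa⟩
      have hb' : ∃ b ∈ y :: t, ¬ P b := by
        rcases List.mem_cons.mp hb with rfl | h
        · exact ⟨y, (by simp), fun h' => hPb (hxy.mpr h')⟩
        · exact ⟨b, h, hPb⟩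
      obtain ⟨u, v, huv, h⟩ := sign_change P (y :: t) ha' hb'
      refine ⟨u, v, ?_, h⟩
      simp only [List.tail_cons] at huv ⊢
      rw [List.zip_cons_cons]
      exact List.mem_cons_of_mem _ huv
    · refine ⟨x, y, ?_, hxy⟩
      simp only [List.tail_cons]
      rw [List.zip_cons_cons]
      exact (by simp)

lemma mem_edgesOf {l : List Pt} {u v : Pt} :
    (u, v) ∈ edgesOf l ↔ ∃ i : ℕ, ∃ h : i + 1 < l.length,
      l[i]'(by omega) = u ∧ l[i + 1]'h = v := by
  unfold edgesOf
  constructor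
  · intro h
    obtain ⟨i, hi, heq⟩ := List.mem_iff_getElem.mp h
    have hil : i + 1 < l.length := by
      rcases l with _ | ⟨c, t⟩
      · simp at hi
      · simp only [List.length_zip, List.tail_cons, List.length_cons] at hi
        simp only [List.length_cons]
        omega
    rw [List.getElem_zip] at heq
    obtain ⟨h1, h2⟩ := Prod.mk.injEq _ _ _ _ ▸ heq
    rw [List.getElem_tail] at h2
    exact ⟨i, hil, h1, h2⟩
  · rintro ⟨i, h, hu, hv⟩
    apply List.mem_iff_getElem.mpr
    have hlen : i < (l.zip l.tail).length := by
      rcases l with _ | ⟨c, t⟩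
      · simp at h
      · simp only [List.length_cons] at h
        simp only [List.length_zip, List.tail_cons, List.length_cons]
        omega
    refine ⟨i, hlen, ?_⟩
    rw [List.getElem_zip, List.getElem_tail]
    rw [hu, hv]

lemma edgesOf_cons_subset (x : Pt) (t : List Pt) : edgesOf t ⊆ edgesOf (x :: t) := by
  cases t with
  | nil => intro e he; simp [edgesOf] at he
  | cons y t' =>
    intro e he
    simp only [edgesOf, List.tail_cons] at he ⊢
    rw [List.zip_cons_cons]
    exact List.mem_cons_of_mem _ he

lemma getElem_congr_idx' {l : List Pt} {i j : ℕ} (hi : i < l.length) (h : i = j) :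
    l[i]'hi = l[j]'(h ▸ hi) := by subst h; rfl

lemma edgesOf_reverse_s17 {l : List Pt} {u v : Pt} (h : (u, v) ∈ edgesOf l.reverse) :
    (v, u) ∈ edgesOf l := by
  rw [mem_edgesOf] at h ⊢
  obtain ⟨i, hi, hu, hv⟩ := h
  have hlen : i + 1 < l.length := by simpa using hi
  refine ⟨l.length - 1 - (i + 1), by omega, ?_, ?_⟩
  · rw [List.getElem_reverse] at hv
    exact hv
  · rw [List.getElem_reverse] at hu
    rw [getElem_congr_idx' (by omega) (show l.length - 1 - (i+1) + 1 = l.length - 1 - i by omega)]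
    exact hu

lemma planePath_reverse {S : Finset Pt} {l : List Pt} (h : PlanePath S l) :
    PlanePath S l.reverse := by
  obtain ⟨hnd, hts, hpl⟩ := h
  refine ⟨List.nodup_reverse.mpr hnd, by rw [List.toFinset_reverse]; exact hts, ?_⟩
  intro e he f hf hef
  have he' : (e.2, e.1) ∈ edgesOf l := edgesOf_reverse_s17 (by simpa using he)
  have hf' : (f.2, f.1) ∈ edgesOf l := edgesOf_reverse_s17 (by simpa using hf)
  have hne : ((e.2, e.1) : Pt × Pt) ≠ (f.2, f.1) := by
    intro hc
    apply hef
    have h1 := congrArg Prod.fst hc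
    have h2 := congrArg Prod.snd hc
    simp only at h1 h2
    exact Prod.ext h2 h1
  have hmain := hpl (e.2, e.1) he' (f.2, f.1) hf' hne
  intro x hx
  have hx' : x ∈ segment ℝ e.2 e.1 ∩ segment ℝ f.2 f.1 := by
    refine ⟨?_, ?_⟩
    · rw [segment_symm]; exact hx.1
    · rw [segment_symm]; exact hx.2
  have := hmain hx'
  refine ⟨?_, ?_⟩
  · rw [Set.pair_comm]; exact this.1
  · rw [Set.pair_comm]; exact this.2

lemma cross_false (S : Finset Pt) (hpos : ConvexPos S) {a b u w : Pt}
    (ha : a ∈ S) (hb : b ∈ S) (hab : a ≠ b) (hu : u ∈ S) (hw : w ∈ S)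
    (hfu : odet a b u < 0) (hfw : 0 < odet a b w)
    (hseg : segment ℝ u w ∩ segment ℝ a b ⊆ ({u, w} ∩ {a, b} : Set Pt)) : False := by
  have hden : odet a b u - odet a b w < 0 := by linarith
  have hden' : odet a b u - odet a b w ≠ 0 := ne_of_lt hden
  set t : ℝ := odet a b u / (odet a b u - odet a b w) with htdef
  have ht0 : 0 < t := div_pos_of_neg_of_neg hfu hden
  have ht1 : t < 1 := by
    rw [htdef, div_lt_one_of_neg hden]
    linarith
  set x : Pt := u + t • (w - u) with hxdef
  have hx1 : x = (1 - t) • u + t • w := by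
    apply Prod.ext <;>
      · simp only [hxdef, Prod.smul_fst, Prod.smul_snd, Prod.fst_add, Prod.snd_add,
          Prod.fst_sub, Prod.snd_sub, smul_eq_mul]
        ring
  have htt : t * (odet a b u - odet a b w) = odet a b u := by
    rw [htdef]
    exact div_mul_cancel₀ _ hden'
  have hx0 : odet a b x = 0 := by
    rw [hx1, odet_affine a b u w (1 - t) t (by ring)]
    linear_combination -htt
  have hxseg : x ∈ segment ℝ u w := by
    rw [segment_eq_image']
    exact ⟨t, ⟨le_of_lt ht0, le_of_lt ht1⟩, rfl⟩
  have hxhull : x ∈ convexHull ℝ (S : Set Pt) :=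
    (convex_convexHull ℝ _).segment_subset (subset_convexHull ℝ _ hu)
      (subset_convexHull ℝ _ hw) hxseg
  have hxab : x ∈ segment ℝ a b := seg_of_line S hpos ha hb hab hxhull hx0
  have hx := hseg ⟨hxseg, hxab⟩
  have hxuw : x = u ∨ x = w := by simpa using hx.1
  rcases hxuw with h | h
  · rw [h] at hx0; linarith
  · rw [h] at hx0; linarith

lemma key (S : Finset Pt) (hn3 : 3 ≤ S.card) (hpos : ConvexPos S) (l : List Pt)
    (hl : PlanePath S l) (a b : Pt) (rest : List Pt) (hrep : l = a :: b :: rest) :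
    segment ℝ a b ⊆ frontier (convexHull ℝ (S : Set Pt)) := by
  obtain ⟨hnd, hts, hpl⟩ := hl
  subst hrep
  have ha : a ∈ S := by rw [← hts]; simp
  have hb : b ∈ S := by rw [← hts]; simp
  have hab : a ≠ b := by
    intro h
    rw [h] at hnd
    simp at hnd
  by_cases hneg : ∀ p ∈ S, odet a b p ≤ 0
  · exact seg_subset_frontier S ha hb hab hneg
  by_cases hposi : ∀ p ∈ S, odet b a p ≤ 0
  · rw [segment_symm]
    exact seg_subset_frontier S hb ha (Ne.symm hab) hposi
  exfalso
  push_neg at hneg hposi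
  obtain ⟨p, hp, hp0⟩ := hneg
  obtain ⟨q, hq, hq0'⟩ := hposi
  have hq0 : odet a b q < 0 := by
    have h := odet_swap a b q
    rw [h] at hq0'
    linarith
  have hmem_rest : ∀ r, r ∈ S → odet a b r ≠ 0 → r ∈ rest := by
    intro r hr hr0
    have hrl : r ∈ a :: b :: rest := by
      rw [← List.mem_toFinset, hts]; exact hr
    rcases List.mem_cons.mp hrl with h | hrl
    · rw [h] at hr0
      exact absurd (odet_self_left a b) hr0
    rcases List.mem_cons.mp hrl with h | hrl
    · rw [h] at hr0
      exact absurd (odet_self_right a b) hr0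
    exact hrl
  have hp_rest : p ∈ rest := hmem_rest p hp (by linarith)
  have hq_rest : q ∈ rest := hmem_rest q hq (by linarith)
  obtain ⟨u, v, huv, hPuv⟩ := sign_change (fun r => odet a b r < 0) rest
    ⟨q, hq_rest, hq0⟩ ⟨p, hp_rest, by show ¬ odet a b p < 0; exact not_lt.mpr (le_of_lt hp0)⟩
  have hu_rest : u ∈ rest := (List.of_mem_zip huv).1
  have hv_rest : v ∈ rest := List.mem_of_mem_tail (List.of_mem_zip huv).2
  have hu_mem : u ∈ S := by rw [← hts]; simp [hu_rest]
  have hv_mem : v ∈ S := by rw [← hts]; simp [hv_rest]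
  have hnd' : a ∉ b :: rest ∧ b ∉ rest := by
    rw [List.nodup_cons, List.nodup_cons] at hnd
    exact ⟨hnd.1, hnd.2.1⟩
  have hua : u ≠ a := fun h => hnd'.1 (h ▸ List.mem_cons_of_mem _ hu_rest)
  have hub : u ≠ b := fun h => hnd'.2 (h ▸ hu_rest)
  have hva : v ≠ a := fun h => hnd'.1 (h ▸ List.mem_cons_of_mem _ hv_rest)
  have hvb : v ≠ b := fun h => hnd'.2 (h ▸ hv_rest)
  have hfu_ne : odet a b u ≠ 0 := odet_ne_zero S hpos ha hb hu_mem hab hua hub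
  have hfv_ne : odet a b v ≠ 0 := odet_ne_zero S hpos ha hb hv_mem hab hva hvb
  have hedge : (u, v) ∈ edgesOf (a :: b :: rest) :=
    edgesOf_cons_subset a (b :: rest) (edgesOf_cons_subset b rest huv)
  have hhead : ((a, b) : Pt × Pt) ∈ edgesOf (a :: b :: rest) := by
    simp only [edgesOf, List.tail_cons]
    rw [List.zip_cons_cons]
    exact (by simp)
  have hne_edge : ((u, v) : Pt × Pt) ≠ (a, b) := by
    intro h
    exact hua (congrArg Prod.fst h)
  have hsegs := hpl (u, v) hedge (a, b) hhead hne_edge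
  simp only at hsegs
  by_cases hPu : odet a b u < 0
  · have hPv : 0 < odet a b v := by
      rcases lt_or_gt_of_ne hfv_ne with h | h
      · exact absurd (Iff.intro (fun _ => h) (fun _ => hPu)) hPuv
      · exact h
    exact cross_false S hpos ha hb hab hu_mem hv_mem hPu hPv hsegs
  · have hPu' : 0 < odet a b u := (lt_or_gt_of_ne hfu_ne).resolve_left hPu
    have hPv : odet a b v < 0 := by
      rcases lt_or_gt_of_ne hfv_ne with h | h
      · exact h
      · exact absurd (Iff.intro (fun hc => absurd hc hPu) (fun hc => by linarith)) hPuv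
    refine cross_false S hpos ha hb hab hv_mem hu_mem hPv hPu' ?_
    intro x hx
    have hx' : x ∈ segment ℝ u v ∩ segment ℝ a b := by
      refine ⟨?_, hx.2⟩
      rw [segment_symm]; exact hx.1
    have := hsegs hx'
    refine ⟨?_, this.2⟩
    rw [Set.pair_comm]; exact this.1

end Stmt17Aux

/-- every plane spanning path on `n ≥ 3` points in convex position
contains at least two convex-hull edges. -/
theorem stmt17 (S : Finset Pt) (n : ℕ) (hn : 3 ≤ n) (hcard : S.card = n)
    (hpos : ConvexPos S) (l : List Pt) (hl : PlanePath S l) :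
    2 ≤ hullEdgeCount S l := by
  have hn3 : 3 ≤ S.card := hcard ▸ hn
  obtain ⟨hnd, hts, hpl⟩ := hl
  have hl' : PlanePath S l := ⟨hnd, hts, hpl⟩
  have hlen : l.length = n := by
    rw [← hcard, ← hts, List.toFinset_card_of_nodup hnd]
  obtain ⟨a, b, rest, hrep⟩ : ∃ a b rest, l = a :: b :: rest := by
    rcases l with _ | ⟨a, _ | ⟨b, rest⟩⟩
    · simp at hlen; omega
    · simp at hlen; omega
    · exact ⟨a, b, rest, rfl⟩
  have hrevlen : l.reverse.length = n := by simpa using hlen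
  obtain ⟨z, y, rest', hrev⟩ : ∃ z y rest', l.reverse = z :: y :: rest' := by
    rcases hr : l.reverse with _ | ⟨z, _ | ⟨y, r'⟩⟩
    · rw [hr] at hrevlen; simp at hrevlen; omega
    · rw [hr] at hrevlen; simp at hrevlen; omega
    · exact ⟨z, y, r', rfl⟩
  have h1 : segment ℝ a b ⊆ frontier (convexHull ℝ (S : Set Pt)) :=
    key S hn3 hpos l hl' a b rest hrep
  have hlrev : PlanePath S l.reverse := planePath_reverse hl'
  have h2 : segment ℝ z y ⊆ frontier (convexHull ℝ (S : Set Pt)) :=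
    key S hn3 hpos l.reverse hlrev z y rest' hrev
  have he1 : ((a, b) : Pt × Pt) ∈ edgesOf l := by
    rw [hrep]
    simp only [edgesOf, List.tail_cons]
    rw [List.zip_cons_cons]
    exact (by simp)
  have he2 : ((y, z) : Pt × Pt) ∈ edgesOf l := by
    apply edgesOf_reverse_s17
    rw [hrev]
    simp only [edgesOf, List.tail_cons]
    rw [List.zip_cons_cons]
    exact (by simp)
  have hne : ((a, b) : Pt × Pt) ≠ (y, z) := by
    intro hcon
    have hay : a = y := congrArg Prod.fst hcon
    have hbz : b = z := congrArg Prod.snd hcon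
    have hlform : l = rest'.reverse ++ [y, z] := by
      have := congrArg List.reverse hrev
      rw [List.reverse_reverse] at this
      rw [this]
      simp
    rw [← hay, ← hbz, hrep] at hlform
    rcases hc : rest'.reverse with _ | ⟨c, tt⟩
    · rw [hc] at hlform
      simp only [List.nil_append] at hlform
      have hrest : rest = [] := by
        have hlen2 := congrArg List.length hlform
        simp only [List.length_cons, List.length_nil] at hlen2
        exact List.eq_nil_of_length_eq_zero (by omega)
      rw [hrep, hrest] at hlen
      simp at hlen
      omega
    · rw [hc] at hlform
      have hamem : a ∈ b :: rest := by
        have htail : b :: rest = tt ++ [a, b] := by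
          have h5 := congrArg List.tail hlform
          simpa using h5
        rw [htail]
        simp
      rw [hrep, List.nodup_cons] at hnd
      exact hnd.1 hamem
  have hfin : {e : Pt × Pt | e ∈ edgesOf l ∧
      segment ℝ e.1 e.2 ⊆ frontier (convexHull ℝ (S : Set Pt))}.Finite :=
    ((edgesOf l).finite_toSet).subset (fun e he => he.1)
  show 2 ≤ Nat.card {e : Pt × Pt | e ∈ edgesOf l ∧
      segment ℝ e.1 e.2 ⊆ frontier (convexHull ℝ (S : Set Pt))}
  rw [Nat.card_coe_set_eq]
  refine (Set.one_lt_ncard_iff hfin).mpr ⟨(a, b), (y, z), ⟨he1, h1⟩, ⟨he2, ?_⟩, hne⟩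
  show segment ℝ y z ⊆ frontier (convexHull ℝ (S : Set Pt))
  rw [segment_symm]
  exact h2
end

section
/- Let S be a finite point set in general position, s a point on the boundary of conv(S), and P, Q two suffix-independent plane spanning paths starting at s whose second vertices coincide (P and Q have the same first edge ss₁). If the flip graph of suffix-independent paths on S \ {s} starting at s₁ is connected, then P and Q are connected in the flip graph of suffix-independent paths on S starting at s by a flip sequence that never modifies the edge ss₁. -/
open scoped Classical

namespace Stmt19Aux

noncomputable section

/-! ### Coordinate geometry helpers -/

/-- signed cross product wrt the directed line `s s₁` -/
def ff (s s₁ p : Pt) : ℝ := (s₁.1 - s.1) * (p.2 - s.2) - (s₁.2 - s.2) * (p.1 - s.1)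
/-- position along the line, measured from `s₁` towards `s` -/
def gg (s s₁ p : Pt) : ℝ := (p.1 - s₁.1) * (s.1 - s₁.1) + (p.2 - s₁.2) * (s.2 - s₁.2)
def DD (s s₁ : Pt) : ℝ := (s.1 - s₁.1) ^ 2 + (s.2 - s₁.2) ^ 2

lemma ff_s (s s₁ : Pt) : ff s s₁ s = 0 := by unfold ff; ring
lemma ff_s₁ (s s₁ : Pt) : ff s s₁ s₁ = 0 := by unfold ff; ring
lemma gg_s (s s₁ : Pt) : gg s s₁ s = DD s s₁ := by unfold gg DD; ring
lemma gg_s₁ (s s₁ : Pt) : gg s s₁ s₁ = 0 := by simp [gg]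

lemma DD_pos {s s₁ : Pt} (h : s ≠ s₁) : 0 < DD s s₁ := by
  rcases (le_or_gt (DD s s₁) 0) with h0 | h0
  · exfalso
    apply h
    have e1 : (s.1 - s₁.1) ^ 2 = 0 := by
      unfold DD at h0; nlinarith [sq_nonneg (s.1 - s₁.1), sq_nonneg (s.2 - s₁.2)]
    have e2 : (s.2 - s₁.2) ^ 2 = 0 := by
      unfold DD at h0; nlinarith [sq_nonneg (s.1 - s₁.1), sq_nonneg (s.2 - s₁.2)]
    have f1 : s.1 = s₁.1 := by nlinarith
    have f2 : s.2 = s₁.2 := by nlinarith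
    exact Prod.ext f1 f2
  · exact h0

/-- parametrization of points on the line -/
lemma line_coords {s s₁ p : Pt} (hf : ff s s₁ p = 0) :
    DD s s₁ * (p.1 - s₁.1) = gg s s₁ p * (s.1 - s₁.1) ∧
    DD s s₁ * (p.2 - s₁.2) = gg s s₁ p * (s.2 - s₁.2) := by
  constructor
  · unfold DD gg; unfold ff at hf; linear_combination (s.2 - s₁.2) * hf
  · unfold DD gg; unfold ff at hf; linear_combination (-(s.1 - s₁.1)) * hf

lemma eq_s₁_of {s s₁ p : Pt} (hne : s ≠ s₁) (hf : ff s s₁ p = 0) (hg : gg s s₁ p = 0) :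
    p = s₁ := by
  have hD := DD_pos hne
  obtain ⟨h1, h2⟩ := line_coords hf
  rw [hg] at h1 h2
  have e1 : p.1 = s₁.1 := by
    rcases mul_eq_zero.mp (by linarith : DD s s₁ * (p.1 - s₁.1) = 0) with h | h
    · exact absurd h hD.ne'
    · linarith
  have e2 : p.2 = s₁.2 := by
    rcases mul_eq_zero.mp (by linarith : DD s s₁ * (p.2 - s₁.2) = 0) with h | h
    · exact absurd h hD.ne'
    · linarith
  exact Prod.ext e1 e2

lemma eq_s_of {s s₁ p : Pt} (hne : s ≠ s₁) (hf : ff s s₁ p = 0) (hg : gg s s₁ p = DD s s₁) :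
    p = s := by
  have hD := DD_pos hne
  obtain ⟨h1, h2⟩ := line_coords hf
  rw [hg] at h1 h2
  have e1 : p.1 = s.1 := by nlinarith
  have e2 : p.2 = s.2 := by nlinarith
  exact Prod.ext e1 e2

lemma mem_seg_of {s s₁ p : Pt} (hne : s ≠ s₁) (hf : ff s s₁ p = 0) (h0 : 0 ≤ gg s s₁ p)
    (h1 : gg s s₁ p ≤ DD s s₁) : p ∈ segment ℝ s s₁ := by
  have hD := DD_pos hne
  obtain ⟨e1, e2⟩ := line_coords hf
  refine ⟨gg s s₁ p / DD s s₁, 1 - gg s s₁ p / DD s s₁, by positivity, ?_, by ring, ?_⟩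
  · rw [sub_nonneg]; exact (div_le_one hD).mpr h1
  · apply Prod.ext <;> simp [Prod.smul_fst, Prod.smul_snd, smul_eq_mul] <;> field_simp <;> nlinarith

/-- `ff` is affine in two-point combos -/
lemma ff_comb {c₁ c₂ : ℝ} (h : c₁ + c₂ = 1) (s s₁ p q : Pt) :
    ff s s₁ (c₁ • p + c₂ • q) = c₁ * ff s s₁ p + c₂ * ff s s₁ q := by
  have h2 : c₂ = 1 - c₁ := by linarith
  subst h2
  simp [ff, Prod.smul_fst, Prod.smul_snd, Prod.fst_add, Prod.snd_add, smul_eq_mul]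
  ring

lemma gg_comb {c₁ c₂ : ℝ} (h : c₁ + c₂ = 1) (s s₁ p q : Pt) :
    gg s s₁ (c₁ • p + c₂ • q) = c₁ * gg s s₁ p + c₂ * gg s s₁ q := by
  have h2 : c₂ = 1 - c₁ := by linarith
  subst h2
  simp [gg, Prod.smul_fst, Prod.smul_snd, Prod.fst_add, Prod.snd_add, smul_eq_mul]
  ring

/-! ### Affine functionals through finite sums -/

lemma sum_fst (T : Finset Pt) (w : Pt → ℝ) :
    (∑ q ∈ T, w q • q).1 = ∑ q ∈ T, w q * q.1 := by
  rw [Prod.fst_sum]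
  exact Finset.sum_congr rfl fun q _ => by rw [Prod.smul_fst, smul_eq_mul]

lemma sum_snd (T : Finset Pt) (w : Pt → ℝ) :
    (∑ q ∈ T, w q • q).2 = ∑ q ∈ T, w q * q.2 := by
  rw [Prod.snd_sum]
  exact Finset.sum_congr rfl fun q _ => by rw [Prod.smul_snd, smul_eq_mul]

lemma ff_sum_eq (s s₁ : Pt) (T : Finset Pt) (w : Pt → ℝ) :
    ∑ q ∈ T, w q * ff s s₁ q =
      (s₁.1 - s.1) * (∑ q ∈ T, w q • q).2 - (s₁.2 - s.2) * (∑ q ∈ T, w q • q).1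
        - (∑ q ∈ T, w q) * ((s₁.1 - s.1) * s.2 - (s₁.2 - s.2) * s.1) := by
  rw [sum_fst, sum_snd, Finset.mul_sum, Finset.mul_sum, Finset.sum_mul,
    ← Finset.sum_sub_distrib, ← Finset.sum_sub_distrib]
  exact Finset.sum_congr rfl fun q _ => by unfold ff; ring

lemma gg_sum_eq (s s₁ : Pt) (T : Finset Pt) (w : Pt → ℝ) :
    ∑ q ∈ T, w q * gg s s₁ q =
      (s.1 - s₁.1) * (∑ q ∈ T, w q • q).1 + (s.2 - s₁.2) * (∑ q ∈ T, w q • q).2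
        - (∑ q ∈ T, w q) * (s₁.1 * (s.1 - s₁.1) + s₁.2 * (s.2 - s₁.2)) := by
  rw [sum_fst, sum_snd, Finset.mul_sum, Finset.mul_sum, Finset.sum_mul,
    ← Finset.sum_add_distrib, ← Finset.sum_sub_distrib]
  exact Finset.sum_congr rfl fun q _ => by unfold gg; ring

lemma ff_of_sum_one {s s₁ : Pt} {T : Finset Pt} {w : Pt → ℝ} (h1 : ∑ q ∈ T, w q = 1) :
    ff s s₁ (∑ q ∈ T, w q • q) = ∑ q ∈ T, w q * ff s s₁ q := by
  rw [ff_sum_eq, h1]; unfold ff; ring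

lemma gg_of_sum_one {s s₁ : Pt} {T : Finset Pt} {w : Pt → ℝ} (h1 : ∑ q ∈ T, w q = 1) :
    gg s s₁ (∑ q ∈ T, w q • q) = ∑ q ∈ T, w q * gg s s₁ q := by
  rw [gg_sum_eq, h1]; unfold gg; ring

lemma ff_of_centerMass {s s₁ : Pt} {T : Finset Pt} {w : Pt → ℝ}
    (hW : ∑ q ∈ T, w q ≠ 0) :
    ff s s₁ ((∑ q ∈ T, w q)⁻¹ • ∑ q ∈ T, w q • q)
      = (∑ q ∈ T, w q)⁻¹ * ∑ q ∈ T, w q * ff s s₁ q := by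
  rw [ff_sum_eq]
  unfold ff
  rw [Prod.smul_fst, Prod.smul_snd, smul_eq_mul, smul_eq_mul]
  field_simp
  ring

lemma gg_of_centerMass {s s₁ : Pt} {T : Finset Pt} {w : Pt → ℝ}
    (hW : ∑ q ∈ T, w q ≠ 0) :
    gg s s₁ ((∑ q ∈ T, w q)⁻¹ • ∑ q ∈ T, w q • q)
      = (∑ q ∈ T, w q)⁻¹ * ∑ q ∈ T, w q * gg s s₁ q := by
  rw [gg_sum_eq]
  unfold gg
  rw [Prod.smul_fst, Prod.smul_snd, smul_eq_mul, smul_eq_mul]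
  field_simp
  ring

/-! ### Collinearity criteria -/

lemma collinear_of_ff {s s₁ u : Pt} (hne : s ≠ s₁) (hf : ff s s₁ u = 0) :
    Collinear ℝ ({s, s₁, u} : Set Pt) := by
  have hD := DD_pos hne
  rw [collinear_iff_of_mem (show s₁ ∈ ({s, s₁, u} : Set Pt) by simp)]
  refine ⟨s - s₁, ?_⟩
  intro p hp
  rcases hp with rfl | rfl | rfl
  · exact ⟨1, by apply Prod.ext <;>
      simp [Prod.smul_fst, Prod.smul_snd, smul_eq_mul, Prod.fst_add, Prod.snd_add]⟩
  · exact ⟨0, by apply Prod.ext <;>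
      simp [Prod.smul_fst, Prod.smul_snd, smul_eq_mul, Prod.fst_add, Prod.snd_add]⟩
  · obtain ⟨h1, h2⟩ := line_coords hf
    refine ⟨gg s s₁ p / DD s s₁, ?_⟩
    apply Prod.ext <;>
      simp [Prod.smul_fst, Prod.smul_snd, smul_eq_mul, Prod.fst_add, Prod.snd_add,
        Prod.fst_sub, Prod.snd_sub] <;> field_simp <;> linarith

lemma collinear_of_seg {u v p : Pt} (hp : p ∈ segment ℝ u v) :
    Collinear ℝ ({u, v, p} : Set Pt) := by
  obtain ⟨a, b, _, _, hab, hz⟩ := hp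
  rw [collinear_iff_of_mem (show u ∈ ({u, v, p} : Set Pt) by simp)]
  refine ⟨v - u, ?_⟩
  intro q hq
  rcases hq with rfl | rfl | rfl
  · exact ⟨0, by apply Prod.ext <;>
      simp [Prod.smul_fst, Prod.smul_snd, smul_eq_mul, Prod.fst_add, Prod.snd_add]⟩
  · exact ⟨1, by apply Prod.ext <;>
      simp [Prod.smul_fst, Prod.smul_snd, smul_eq_mul, Prod.fst_add, Prod.snd_add]⟩
  · refine ⟨b, ?_⟩
    have h1 : a = 1 - b := by linarith
    subst h1
    rw [← hz]
    apply Prod.ext <;>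
      simp [Prod.smul_fst, Prod.smul_snd, smul_eq_mul, Prod.fst_add, Prod.snd_add,
        Prod.fst_sub, Prod.snd_sub] <;> ring

/-! ### List and edge lemmas -/

lemma edgesOf_cons₂ (a b : Pt) (l : List Pt) :
    edgesOf (a :: b :: l) = (a, b) :: edgesOf (b :: l) := by
  simp [edgesOf]

lemma edgesOf_cons_subset (a : Pt) (l : List Pt) : edgesOf l ⊆ edgesOf (a :: l) := by
  cases l with
  | nil => simp [edgesOf]
  | cons b t => rw [edgesOf_cons₂]; exact List.subset_cons_self _ _

lemma edge_mem {l : List Pt} {u v : Pt} (h : (u, v) ∈ edgesOf l) : u ∈ l ∧ v ∈ l :=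
  ⟨(List.of_mem_zip h).1, List.mem_of_mem_tail (List.of_mem_zip h).2⟩

lemma edge_ne {l : List Pt} (hnd : l.Nodup) {u v : Pt} (h : (u, v) ∈ edgesOf l) : u ≠ v := by
  induction l with
  | nil => simp [edgesOf] at h
  | cons a t ih =>
    cases t with
    | nil => simp [edgesOf] at h
    | cons b r =>
      rw [edgesOf_cons₂, List.mem_cons] at h
      rcases h with h | h
      · obtain ⟨rfl, rfl⟩ := Prod.mk.injEq .. ▸ h
        simp only [Prod.mk.injEq] at h
        obtain ⟨rfl, rfl⟩ := h
        intro hne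
        exact (List.nodup_cons.mp hnd).1 (hne ▸ List.mem_cons_self)
      · exact ih (List.nodup_cons.mp hnd).2 h

lemma signChange (φ : Pt → ℝ) : ∀ l : List Pt, (∀ p ∈ l, φ p ≠ 0) →
    (∃ a ∈ l, 0 < φ a) → (∃ b ∈ l, φ b < 0) →
    ∃ u v, (u, v) ∈ edgesOf l ∧ φ u * φ v < 0 := by
  intro l
  induction l with
  | nil => intro _ hpos _; obtain ⟨a, ha, _⟩ := hpos; simp at ha
  | cons c rest ih =>
    intro hall hpos hneg
    rcases rest with _ | ⟨d, r⟩
    · obtain ⟨a, ha, hag⟩ := hpos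
      obtain ⟨b, hb, hbl⟩ := hneg
      simp at ha hb
      subst ha; subst hb; linarith
    · by_cases hcd : φ c * φ d < 0
      · exact ⟨c, d, by rw [edgesOf_cons₂]; exact List.mem_cons_self, hcd⟩
      · push_neg at hcd
        have hc0 : φ c ≠ 0 := hall c (List.mem_cons_self)
        have hd0 : φ d ≠ 0 := hall d (by simp)
        have hcd' : 0 < φ c * φ d := lt_of_le_of_ne hcd (by
          intro h0
          rcases mul_eq_zero.mp h0.symm with h | h
          · exact hc0 h
          · exact hd0 h)
        have hall' : ∀ p ∈ d :: r, φ p ≠ 0 := fun p hp => hall p (List.mem_cons_of_mem _ hp)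
        have hpos' : ∃ a ∈ d :: r, 0 < φ a := by
          obtain ⟨a, ha, hag⟩ := hpos
          rcases List.mem_cons.mp ha with rfl | ha'
          · exact ⟨d, List.mem_cons_self, by nlinarith⟩
          · exact ⟨a, ha', hag⟩
        have hneg' : ∃ b ∈ d :: r, φ b < 0 := by
          obtain ⟨b, hb, hbl⟩ := hneg
          rcases List.mem_cons.mp hb with rfl | hb'
          · exact ⟨d, List.mem_cons_self, by nlinarith⟩
          · exact ⟨b, hb', hbl⟩
        obtain ⟨u, v, huv, hprod⟩ := ih hall' hpos' hneg'
        exact ⟨u, v, edgesOf_cons_subset _ _ huv, hprod⟩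

lemma exists_seg_zero (s s₁ u v : Pt) (h : ff s s₁ u * ff s s₁ v < 0) :
    ∃ z ∈ segment ℝ u v, ff s s₁ z = 0 := by
  rcases lt_or_ge (ff s s₁ v) 0 with hv | hv
  · have hu : 0 < ff s s₁ u := by nlinarith
    set t := ff s s₁ u / (ff s s₁ u - ff s s₁ v) with ht
    have hden : 0 < ff s s₁ u - ff s s₁ v := by linarith
    have ht0 : 0 ≤ t := by positivity
    have ht1 : t ≤ 1 := by rw[ht]; rw [div_le_one hden]; linarith
    refine ⟨(1 - t) • u + t • v, ⟨1 - t, t, by linarith, ht0, by ring, rfl⟩, ?_⟩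
    rw [ff_comb (by ring : (1 - t) + t = 1)]
    rw [ht]; field_simp; ring
  · have hv' : 0 < ff s s₁ v := lt_of_le_of_ne hv (by
      intro h0; rw [← h0] at h; simp at h)
    have hu : ff s s₁ u < 0 := by nlinarith
    set t := ff s s₁ v / (ff s s₁ v - ff s s₁ u) with ht
    have hden : 0 < ff s s₁ v - ff s s₁ u := by linarith
    have ht0 : 0 ≤ t := by positivity
    have ht1 : t ≤ 1 := by rw [ht, div_le_one hden]; linarith
    refine ⟨t • u + (1 - t) • v, ⟨t, 1 - t, ht0, by linarith, by ring, rfl⟩, ?_⟩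
    rw [ff_comb (by ring : t + (1 - t) = 1)]
    rw [ht]; field_simp; ring

/-! ### The key geometric lemma -/

lemma toFinset_tail {S : Finset Pt} {s : Pt} {m : List Pt}
    (hnd : (s :: m).Nodup) (htf : (s :: m).toFinset = S) :
    m.toFinset = S.erase s := by
  have hsm : s ∉ m := (List.nodup_cons.mp hnd).1
  rw [← htf, List.toFinset_cons, Finset.erase_insert (by simpa using hsm)]

lemma segClear (S : Finset Pt) (hS : GenPos S) (s s₁ : Pt) (l : List Pt)
    (hpl : PlanePath S (s :: s₁ :: l)) (hsuf : SuffixIndep (s :: s₁ :: l)) :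
    ∀ x ∈ segment ℝ s s₁, x ∈ convexHull ℝ ((S.erase s : Finset Pt) : Set Pt) → x = s₁ := by
  classical
  obtain ⟨hnd, htf, hcr⟩ := hpl
  have hsS : s ∈ S := by rw [← htf]; simp
  have hs₁S : s₁ ∈ S := by rw [← htf]; simp
  have hne : s ≠ s₁ := by
    intro h; exact (List.nodup_cons.mp hnd).1 (h ▸ List.mem_cons_self)
  have hD := DD_pos hne
  have htail : (s₁ :: l).toFinset = S.erase s := toFinset_tail hnd htf
  have hnd' : (s₁ :: l).Nodup := (List.nodup_cons.mp hnd).2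
  have hll : l.toFinset = (S.erase s).erase s₁ := toFinset_tail hnd' htail
  -- s is not in the hull of the rest
  have hsH : s ∉ convexHull ℝ ((S.erase s : Finset Pt) : Set Pt) := by
    have h1 := hsuf 1 (by simp) s (by simp)
    simpa [htail] using h1
  intro x hxseg hxH
  by_contra hxne
  have hxH' := hxH
  obtain ⟨a, b, ha, hb, hab, hx⟩ := hxseg
  have hfx : ff s s₁ x = 0 := by
    rw [← hx, ff_comb hab, ff_s, ff_s₁]; ring
  have hgx : gg s s₁ x = a * DD s s₁ := by
    rw [← hx, gg_comb hab, gg_s, gg_s₁]; ring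
  have hane : a ≠ 0 := by
    intro h0
    apply hxne
    rw [← hx, h0]
    have hb1 : b = 1 := by linarith
    simp [hb1]
  have ha1 : a ≠ 1 := by
    intro h1
    apply hsH
    have hb0 : b = 0 := by linarith
    have hxs : x = s := by rw [← hx, h1, hb0]; simp
    rwa [hxs] at hxH'
  have hapos : 0 < a := lt_of_le_of_ne ha (Ne.symm hane)
  have halt : a < 1 := lt_of_le_of_ne (by linarith) ha1
  -- extract convex weights
  rw [Finset.convexHull_eq] at hxH
  obtain ⟨w, hw0, hw1, hwx⟩ := hxH
  rw [Finset.centerMass_eq_of_sum_1 _ _ hw1] at hwx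
  simp only [id] at hwx
  set T : Finset Pt := (S.erase s).erase s₁ with hT
  have hs₁mem : s₁ ∈ S.erase s := Finset.mem_erase.mpr ⟨Ne.symm hne, hs₁S⟩
  have hins : insert s₁ T = S.erase s := Finset.insert_erase hs₁mem
  have hs₁T : s₁ ∉ T := Finset.notMem_erase _ _
  have hsplit : ∀ φ : Pt → ℝ, ∑ q ∈ S.erase s, φ q = φ s₁ + ∑ q ∈ T, φ q := by
    intro φ; rw [← hins, Finset.sum_insert hs₁T]
  have hTmem : ∀ u ∈ T, u ∈ S ∧ u ≠ s ∧ u ≠ s₁ := by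
    intro u hu
    rw [hT, Finset.mem_erase, Finset.mem_erase] at hu
    exact ⟨hu.2.2, hu.2.1, hu.1⟩
  have hffne : ∀ u ∈ T, ff s s₁ u ≠ 0 := by
    intro u hu h0
    obtain ⟨huS, hus, hus₁⟩ := hTmem u hu
    exact hS s hsS s₁ hs₁S u huS hne (fun h => hus₁ h.symm) (fun h => hus h.symm)
      (collinear_of_ff hne h0)
  -- sums of the functionals
  have hsum_f : ∑ q ∈ T, w q * ff s s₁ q = 0 := by
    have hthis := ff_of_sum_one (s := s) (s₁ := s₁) hw1
    rw [hwx, hfx] at hthis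
    have h2 := hsplit (fun q => w q * ff s s₁ q)
    rw [h2, ff_s₁] at hthis
    linarith
  have hsum_g : ∑ q ∈ T, w q * gg s s₁ q = a * DD s s₁ := by
    have hthis := gg_of_sum_one (s := s) (s₁ := s₁) hw1
    rw [hwx, hgx] at hthis
    have h2 := hsplit (fun q => w q * gg s s₁ q)
    rw [h2, gg_s₁] at hthis
    linarith
  have hwT0 : ∀ q ∈ T, 0 ≤ w q := fun q hq =>
    hw0 q (by rw [← hins]; exact Finset.mem_insert_of_mem hq)
  -- total weight on T is positive
  have hW : ∑ q ∈ T, w q ≠ 0 := by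
    intro h0
    have hz : ∀ q ∈ T, w q = 0 := (Finset.sum_eq_zero_iff_of_nonneg hwT0).mp h0
    have hws₁ : w s₁ = 1 := by
      have := hsplit w
      rw [hw1, h0] at this
      linarith
    apply hxne
    rw [← hwx, ← hins, Finset.sum_insert hs₁T]
    rw [Finset.sum_eq_zero (fun q hq => by rw [hz q hq, zero_smul]), hws₁, one_smul, add_zero]
  have hWpos : 0 < ∑ q ∈ T, w q :=
    lt_of_le_of_ne (Finset.sum_nonneg hwT0) (Ne.symm hW)
  -- both signs occur on T
  have hbothsign : ∀ c : ℝ, (∀ u ∈ T, c * ff s s₁ u < 0) → False := by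
    intro c hcneg
    have hterm : ∀ q ∈ T, 0 ≤ -(w q * (c * ff s s₁ q)) := by
      intro q hq
      have := mul_nonneg (hwT0 q hq) (le_of_lt (neg_pos.mpr (hcneg q hq)))
      nlinarith
    have hsum0 : ∑ q ∈ T, -(w q * (c * ff s s₁ q)) = 0 := by
      have : ∑ q ∈ T, w q * (c * ff s s₁ q) = c * ∑ q ∈ T, w q * ff s s₁ q := by
        rw [Finset.mul_sum]; exact Finset.sum_congr rfl fun q _ => by ring
      rw [Finset.sum_neg_distrib, this, hsum_f, mul_zero, neg_zero]
    have hallz := (Finset.sum_eq_zero_iff_of_nonneg hterm).mp hsum0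
    have hwz : ∀ q ∈ T, w q = 0 := by
      intro q hq
      have h := hallz q hq
      have h' : w q * (c * ff s s₁ q) = 0 := by linarith
      rcases mul_eq_zero.mp h' with h | h
      · exact h
      · exact absurd h (ne_of_lt (hcneg q hq))
    exact hW (Finset.sum_eq_zero hwz)
  have hpos : ∃ u ∈ T, 0 < ff s s₁ u := by
    by_contra hcon
    push_neg at hcon
    exact hbothsign 1 (fun u hu => by
      have h1 := hcon u hu
      have h2 := hffne u hu
      have : ff s s₁ u < 0 := lt_of_le_of_ne h1 h2
      linarith)
  have hneg : ∃ v ∈ T, ff s s₁ v < 0 := by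
    by_contra hcon
    push_neg at hcon
    exact hbothsign (-1) (fun u hu => by
      have h1 := hcon u hu
      have h2 := hffne u hu
      have : 0 < ff s s₁ u := lt_of_le_of_ne h1 (Ne.symm h2)
      linarith)
  -- transfer to the list l
  have hmeml : ∀ q : Pt, q ∈ T ↔ q ∈ l := by
    intro q; rw [← hll, List.mem_toFinset]
  obtain ⟨u₀, hu₀T, hu₀⟩ := hpos
  obtain ⟨v₀, hv₀T, hv₀⟩ := hneg
  obtain ⟨u, v, huv, hprod⟩ := signChange (ff s s₁) l
    (fun p hp => hffne p ((hmeml p).mpr hp))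
    ⟨u₀, (hmeml u₀).mp hu₀T, hu₀⟩ ⟨v₀, (hmeml v₀).mp hv₀T, hv₀⟩
  have huT : u ∈ T := (hmeml u).mpr (edge_mem huv).1
  have hvT : v ∈ T := (hmeml v).mpr (edge_mem huv).2
  have hfu : ff s s₁ u ≠ 0 := hffne u huT
  have hfv : ff s s₁ v ≠ 0 := hffne v hvT
  -- the zero point z on the edge (u,v)
  obtain ⟨z, hzseg, hfz⟩ := exists_seg_zero s s₁ u v hprod
  have hzT : z ∈ convexHull ℝ ((T : Finset Pt) : Set Pt) :=
    (convex_convexHull ℝ _).segment_subset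
      (subset_convexHull ℝ _ (by exact_mod_cast huT))
      (subset_convexHull ℝ _ (by exact_mod_cast hvT)) hzseg
  have hTsub : ((T : Finset Pt) : Set Pt) ⊆ ((S.erase s : Finset Pt) : Set Pt) := by
    intro q hq
    simp only [Finset.coe_erase] at hq ⊢
    exact_mod_cast Finset.erase_subset _ _ (by exact_mod_cast hq)
  have hzH : z ∈ convexHull ℝ ((S.erase s : Finset Pt) : Set Pt) :=
    convexHull_mono hTsub hzT
  -- trichotomy on gg z
  rcases lt_or_ge (gg s s₁ z) 0 with hgz | hgz
  · -- case (c): contradiction with s₁ ∉ conv(T)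
    set W := ∑ q ∈ T, w q with hWdef
    set y : Pt := W⁻¹ • ∑ q ∈ T, w q • q with hy
    have hyT : y ∈ convexHull ℝ ((T : Finset Pt) : Set Pt) := by
      have hcm := Finset.centerMass_mem_convexHull T (w := w) hwT0 hWpos (z := id)
        (fun q hq => (by exact_mod_cast hq : id q ∈ ((T : Finset Pt) : Set Pt)))
      have : T.centerMass w id = y := by
        unfold Finset.centerMass
        rw [hy]
        simp only [id_eq, hWdef]
      rwa [this] at hcm
    have hfy : ff s s₁ y = 0 := by
      rw [hy, ff_of_centerMass hW, hsum_f, mul_zero]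
    have hgy : gg s s₁ y = W⁻¹ * (a * DD s s₁) := by
      rw [hy, gg_of_centerMass hW, hsum_g]
    have hgypos : 0 < gg s s₁ y := by
      rw [hgy]
      have hWinv : 0 < W⁻¹ := inv_pos.mpr hWpos
      exact mul_pos hWinv (mul_pos hapos hD)
    set ν := gg s s₁ y / (gg s s₁ y - gg s s₁ z) with hν
    have hden : 0 < gg s s₁ y - gg s s₁ z := by linarith
    have hν0 : 0 ≤ ν := by positivity
    have hν1 : ν ≤ 1 := by rw [hν, div_le_one hden]; linarith
    set c : Pt := (1 - ν) • y + ν • z with hc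
    have hfc : ff s s₁ c = 0 := by
      rw [hc, ff_comb (by ring : (1 - ν) + ν = 1), hfy, hfz]; ring
    have hgc : gg s s₁ c = 0 := by
      rw [hc, gg_comb (by ring : (1 - ν) + ν = 1), hν]
      field_simp
      ring
    have hcs₁ : c = s₁ := eq_s₁_of hne hfc hgc
    have hcT : c ∈ convexHull ℝ ((T : Finset Pt) : Set Pt) :=
      (convex_convexHull ℝ _) hyT hzT (by linarith) hν0 (by ring)
    have hul : u ∈ l := (hmeml u).mp huT
    have hlne : 0 < l.length := List.length_pos_iff.mpr (by rintro rfl; simp at hul)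
    have h2 := hsuf 2 (by simp; omega) s₁ (by simp)
    apply h2
    rw [show (s :: s₁ :: l).drop 2 = l from rfl, hll]
    rwa [hcs₁] at hcT
  rcases le_or_gt (gg s s₁ z) (DD s s₁) with hgzD | hgzD
  · -- case (a): planarity contradiction
    have hzseg' : z ∈ segment ℝ s s₁ := mem_seg_of hne hfz hgz hgzD
    have he1 : (s, s₁) ∈ edgesOf (s :: s₁ :: l) := by
      rw [edgesOf_cons₂]; exact List.mem_cons_self
    have he2 : (u, v) ∈ edgesOf (s :: s₁ :: l) :=
      edgesOf_cons_subset _ _ (edgesOf_cons_subset _ _ huv)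
    have hne2 : ((s, s₁) : Pt × Pt) ≠ (u, v) := by
      intro h
      rw [Prod.mk.injEq] at h
      exact (hTmem u huT).2.1 h.1.symm
    have hsub := hcr (s, s₁) he1 (u, v) he2 hne2
    have hzin := hsub ⟨hzseg', hzseg⟩
    obtain ⟨-, hz2⟩ := hzin
    rcases hz2 with rfl | rfl
    · exact hfu hfz
    · exact hfv hfz
  · -- case (b): s in the hull, contradiction
    set ν := (DD s s₁ - gg s s₁ x) / (gg s s₁ z - gg s s₁ x) with hν
    have hgxlt : gg s s₁ x < DD s s₁ := by rw [hgx]; nlinarith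
    have hgx0 : 0 < gg s s₁ x := by rw [hgx]; positivity
    have hden : 0 < gg s s₁ z - gg s s₁ x := by linarith
    have hν0 : 0 ≤ ν := by
      rw [hν]
      apply div_nonneg (by linarith) (by linarith)
    have hν1 : ν ≤ 1 := by rw [hν, div_le_one hden]; linarith
    set c : Pt := (1 - ν) • x + ν • z with hc
    have hfc : ff s s₁ c = 0 := by
      rw [hc, ff_comb (by ring : (1 - ν) + ν = 1), hfx, hfz]; ring
    have hgc : gg s s₁ c = DD s s₁ := by
      rw [hc, gg_comb (by ring : (1 - ν) + ν = 1), hν]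
      field_simp
      ring
    have hcs : c = s := eq_s_of hne hfc hgc
    have hcH : c ∈ convexHull ℝ ((S.erase s : Finset Pt) : Set Pt) :=
      (convex_convexHull ℝ _) hxH' hzH (by linarith) hν0 (by ring)
    rw [hcs] at hcH
    exact hsH hcH

/-! ### Lifting lemmas -/

lemma head_decomp {m : List Pt} {s₁ : Pt} (h : m.head? = some s₁) :
    ∃ t, m = s₁ :: t := by
  cases m with
  | nil => simp at h
  | cons a t =>
    have ha : a = s₁ := by simpa using h
    exact ⟨t, by rw [ha]⟩

lemma lift_path (S : Finset Pt) (hS : GenPos S) (s s₁ : Pt) (hsS : s ∈ S)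
    (hsH : s ∉ convexHull ℝ ((S.erase s : Finset Pt) : Set Pt))
    (hseg : ∀ x ∈ segment ℝ s s₁,
      x ∈ convexHull ℝ ((S.erase s : Finset Pt) : Set Pt) → x = s₁)
    (m : List Pt) (hm : PathIn (S.erase s) s₁ m ∧ SuffixIndep m) :
    PathIn S s (s :: m) ∧ SuffixIndep (s :: m) := by
  obtain ⟨⟨⟨hnd, htf, hcr⟩, hhead⟩, hsufm⟩ := hm
  obtain ⟨t, rfl⟩ := head_decomp hhead
  have hmemS : ∀ p ∈ s₁ :: t, p ∈ S.erase s := fun p hp =>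
    htf ▸ List.mem_toFinset.mpr hp
  have hsm : s ∉ s₁ :: t := fun h => (Finset.notMem_erase s S) (hmemS s h)
  have hs₁S : s₁ ∈ S := Finset.mem_of_mem_erase (hmemS s₁ (List.mem_cons_self))
  -- the key crossing property of the new edge
  have key : ∀ u v : Pt, (u, v) ∈ edgesOf (s₁ :: t) →
      segment ℝ s s₁ ∩ segment ℝ u v ⊆ ({s, s₁} ∩ {u, v} : Set Pt) := by
    intro u v huv x hx
    obtain ⟨hx1, hx2⟩ := hx
    have hu : u ∈ S.erase s := hmemS u (edge_mem huv).1
    have hv : v ∈ S.erase s := hmemS v (edge_mem huv).2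
    have hxH : x ∈ convexHull ℝ ((S.erase s : Finset Pt) : Set Pt) :=
      (convex_convexHull ℝ _).segment_subset
        (subset_convexHull ℝ _ (by exact_mod_cast hu))
        (subset_convexHull ℝ _ (by exact_mod_cast hv)) hx2
    have hxs₁ : x = s₁ := hseg x hx1 hxH
    subst hxs₁
    by_cases hcase : x = u ∨ x = v
    · refine ⟨Or.inr rfl, ?_⟩
      rcases hcase with rfl | rfl <;> simp
    · exfalso
      push_neg at hcase
      have huvne : u ≠ v := edge_ne hnd huv
      have hcol : Collinear ℝ ({u, v, x} : Set Pt) := collinear_of_seg hx2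
      exact hS u (Finset.mem_of_mem_erase hu) v (Finset.mem_of_mem_erase hv) x hs₁S
        huvne (Ne.symm hcase.2) (Ne.symm hcase.1) hcol
  constructor
  · constructor
    · refine ⟨List.nodup_cons.mpr ⟨hsm, hnd⟩, ?_, ?_⟩
      · rw [List.toFinset_cons, htf, Finset.insert_erase hsS]
      · intro e he f hf hnef
        rw [edgesOf_cons₂, List.mem_cons] at he hf
        rcases he with he | he <;> rcases hf with hf | hf
        · exact absurd (he.trans hf.symm) hnef
        · subst he
          obtain ⟨u, v⟩ := f
          exact key u v hf
        · subst hf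
          obtain ⟨u, v⟩ := e
          intro p hp
          have := key u v he ⟨hp.2, hp.1⟩
          exact ⟨this.2, this.1⟩
        · exact hcr e he f hf hnef
    · rfl
  · intro i hi p hp
    cases i with
    | zero => simp at hp
    | succ j =>
      rw [List.take_succ_cons, List.mem_cons] at hp
      rw [List.drop_succ_cons]
      rcases hp with rfl | hp2
      · intro hcon
        apply hsH
        refine convexHull_mono ?_ hcon
        intro q hq
        simp only [Finset.coe_erase] at *
        have hq' : q ∈ (s₁ :: t) := List.mem_of_mem_drop (by
          simpa using (by exact_mod_cast hq : q ∈ ((s₁ :: t).drop j).toFinset))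
        exact_mod_cast hmemS q hq'
      · exact hsufm j (by simpa using Nat.lt_of_succ_lt_succ hi) p hp2

lemma tail_path (S : Finset Pt) (s s₁ : Pt) (t : List Pt)
    (hp : PathIn S s (s :: s₁ :: t)) (hsuf : SuffixIndep (s :: s₁ :: t)) :
    PathIn (S.erase s) s₁ (s₁ :: t) ∧ SuffixIndep (s₁ :: t) := by
  obtain ⟨⟨hnd, htf, hcr⟩, -⟩ := hp
  refine ⟨⟨⟨(List.nodup_cons.mp hnd).2, toFinset_tail hnd htf, ?_⟩, rfl⟩, ?_⟩
  · intro e he f hf hnef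
    exact hcr e (edgesOf_cons_subset _ _ he) f (edgesOf_cons_subset _ _ hf) hnef
  · intro i hi p hp'
    have h := hsuf (i + 1) (by simpa using Nat.succ_lt_succ hi) p
      (by rw [List.take_succ_cons]; exact List.mem_cons_of_mem _ hp')
    rwa [List.drop_succ_cons] at h

lemma edgeSet_cons (s s₁ : Pt) (t : List Pt) :
    edgeSet (s :: s₁ :: t) = insert (Sym2.mk s s₁) (edgeSet (s₁ :: t)) := by
  ext e
  simp only [edgeSet, Set.mem_setOf_eq, Set.mem_insert_iff, edgesOf_cons₂, List.mem_cons]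
  constructor
  · rintro ⟨p, hp | hp, rfl⟩
    · left; rw [hp]
    · right; exact ⟨p, hp, rfl⟩
  · rintro (rfl | ⟨p, hp, rfl⟩)
    · exact ⟨(s, s₁), Or.inl rfl, rfl⟩
    · exact ⟨p, Or.inr hp, rfl⟩

lemma vertex_of_edgeSet {l : List Pt} {a b : Pt} (h : Sym2.mk a b ∈ edgeSet l) :
    a ∈ l := by
  obtain ⟨p, hp, he⟩ := h
  obtain ⟨c, d⟩ := p
  rcases Sym2.eq_iff.mp he with ⟨rfl, rfl⟩ | ⟨rfl, rfl⟩
  · exact (edge_mem hp).1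
  · exact (edge_mem hp).2

lemma flip_lift (s s₁ : Pt) (x y : List Pt) (hx : x.head? = some s₁)
    (hy : y.head? = some s₁) (hsx : s ∉ x) (hsy : s ∉ y) (hflip : Flip x y) :
    Flip (s :: x) (s :: y) := by
  obtain ⟨e, f, he, hf, hset⟩ := hflip
  obtain ⟨tx, rfl⟩ := head_decomp hx
  obtain ⟨ty, rfl⟩ := head_decomp hy
  have hes : e ≠ Sym2.mk s s₁ := by
    rintro rfl
    exact hsx (vertex_of_edgeSet he)
  have hfs : f ≠ Sym2.mk s s₁ := by
    rintro rfl
    have hfy : Sym2.mk s s₁ ∈ edgeSet (s₁ :: ty) := by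
      rw [hset]; exact Set.mem_insert _ _
    exact hsy (vertex_of_edgeSet hfy)
  refine ⟨e, f, ?_, ?_, ?_⟩
  · rw [edgeSet_cons]; exact Set.mem_insert_of_mem _ he
  · rw [edgeSet_cons]
    rintro (h | h)
    · exact hfs h
    · exact hf h
  · rw [edgeSet_cons, edgeSet_cons, hset]
    have hne : Sym2.mk s s₁ ≠ e := Ne.symm hes
    ext w
    simp only [Set.mem_insert_iff, Set.mem_diff, Set.mem_singleton_iff]
    constructor
    · rintro (rfl | rfl | ⟨hw, hwe⟩)
      · exact Or.inr ⟨Or.inl rfl, hne⟩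
      · exact Or.inl rfl
      · exact Or.inr ⟨Or.inr hw, hwe⟩
    · rintro (rfl | ⟨rfl | hw, hwe⟩)
      · exact Or.inr (Or.inl rfl)
      · exact Or.inl rfl
      · exact Or.inr (Or.inr ⟨hw, hwe⟩)

end

end Stmt19Aux

/-- if two suffix-independent plane spanning paths from `s` share
their first edge `s s₁`, and the flip graph of suffix-independent paths on
`S \ {s}` starting at `s₁` is connected, then the two paths are connected in the
flip graph of suffix-independent paths on `S` starting at `s` by a flip sequence
never modifying the edge `s s₁`. -/
theorem stmt19 (S : Finset Pt) (hS : GenPos S) (s : Pt) (hs : outerPt S s)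
    (s₁ : Pt) (hs₁ : s₁ ∈ S) (hss₁ : s₁ ≠ s)
    (P Q : List Pt)
    (hP : PathIn S s P ∧ SuffixIndep P) (hQ : PathIn S s Q ∧ SuffixIndep Q)
    (hP1 : P.tail.head? = some s₁) (hQ1 : Q.tail.head? = some s₁)
    -- connectivity of the flip graph of suffix-independent paths on `S \ {s}`
    -- starting at `s₁`
    (hconn : ∀ m m' : List Pt,
      (PathIn (S.erase s) s₁ m ∧ SuffixIndep m) →
      (PathIn (S.erase s) s₁ m' ∧ SuffixIndep m') →
      Relation.ReflTransGen
        (fun x y : List Pt =>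
          (PathIn (S.erase s) s₁ x ∧ SuffixIndep x) ∧
          (PathIn (S.erase s) s₁ y ∧ SuffixIndep y) ∧ Flip x y) m m') :
    Relation.ReflTransGen
      (fun x y : List Pt =>
        (PathIn S s x ∧ SuffixIndep x) ∧ (PathIn S s y ∧ SuffixIndep y) ∧
        Flip x y ∧ Sym2.mk s s₁ ∈ edgeSet x ∧ Sym2.mk s s₁ ∈ edgeSet y)
      P Q := by
  classical
  obtain ⟨hPp, hPs⟩ := hP
  obtain ⟨hQp, hQs⟩ := hQ
  obtain ⟨tP, hPd⟩ := Stmt19Aux.head_decomp hPp.2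
  rw [hPd] at hP1
  obtain ⟨lP, hPd2⟩ := Stmt19Aux.head_decomp (by simpa using hP1)
  rw [hPd2] at hPd
  subst hPd
  obtain ⟨tQ, hQd⟩ := Stmt19Aux.head_decomp hQp.2
  rw [hQd] at hQ1
  obtain ⟨lQ, hQd2⟩ := Stmt19Aux.head_decomp (by simpa using hQ1)
  rw [hQd2] at hQd
  subst hQd
  have hsS : s ∈ S := hs.1
  obtain ⟨hndP, htfP, hcrP⟩ := hPp.1
  have htailP : (s₁ :: lP).toFinset = S.erase s := Stmt19Aux.toFinset_tail hndP htfP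
  have hsH : s ∉ convexHull ℝ ((S.erase s : Finset Pt) : Set Pt) := by
    have h1 := hPs 1 (by simp) s (by simp)
    simpa [htailP] using h1
  have hseg := Stmt19Aux.segClear S hS s s₁ lP ⟨hndP, htfP, hcrP⟩ hPs
  have hmP := Stmt19Aux.tail_path S s s₁ lP hPp hPs
  have hmQ := Stmt19Aux.tail_path S s s₁ lQ hQp hQs
  have hchain := hconn _ _ hmP hmQ
  have step : ∀ x y : List Pt,
      ((PathIn (S.erase s) s₁ x ∧ SuffixIndep x) ∧
        (PathIn (S.erase s) s₁ y ∧ SuffixIndep y) ∧ Flip x y) →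
      ((PathIn S s (s :: x) ∧ SuffixIndep (s :: x)) ∧
        (PathIn S s (s :: y) ∧ SuffixIndep (s :: y)) ∧
        Flip (s :: x) (s :: y) ∧ Sym2.mk s s₁ ∈ edgeSet (s :: x) ∧
        Sym2.mk s s₁ ∈ edgeSet (s :: y)) := by
    rintro x y ⟨hx, hy, hflip⟩
    have Hx := Stmt19Aux.lift_path S hS s s₁ hsS hsH hseg x hx
    have Hy := Stmt19Aux.lift_path S hS s s₁ hsS hsH hseg y hy
    have hsx : s ∉ x := fun h =>
      Finset.notMem_erase s S (hx.1.1.2.1 ▸ List.mem_toFinset.mpr h)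
    have hsy : s ∉ y := fun h =>
      Finset.notMem_erase s S (hy.1.1.2.1 ▸ List.mem_toFinset.mpr h)
    refine ⟨Hx, Hy, Stmt19Aux.flip_lift s s₁ x y hx.1.2 hy.1.2 hsx hsy hflip, ?_, ?_⟩
    · obtain ⟨tx, rfl⟩ := Stmt19Aux.head_decomp hx.1.2
      rw [Stmt19Aux.edgeSet_cons]
      exact Set.mem_insert _ _
    · obtain ⟨ty, rfl⟩ := Stmt19Aux.head_decomp hy.1.2
      rw [Stmt19Aux.edgeSet_cons]
      exact Set.mem_insert _ _
  exact Relation.ReflTransGen.lift (fun u => s :: u) step _ _ hchain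
end
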